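/- arXiv:2307.11564 — 13 statements merged into one kernel-verified Lean document; each statement's English description precedes it below -/
import Mathlib

section
/- Let G be a group acting on a set Ω such that every G-orbit in Ω is infinite. Then for all finite subsets Γ and Δ of Ω there exists g ∈ G such that (g • Γ) ∩ Δ = ∅. -/
open Pointwise

theorem orbits_infinite_separation {G Ω : Type*} [Group G] [MulAction G Ω]
    (h : ∀ ω : Ω, (MulAction.orbit G ω).Infinite)
    (Γ Δ : Set Ω) (hΓ : Γ.Finite) (hΔ : Δ.Finite) :
    ∃ g : G, (g • Γ) ∩ Δ = ∅ := by
  classical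
  by_contra hcon
  push_neg at hcon
  have hΓ' := hΓ.to_subtype
  have hΔ' := hΔ.to_subtype
  have : Fintype (↥Γ × ↥Δ) := Fintype.ofFinite _
  set ι := ↥Γ × ↥Δ
  set H : ι → Subgroup G := fun i => MulAction.stabilizer G (i.1 : Ω) with hH
  set g : ι → G := fun i =>
    if hi : ∃ x : G, x • (i.1 : Ω) = (i.2 : Ω) then hi.choose else 1 with hg
  have hcovers : ⋃ i ∈ (Finset.univ : Finset ι), (g i) • (H i : Set G) = Set.univ := by
    rw [Set.eq_univ_iff_forall]
    intro x
    have hx := hcon x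
    obtain ⟨δ, ⟨γ, hγ, hγδ0⟩, hδ⟩ := hx
    have hγδ : x • γ = δ := hγδ0
    refine Set.mem_iUnion₂.mpr ⟨(⟨γ, hγ⟩, ⟨δ, hδ⟩), Finset.mem_univ _, ?_⟩
    have hex : ∃ y : G, y • γ = δ := ⟨x, hγδ⟩
    have hgval : g (⟨γ, hγ⟩, ⟨δ, hδ⟩) • γ = δ := by
      simp only [hg, dif_pos hex]
      exact hex.choose_spec
    rw [mem_leftCoset_iff]
    simp only [hH, SetLike.mem_coe, MulAction.mem_stabilizer_iff]
    rw [mul_smul, hγδ, inv_smul_eq_iff]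
    exact hgval.symm
  obtain ⟨i, _, hfi⟩ := Subgroup.exists_finiteIndex_of_leftCoset_cover hcovers
  have : Finite (G ⧸ H i) := @Subgroup.finite_quotient_of_finiteIndex _ _ (H i) hfi
  have : Finite (MulAction.orbit G (i.1 : Ω)) :=
    Finite.of_equiv _ (MulAction.orbitEquivQuotientStabilizer G (i.1 : Ω)).symm
  exact (h (i.1 : Ω)) (Set.toFinite _)
end

section
/- Let G be a group acting on a set Ω and let Γ, Δ be finite subsets of Ω. If every G-orbit in Ω has cardinality strictly greater than |Γ|·|Δ| (the product of the numbers of elements of Γ and of Δ), then there exists g ∈ G such that (g • Γ) ∩ Δ = ∅. -/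
open Pointwise

theorem orbits_large_separation {G : Type*} {Ω : Type*} [Group G] [MulAction G Ω]
    (Γ Δ : Set Ω) (hΓ : Γ.Finite) (hΔ : Δ.Finite)
    (h : ∀ ω : Ω, Cardinal.mk Γ * Cardinal.mk Δ < Cardinal.mk (MulAction.orbit G ω)) :
    ∃ g : G, (g • Γ) ∩ Δ = ∅ := by
  classical
  by_contra hc
  push_neg at hc
  have hc' : ∀ g : G, ∃ γ ∈ Γ, ∃ δ ∈ Δ, g • γ = δ := by
    intro g
    obtain ⟨x, ⟨γ, hγ, rfl⟩, hxΔ⟩ := hc g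
    exact ⟨γ, hγ, _, hxΔ, rfl⟩
  haveI : Finite Γ := hΓ.to_subtype
  haveI : Finite Δ := hΔ.to_subtype
  -- index type: pairs (γ, δ) that are related by some group element
  set ι := {p : Γ × Δ // ∃ g : G, g • (p.1 : Ω) = (p.2 : Ω)} with hι
  haveI : Finite ι := Subtype.finite
  haveI : Fintype ι := Fintype.ofFinite ι
  let g0 : ι → G := fun p => p.2.choose
  have hg0 : ∀ p : ι, g0 p • (p.1.1 : Ω) = (p.1.2 : Ω) := fun p => p.2.choose_spec
  let H : ι → Subgroup G := fun p => MulAction.stabilizer G (p.1.1 : Ω)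
  have hcovers : ⋃ i ∈ (Finset.univ : Finset ι), g0 i • (H i : Set G) = Set.univ := by
    ext g
    simp only [Set.mem_iUnion, Set.mem_univ, iff_true, Finset.mem_univ, exists_true_left]
    obtain ⟨γ, hγ, δ, hδ, hgd⟩ := hc' g
    refine ⟨⟨(⟨γ, hγ⟩, ⟨δ, hδ⟩), ⟨g, hgd⟩⟩, ?_⟩
    rw [mem_leftCoset_iff]
    show (g0 _)⁻¹ * g ∈ MulAction.stabilizer G γ
    have := hg0 ⟨(⟨γ, hγ⟩, ⟨δ, hδ⟩), ⟨g, hgd⟩⟩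
    simp only [MulAction.mem_stabilizer_iff, mul_smul, hgd]
    rw [inv_smul_eq_iff]
    exact this.symm
  obtain ⟨i, -, hfi, hle⟩ := Subgroup.exists_index_le_card_of_leftCoset_cover hcovers
  -- the orbit of γ_i is finite with cardinality equal to the index
  set γ := (i.1.1 : Ω)
  haveI : Finite (G ⧸ H i) := by
    haveI := hfi
    exact Subgroup.finite_quotient_of_finiteIndex (H := H i)
  haveI : Finite (MulAction.orbit G γ) :=
    Finite.of_equiv _ (MulAction.orbitEquivQuotientStabilizer G γ).symm
  have hcard : Nat.card (MulAction.orbit G γ) = (H i).index :=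
    Nat.card_congr (MulAction.orbitEquivQuotientStabilizer G γ)
  have hΓΔ : Nat.card ι ≤ Nat.card Γ * Nat.card Δ := by
    calc Nat.card ι ≤ Nat.card (Γ × Δ) := Nat.card_le_card_of_injective _ Subtype.val_injective
    _ = Nat.card Γ * Nat.card Δ := Nat.card_prod _ _
  have hlt := h γ
  rw [← Nat.cast_card (α := Γ), ← Nat.cast_card (α := Δ),
    ← Nat.cast_card (α := MulAction.orbit G γ), ← Nat.cast_mul, Nat.cast_lt] at hlt
  have : (H i).index ≤ Nat.card Γ * Nat.card Δ := by
    refine le_trans hle ?_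
    simpa [Nat.card_eq_fintype_card] using hΓΔ
  omega
end

section
/- Let k be an infinite cardinal number and let G be a group acting on a set Ω such that every G-orbit has cardinality strictly greater than k. If Γ ⊆ Ω is finite and Δ ⊆ Ω has cardinality at most k, then there exists g ∈ G such that (g • Γ) ∩ Δ = ∅. -/
open Pointwise

universe u

theorem orbits_gt_k_aux {G : Type*} {Ω : Type u} [Group G] [MulAction G Ω]
    (k : Cardinal.{u}) (hk : Cardinal.aleph0 ≤ k)
    (horb : ∀ ω : Ω, k < Cardinal.mk (MulAction.orbit G ω))
    (F : Set Ω) (hF : F.Finite) :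
    ∀ T : Ω → Set Ω, (∀ ω, Cardinal.mk (T ω) ≤ k) →
      ∃ g : G, ∀ ω ∈ F, g • ω ∉ T ω := by
  refine Set.Finite.induction_on (motive := fun F _ => ∀ T : Ω → Set Ω,
      (∀ ω, Cardinal.mk (T ω) ≤ k) → ∃ g : G, ∀ ω ∈ F, g • ω ∉ T ω)
    F hF (fun T hT => ⟨1, by simp⟩) ?_
  intro ω F' hω hF' IH T hT
  · 
    -- find x with x • ω ∉ T ω
    have hne : ¬ (MulAction.orbit G ω ⊆ T ω) := by
      intro hsub
      exact absurd (le_trans (Cardinal.mk_le_mk_of_subset hsub) (hT ω)) (not_le.2 (horb ω))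
    obtain ⟨p, hp_orb, hp⟩ := Set.not_subset.1 hne
    obtain ⟨x, rfl⟩ := hp_orb
    set S : Set Ω := T ω ∩ MulAction.orbit G ω with hS
    have hrep : ∀ δ : S, ∃ g : G, g • ω = (δ : Ω) := fun δ => δ.2.2
    choose r hr using hrep
    set T' : Ω → Set Ω := fun ω' => T ω' ∪ ⋃ δ : S, (r δ * x⁻¹) • T ω' with hT'
    have hT'k : ∀ ω', Cardinal.mk (T' ω') ≤ k := by
      intro ω'
      have h1 : Cardinal.mk (⋃ δ : S, (r δ * x⁻¹) • T ω') ≤ k := by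
        refine le_trans (Cardinal.mk_iUnion_le _) ?_
        have hSk : Cardinal.mk S ≤ k :=
          le_trans (Cardinal.mk_le_mk_of_subset (Set.inter_subset_left)) (hT ω)
        have hsup : ⨆ δ : S, Cardinal.mk ((r δ * x⁻¹) • T ω' : Set Ω) ≤ k := by
          refine ciSup_le' fun δ => ?_
          have : Cardinal.mk ((r δ * x⁻¹) • T ω' : Set Ω) = Cardinal.mk (T ω') := by
            rw [show ((r δ * x⁻¹) • T ω' : Set Ω) = (fun y => (r δ * x⁻¹) • y) '' T ω' from rfl]
            exact Cardinal.mk_image_eq (MulAction.injective _)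
          rw [this]; exact hT ω'
        calc Cardinal.mk S * (⨆ δ : S, Cardinal.mk ((r δ * x⁻¹) • T ω' : Set Ω))
            ≤ k * k := mul_le_mul' hSk hsup
          _ = k := Cardinal.mul_eq_self hk
      refine le_trans (Cardinal.mk_union_le _ _) ?_
      calc Cardinal.mk (T ω') + Cardinal.mk (⋃ δ : S, (r δ * x⁻¹) • T ω')
          ≤ k + k := add_le_add (hT ω') h1
        _ = k := Cardinal.add_eq_self hk
    obtain ⟨g, hg⟩ := IH T' hT'k
    by_cases hgω : g • ω ∈ T ω
    · -- fix up using x and representative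
      have hδS : g • ω ∈ S := ⟨hgω, ⟨g, rfl⟩⟩
      set δ : S := ⟨g • ω, hδS⟩ with hδ
      refine ⟨x * (r δ)⁻¹ * g, ?_⟩
      intro ω' hω'
      rcases Set.mem_insert_iff.1 hω' with rfl | hω'F
      · have : (x * (r δ)⁻¹ * g) • ω' = x • ω' := by
          have h1 : (r δ) • ω' = g • ω' := by rw [hr δ]
          rw [mul_smul, mul_smul, ← h1, inv_smul_smul]
        rw [this]; exact hp
      · intro hmem
        apply hg ω' hω'F
        have : g • ω' = (r δ * x⁻¹) • ((x * (r δ)⁻¹ * g) • ω') := by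
          rw [← mul_smul]; group
        refine Set.mem_union_right _ ?_
        refine Set.mem_iUnion.2 ⟨δ, ?_⟩
        rw [this]
        exact Set.smul_mem_smul_set hmem
    · refine ⟨g, fun ω' hω' => ?_⟩
      rcases Set.mem_insert_iff.1 hω' with rfl | hω'F
      · exact hgω
      · exact fun hmem => hg ω' hω'F (Set.mem_union_left _ hmem)

theorem orbits_gt_k_separation {G : Type*} {Ω : Type u} [Group G] [MulAction G Ω]
    (k : Cardinal.{u}) (hk : Cardinal.aleph0 ≤ k)
    (horb : ∀ ω : Ω, k < Cardinal.mk (MulAction.orbit G ω))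
    (Γ Δ : Set Ω) (hΓ : Γ.Finite) (hΔ : Cardinal.mk Δ ≤ k) :
    ∃ g : G, (g • Γ) ∩ Δ = ∅ := by
  obtain ⟨g, hg⟩ := orbits_gt_k_aux k hk horb Γ hΓ (fun _ => Δ) (fun _ => hΔ)
  refine ⟨g, Set.eq_empty_iff_forall_notMem.2 ?_⟩
  rintro y ⟨⟨γ, hγ, rfl⟩, hyΔ⟩
  exact hg γ hγ hyΔ
end

section
/- (Tomkinson) Let k be an infinite cardinal number and let G be a group acting on a set Ω such that every G-orbit has cardinality strictly greater than 2^k. If Γ, Δ ⊆ Ω satisfy |Γ| ≤ k, |Δ| ≤ k, and Γ ∩ Δ is finite, then there exists g ∈ G such that (g • Γ) ∩ Δ = ∅. -/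
open Pointwise

universe u

open Cardinal Set MulAction Order

section TomkinsonAux

variable {G : Type*} {Ω : Type u} [Group G] [MulAction G Ω]

/-- B.H. Neumann-style lemma in action form: if `W` is a finite set of points whose
orbits all have size `> lam`, and for each `w ∈ W` we have a set `B w` of at most `lam`
forbidden values, then some group element moves every `w ∈ W` off its forbidden set. -/
lemma tomkinson_neumann (lam : Cardinal.{u}) (hlam : Cardinal.aleph0 ≤ lam)
    (W : Finset Ω) :
    ∀ (_ : ∀ w ∈ W, lam < Cardinal.mk (orbit G w)) (B : Ω → Set Ω)
      (_ : ∀ w ∈ W, Cardinal.mk (B w) ≤ lam),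
    ∃ g : G, ∀ w ∈ W, g • w ∉ B w := by
  classical
  induction W using Finset.induction_on with
  | empty => exact fun _ B _ => ⟨1, by simp⟩
  | @insert w₀ W' hw₀ ih =>
    intro horb B hB
    by_contra hcon
    push_neg at hcon
    -- hcon : ∀ g, ∃ w ∈ insert w₀ W', g • w ∈ B w
    have hw₀mem : w₀ ∈ insert w₀ W' := Finset.mem_insert_self _ _
    have hns : ¬ (orbit G w₀ ⊆ B w₀) := by
      intro hsub
      exact absurd (Cardinal.mk_le_mk_of_subset hsub)
        (not_le.mpr (lt_of_le_of_lt (hB w₀ hw₀mem) (horb w₀ hw₀mem)))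
    obtain ⟨p₀, hp₀orb, hp₀B⟩ := Set.not_subset.mp hns
    obtain ⟨zz, hzz⟩ := MulAction.mem_orbit_iff.mp hp₀orb
    set S : Set Ω := B w₀ ∩ orbit G w₀ with hSdef
    have hSsub : ∀ p : S, ∃ y : G, y • w₀ = (p : Ω) :=
      fun p => MulAction.mem_orbit_iff.mp p.2.2
    choose y hy using hSsub
    set B' : Ω → Set Ω := fun w => B w ∪ ⋃ p : S, (y p * zz⁻¹) • (B w) with hB'def
    have hB' : ∀ w ∈ W', Cardinal.mk (B' w) ≤ lam := by
      intro w hw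
      have hBw : Cardinal.mk (B w) ≤ lam := hB w (Finset.mem_insert_of_mem hw)
      have hpart : Cardinal.mk ↥(⋃ p : S, (y p * zz⁻¹) • (B w)) ≤ lam := by
        refine le_trans (Cardinal.mk_iUnion_le _) ?_
        have hS : Cardinal.mk S ≤ lam :=
          le_trans (Cardinal.mk_le_mk_of_subset Set.inter_subset_left) (hB w₀ hw₀mem)
        have hsup : (⨆ p : S, Cardinal.mk ↥((y p * zz⁻¹) • (B w))) ≤ lam := by
          refine ciSup_le' fun p => ?_
          rw [← Set.image_smul]
          exact le_trans Cardinal.mk_image_le hBw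
        calc Cardinal.mk S * (⨆ p : S, Cardinal.mk ↥((y p * zz⁻¹) • (B w)))
            ≤ lam * lam := mul_le_mul' hS hsup
          _ = lam := Cardinal.mul_eq_self hlam
      calc Cardinal.mk (B' w)
          ≤ Cardinal.mk (B w) + Cardinal.mk ↥(⋃ p : S, (y p * zz⁻¹) • (B w)) :=
            Cardinal.mk_union_le _ _
        _ ≤ lam + lam := add_le_add hBw hpart
        _ = lam := Cardinal.add_eq_self hlam
    obtain ⟨g, hg⟩ := ih (fun w hw => horb w (Finset.mem_insert_of_mem hw)) B' hB'
    obtain ⟨w, hwmem, hwB⟩ := hcon g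
    rcases Finset.mem_insert.mp hwmem with rfl | hwW'
    · -- the witness for `g` is `w₀`
      have hporb : g • w ∈ orbit G w := MulAction.mem_orbit _ _
      set p : S := ⟨g • w, hwB, hporb⟩ with hpdef
      obtain ⟨w', hw'mem, hw'B⟩ := hcon (zz * (y p)⁻¹ * g)
      rcases Finset.mem_insert.mp hw'mem with rfl | hw'W'
      · -- then `w' = w₀` is impossible since that lands on `p₀`
        apply hp₀B
        have hcalc : (zz * (y p)⁻¹ * g) • w' = p₀ := by
          rw [mul_smul, mul_smul, show g • w' = (p : Ω) from rfl, ← hy p, inv_smul_smul, hzz]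
        rwa [hcalc] at hw'B
      · -- and `w' ∈ W'` is impossible by the choice of `g`
        apply hg w' hw'W'
        refine Set.mem_union_right _ (Set.mem_iUnion.mpr ⟨p, ?_⟩)
        refine Set.mem_smul_set.mpr ⟨(zz * (y p)⁻¹ * g) • w', hw'B, ?_⟩
        rw [smul_smul, show (y p * zz⁻¹) * (zz * (y p)⁻¹ * g) = g by group]
    · exact hg w hwW' (Set.mem_union_left _ hwB)

/-- Transfinite construction of a family of group elements whose values on each point of
the finite set `W` are pairwise distinct. -/
lemma tomkinson_seq (lam : Cardinal.{u}) (hlam : Cardinal.aleph0 ≤ lam)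
    (W : Finset Ω) (horb : ∀ w ∈ W, lam < Cardinal.mk (orbit G w))
    (V : Type u) [LinearOrder V] [WellFoundedLT V]
    (hV : ∀ ξ : V, Cardinal.mk (Set.Iio ξ) ≤ lam) :
    ∃ z : V → G, ∀ η ξ : V, η < ξ → ∀ w ∈ W, z ξ • w ≠ z η • w := by
  classical
  have wf : WellFounded ((· < ·) : V → V → Prop) := IsWellFounded.wf
  let F : (ξ : V) → ((η : V) → η < ξ → G) → G := fun ξ ih =>
    Classical.choose (tomkinson_neumann lam hlam W horb
      (fun w => Set.range (fun ηh : Set.Iio ξ => ih ηh.1 ηh.2 • w))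
      (fun w _ => le_trans Cardinal.mk_range_le (hV ξ)))
  let z : V → G := wf.fix F
  have hzeq : ∀ ξ, z ξ = F ξ (fun η _ => z η) := fun ξ => wf.fix_eq F ξ
  refine ⟨z, fun η ξ hηξ w hw => ?_⟩
  have hspec : z ξ • w ∉ Set.range (fun ηh : Set.Iio ξ => z ηh.1 • w) := by
    rw [hzeq ξ]
    exact Classical.choose_spec (tomkinson_neumann lam hlam W horb
      (fun w => Set.range (fun ηh : Set.Iio ξ => z ηh.1 • w))
      (fun w _ => le_trans Cardinal.mk_range_le (hV ξ))) w hw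
  intro heq
  exact hspec ⟨⟨η, hηξ⟩, heq.symm⟩

end TomkinsonAux

section ErdosRado

variable {V : Type u} [LinearOrder V] [WellFoundedLT V]
variable {L : Type u} [LinearOrder L] [WellFoundedLT L]
variable {C : Type u}

private def branchSAux (c : V → V → C) (x : V) (j : L) (f : ∀ j' : L, j' < j → V) : Set V :=
  {y : V | ∀ j' (hj : j' < j), f j' hj < y ∧ c (f j' hj) y = c (f j' hj) x}

open Classical in
private noncomputable def branchM (c : V → V → C) (x : V) : L → V :=
  (IsWellFounded.wf (r := ((· < ·) : L → L → Prop))).fix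
    (fun j ih =>
      if h : (branchSAux c x j ih).Nonempty
      then (IsWellFounded.wf (r := ((· < ·) : V → V → Prop))).min _ h
      else x)

private def branchS (c : V → V → C) (x : V) (j : L) : Set V :=
  branchSAux c x j (fun j' _ => branchM c x j')

open Classical in
private lemma branchM_eq (c : V → V → C) (x : V) (j : L) :
    branchM c x j =
      if h : (branchS c x j).Nonempty
      then (IsWellFounded.wf (r := ((· < ·) : V → V → Prop))).min _ h
      else x := by
  exact WellFounded.fix_eq (IsWellFounded.wf (r := ((· < ·) : L → L → Prop)))
    (fun j (ih : ∀ j' : L, j' < j → V) =>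
      if h : (branchSAux c x j ih).Nonempty
      then (IsWellFounded.wf (r := ((· < ·) : V → V → Prop))).min _ h
      else x) j

private lemma branchS_mem {c : V → V → C} {x v : V} {j : L} :
    v ∈ branchS c x j ↔
      ∀ j' (_ : j' < j), branchM c x j' < v ∧ c (branchM c x j') v = c (branchM c x j') x :=
  Iff.rfl

private lemma branchM_eq_pos (c : V → V → C) (x : V) (j : L) (h : (branchS c x j).Nonempty) :
    branchM c x j =
      (IsWellFounded.wf (r := ((· < ·) : V → V → Prop))).min (branchS c x j) h := by
  rw [branchM_eq, dif_pos h]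

private lemma branchM_mem_surv (c : V → V → C) (x : V) :
    ∀ j : L, (∀ j', j' < j → branchM c x j' ≠ x) → x ∈ branchS c x j := by
  intro j
  induction j using (IsWellFounded.wf (r := ((· < ·) : L → L → Prop))).induction with
  | _ j ih =>
    intro hne
    rw [branchS_mem]
    intro j' hj'
    have hx' : x ∈ branchS c x j' := ih j' hj' (fun j'' h'' => hne j'' (h''.trans hj'))
    have hnonempty : (branchS c x j').Nonempty := ⟨x, hx'⟩
    refine ⟨?_, rfl⟩
    have hle : ¬ x < branchM c x j' := by
      rw [branchM_eq_pos c x j' hnonempty]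
      exact WellFounded.not_lt_min _ _ hx'
    exact lt_of_le_of_ne (not_lt.mp hle) (hne j' hj')

/-- Erdős–Rado-style lemma: a colouring of pairs from a set of size `> 2 ^ k` by at
most `k` colours (`k` infinite) admits a monochromatic triangle. -/
lemma tomkinson_triangle (k : Cardinal.{u}) (hk : Cardinal.aleph0 ≤ k)
    (hC : Cardinal.mk C ≤ k) (hV : 2 ^ k < Cardinal.mk V)
    (hL : Cardinal.mk L = Order.succ k) (hLseg : ∀ l : L, Cardinal.mk (Set.Iio l) ≤ k)
    (c : V → V → C) :
    ∃ a b d : V, a < b ∧ b < d ∧ c a b = c a d ∧ c a d = c b d := by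
  classical
  have wfV : WellFounded ((· < ·) : V → V → Prop) := IsWellFounded.wf
  have wfL : WellFounded ((· < ·) : L → L → Prop) := IsWellFounded.wf
  by_cases hterm : ∀ x : V, ∃ j : L, branchM c x j = x
  · -- every branch terminates: count and contradict `hV`.
    exfalso
    have hℓex : ∀ x : V, ({j : L | branchM c x j = x}).Nonempty := hterm
    set ℓ : V → L := fun x => wfL.min {j : L | branchM c x j = x} (hℓex x) with hℓdef
    have hℓmem : ∀ x, branchM c x (ℓ x) = x :=
      fun x => wfL.min_mem {j : L | branchM c x j = x} (hℓex x)
    have hℓlt : ∀ x (j : L), j < ℓ x → branchM c x j ≠ x := by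
      intro x j hj hmem
      exact wfL.not_lt_min {j : L | branchM c x j = x} hmem hj
    have hxS : ∀ x (j : L), j ≤ ℓ x → x ∈ branchS c x j := by
      intro x j hj
      exact branchM_mem_surv c x j (fun j' hj' => hℓlt x j' (lt_of_lt_of_le hj' hj))
    -- for a fixed length `l`, the branch-colour sequence determines the point
    have hinj : ∀ l : L, Function.Injective
        (fun x : {x : V | ℓ x = l} => (fun j : Set.Iio l => c (branchM c x.1 j.1) x.1)) := by
      intro l x y hxy
      have hℓx : ℓ x.1 = l := x.2
      have hℓy : ℓ y.1 = l := y.2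
      have hcol : ∀ (j : L), j < l → c (branchM c x.1 j) x.1 = c (branchM c y.1 j) y.1 := by
        intro j hj
        exact congrFun hxy ⟨j, hj⟩
      have key : ∀ j : L, j ≤ l → branchM c x.1 j = branchM c y.1 j := by
        intro j
        induction j using wfL.induction with
        | _ j ih =>
          intro hj
          have hSeq : branchS c x.1 j = branchS c y.1 j := by
            ext v
            rw [branchS_mem, branchS_mem]
            constructor
            · intro hv j' hj'
              have hm := ih j' hj' ((le_of_lt hj').trans hj)
              have hc' := hcol j' (lt_of_lt_of_le hj' hj)
              rw [← hm] at hc' ⊢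
              rw [← hc']
              exact hv j' hj'
            · intro hv j' hj'
              have hm := ih j' hj' ((le_of_lt hj').trans hj)
              have hc' := hcol j' (lt_of_lt_of_le hj' hj)
              rw [hm] at hc' ⊢
              rw [hc']
              exact hv j' hj'
          have hxne : (branchS c x.1 j).Nonempty := ⟨x.1, hxS x.1 j (le_of_le_of_eq hj hℓx.symm)⟩
          have hyne : (branchS c y.1 j).Nonempty := by rw [← hSeq]; exact hxne
          rw [branchM_eq_pos c x.1 j hxne, branchM_eq_pos c y.1 j hyne]
          have hmy : wfV.min (branchS c y.1 j) hyne ∈ branchS c x.1 j := by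
            rw [hSeq]
            exact wfV.min_mem _ hyne
          have hmx : wfV.min (branchS c x.1 j) hxne ∈ branchS c y.1 j := by
            rw [← hSeq]
            exact wfV.min_mem _ hxne
          exact le_antisymm (not_lt.mp (wfV.not_lt_min _ hmy))
            (not_lt.mp (wfV.not_lt_min _ hmx))
      have h1 := hℓmem x.1
      rw [hℓx] at h1
      have h2 := hℓmem y.1
      rw [hℓy] at h2
      exact Subtype.ext (h1.symm.trans ((key l le_rfl).trans h2))
    -- counting
    have hcover : (⋃ l : L, {x : V | ℓ x = l}) = Set.univ := by
      ext x
      simp only [Set.mem_iUnion, Set.mem_setOf_eq, Set.mem_univ, iff_true]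
      exact ⟨ℓ x, rfl⟩
    have hbound : ∀ l : L, Cardinal.mk {x : V | ℓ x = l} ≤ 2 ^ k := by
      intro l
      have h1 : Cardinal.mk {x : V | ℓ x = l} ≤ Cardinal.mk (Set.Iio l → C) :=
        Cardinal.mk_le_of_injective (hinj l)
      have h2 : Cardinal.mk (Set.Iio l → C) ≤ 2 ^ k := by
        calc Cardinal.mk (Set.Iio l → C) = Cardinal.mk C ^ Cardinal.mk (Set.Iio l) :=
              (Cardinal.power_def _ _).symm
          _ ≤ k ^ Cardinal.mk (Set.Iio l) := Cardinal.power_le_power_right hC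
          _ ≤ k ^ k := Cardinal.power_le_power_left
              ((Cardinal.aleph0_pos.trans_le hk).ne') (hLseg l)
          _ ≤ (2 ^ k) ^ k := Cardinal.power_le_power_right (Cardinal.cantor k).le
          _ = 2 ^ (k * k) := Cardinal.power_mul.symm
          _ = 2 ^ k := by rw [Cardinal.mul_eq_self hk]
      exact h1.trans h2
    have hVle : Cardinal.mk V ≤ 2 ^ k := by
      calc Cardinal.mk V = Cardinal.mk ↥(⋃ l : L, {x : V | ℓ x = l}) := by
            rw [hcover, Cardinal.mk_univ]
        _ ≤ Cardinal.mk L * ⨆ l : L, Cardinal.mk {x : V | ℓ x = l} := Cardinal.mk_iUnion_le _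
        _ ≤ Cardinal.mk L * 2 ^ k := mul_le_mul' le_rfl (ciSup_le' hbound)
        _ = Order.succ k * 2 ^ k := by rw [hL]
        _ ≤ 2 ^ k * 2 ^ k := mul_le_mul' (Order.succ_le_of_lt (Cardinal.cantor k)) le_rfl
        _ = 2 ^ k := Cardinal.mul_eq_self (hk.trans (Cardinal.cantor k).le)
    exact absurd hVle (not_le.mpr hV)
  · -- some branch survives forever: extract a monochromatic triangle.
    push_neg at hterm
    obtain ⟨x, hx⟩ := hterm
    have hmem : ∀ j : L, x ∈ branchS c x j :=
      fun j => branchM_mem_surv c x j (fun j' _ => hx j')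
    have hmlt : ∀ j : L, branchM c x j < x := by
      intro j
      have h1 : ¬ x < branchM c x j := by
        rw [branchM_eq_pos c x j ⟨x, hmem j⟩]
        exact WellFounded.not_lt_min _ _ (hmem j)
      exact lt_of_le_of_ne (not_lt.mp h1) (hx j)
    have hhom : ∀ j j' : L, j < j' →
        branchM c x j < branchM c x j' ∧
          c (branchM c x j) (branchM c x j') = c (branchM c x j) x := by
      intro j j' hjj'
      have hm : branchM c x j' ∈ branchS c x j' := by
        rw [branchM_eq_pos c x j' ⟨x, hmem j'⟩]
        exact WellFounded.min_mem _ _ _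
      exact (branchS_mem.mp hm) j hjj'
    have hnoninj : ¬ Function.Injective (fun j : L => c (branchM c x j) x) := by
      intro hinj
      have h1 := Cardinal.mk_le_of_injective hinj
      rw [hL] at h1
      exact absurd (h1.trans hC) (not_le.mpr (Order.lt_succ k))
    rw [Function.not_injective_iff] at hnoninj
    obtain ⟨j, j', hcc, hne⟩ := hnoninj
    rcases hne.lt_or_gt with h | h
    · exact ⟨branchM c x j, branchM c x j', x, (hhom j j' h).1, hmlt j',
        (hhom j j' h).2, hcc⟩
    · exact ⟨branchM c x j', branchM c x j, x, (hhom j' j h).1, hmlt j,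
        (hhom j' j h).2, hcc.symm⟩

end ErdosRado

theorem tomkinson_separation {G : Type*} {Ω : Type u} [Group G] [MulAction G Ω]
    (k : Cardinal.{u}) (hk : Cardinal.aleph0 ≤ k)
    (horb : ∀ ω : Ω, 2 ^ k < Cardinal.mk (MulAction.orbit G ω))
    (Γ Δ : Set Ω) (hΓ : Cardinal.mk Γ ≤ k) (hΔ : Cardinal.mk Δ ≤ k)
    (hfin : (Γ ∩ Δ).Finite) :
    ∃ g : G, (g • Γ) ∩ Δ = ∅ := by
  classical
  by_contra hcon
  push_neg at hcon
  -- covering : every group element matches some pair in Γ × Δ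
  have hcov : ∀ g : G, ∃ p : (↥Γ × ↥Δ), g • (p.1.1 : Ω) = p.2.1 := by
    intro g
    obtain ⟨x, hx1, hx2⟩ := hcon g
    obtain ⟨γ, hγ, hgx⟩ := Set.mem_smul_set.mp hx1
    exact ⟨(⟨γ, hγ⟩, ⟨x, hx2⟩), hgx⟩
  have h2k : Cardinal.aleph0 ≤ 2 ^ k := hk.trans (Cardinal.cantor k).le
  set W : Finset Ω := hfin.toFinset with hWdef
  -- the transfinite sequence, indexed by a well-order of size `(2 ^ k)⁺`
  have hVseg : ∀ ξ : (Order.succ ((2 : Cardinal.{u}) ^ k)).ord.ToType,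
      Cardinal.mk (Set.Iio ξ) ≤ 2 ^ k :=
    fun ξ => Order.lt_succ_iff.mp (Cardinal.mk_Iio_ord_toType ξ)
  obtain ⟨z, hz⟩ := tomkinson_seq (G := G) (2 ^ k) h2k W (fun w _ => horb w)
    ((Order.succ ((2 : Cardinal.{u}) ^ k)).ord.ToType) hVseg
  -- colours
  have hC : Cardinal.mk (↥Γ × ↥Δ) ≤ k := by
    calc Cardinal.mk (↥Γ × ↥Δ)
        = Cardinal.mk Γ * Cardinal.mk Δ := by
          rw [Cardinal.mk_prod, Cardinal.lift_id, Cardinal.lift_id]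
      _ ≤ k * k := mul_le_mul' hΓ hΔ
      _ = k := Cardinal.mul_eq_self hk
  have hVbig : 2 ^ k < Cardinal.mk ((Order.succ ((2 : Cardinal.{u}) ^ k)).ord.ToType) := by
    rw [Cardinal.mk_toType, Cardinal.card_ord]
    exact Order.lt_succ _
  have hLcard : Cardinal.mk ((Order.succ k).ord.ToType) = Order.succ k := by
    rw [Cardinal.mk_toType, Cardinal.card_ord]
  have hLseg : ∀ l : (Order.succ k).ord.ToType, Cardinal.mk (Set.Iio l) ≤ k :=
    fun l => Order.lt_succ_iff.mp (Cardinal.mk_Iio_ord_toType l)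
  set c : (Order.succ ((2 : Cardinal.{u}) ^ k)).ord.ToType →
      (Order.succ ((2 : Cardinal.{u}) ^ k)).ord.ToType → (↥Γ × ↥Δ) :=
    fun α β => Classical.choose (hcov ((z β)⁻¹ * z α)) with hcdef
  have hcspec : ∀ α β, ((z β)⁻¹ * z α) • ((c α β).1.1 : Ω) = (c α β).2.1 :=
    fun α β => Classical.choose_spec (hcov ((z β)⁻¹ * z α))
  obtain ⟨a, b, d, hab, hbd, h1, h2⟩ :=
    tomkinson_triangle (L := (Order.succ k).ord.ToType) k hk hC hVbig hLcard hLseg c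
  set γ₀ : Ω := ((c a b).1.1 : Ω) with hγ₀def
  set δ₀ : Ω := ((c a b).2.1 : Ω) with hδ₀def
  have e12 : ((z b)⁻¹ * z a) • γ₀ = δ₀ := hcspec a b
  have e13 : ((z d)⁻¹ * z a) • γ₀ = δ₀ := by
    have h := hcspec a d
    rw [← h1] at h
    exact h
  have e23 : ((z d)⁻¹ * z b) • γ₀ = δ₀ := by
    have h := hcspec b d
    rw [← h2, ← h1] at h
    exact h
  have efix : ((z d)⁻¹ * z b) • δ₀ = δ₀ := by
    calc ((z d)⁻¹ * z b) • δ₀ = ((z d)⁻¹ * z b) • (((z b)⁻¹ * z a) • γ₀) := by rw [e12]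
      _ = (((z d)⁻¹ * z b) * ((z b)⁻¹ * z a)) • γ₀ := (mul_smul _ _ _).symm
      _ = ((z d)⁻¹ * z a) • γ₀ := by
          rw [show ((z d)⁻¹ * z b) * ((z b)⁻¹ * z a) = (z d)⁻¹ * z a by group]
      _ = δ₀ := e13
  have hpts : γ₀ = δ₀ := MulAction.injective ((z d)⁻¹ * z b) (e23.trans efix.symm)
  have hWmem : γ₀ ∈ W := by
    rw [hWdef, Set.Finite.mem_toFinset]
    exact ⟨(c a b).1.2, hpts ▸ (c a b).2.2⟩
  have hfixed : z a • γ₀ = z b • γ₀ := by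
    have h := e12
    rw [← hpts, mul_smul, inv_smul_eq_iff] at h
    exact h
  exact hz a b hab γ₀ hWmem hfixed.symm
end

section
/- (Chatzidakis–Pappas) Let k be an infinite cardinal number, let G be a group acting on a set Ω, and let Γ, Δ ⊆ Ω with |Γ| ≤ k and |Δ| ≤ k. If S ⊆ G has cardinality strictly greater than 2^k, then there exist distinct elements g, h ∈ S such that, writing u = h⁻¹ * g (the group element that acts by applying g and then h⁻¹), every point of (u • Γ) ∩ Δ is fixed by u, i.e. (u • Γ) ∩ Δ ⊆ {ω ∈ Ω : u • ω = ω}. -/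
open Pointwise Cardinal

universe u

namespace CPaux

noncomputable section
attribute [local instance] Classical.propDecidable

variable {G Ω : Type u} [Group G] [MulAction G Ω]

/-- a representative of a set of group elements -/
noncomputable def rep (T : Set G) : G := if h : T.Nonempty then h.some else 1

lemma rep_mem {T : Set G} (h : T.Nonempty) : rep T ∈ T := by
  rw [rep, dif_pos h]; exact h.some_mem

/-- The transfinite witness-sequence for the element `h` relative to `S`. -/
noncomputable def wseq (S : Set G) (Γ Δ : Set Ω) (h : G) (α : Ordinal.{u}) :
    Option (↥Γ × ↥Δ) :=
  Ordinal.lt_wf.fix (C := fun _ => Option (↥Γ × ↥Δ))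
    (fun a ih =>
      if hp : (∀ β (hβ : β < a), (ih β hβ).isSome) ∧
          ∃ p : ↥Γ × ↥Δ, ((p.1 : Ω) ≠ (p.2 : Ω) ∧
            rep {x : G | x ∈ S ∧ ∀ β (hβ : β < a) (q : ↥Γ × ↥Δ),
                ih β hβ = some q → x • (q.2 : Ω) = h • (q.2 : Ω)} • (p.1 : Ω)
              = h • (p.2 : Ω))
      then some hp.2.choose else none) α

/-- The set of stage-`α` survivors for `h`. -/
def Sset (S : Set G) (Γ Δ : Set Ω) (h : G) (α : Ordinal.{u}) : Set G :=
  {x : G | x ∈ S ∧ ∀ β (hβ : β < α) (q : ↥Γ × ↥Δ),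
      wseq S Γ Δ h β = some q → x • (q.2 : Ω) = h • (q.2 : Ω)}

lemma wseq_def (S : Set G) (Γ Δ : Set Ω) (h : G) (α : Ordinal.{u}) :
    wseq S Γ Δ h α =
      if hp : (∀ β (_ : β < α), (wseq S Γ Δ h β).isSome) ∧
          ∃ p : ↥Γ × ↥Δ, ((p.1 : Ω) ≠ (p.2 : Ω) ∧
            rep (Sset S Γ Δ h α) • (p.1 : Ω) = h • (p.2 : Ω))
      then some hp.2.choose else none := by
  show Ordinal.lt_wf.fix _ α = _
  rw [WellFounded.fix_eq]
  rfl

variable {S : Set G} {Γ Δ : Set Ω} {h : G}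

lemma wseq_spec {α : Ordinal.{u}} {p : ↥Γ × ↥Δ} (hw : wseq S Γ Δ h α = some p) :
    (∀ β, β < α → (wseq S Γ Δ h β).isSome) ∧ (p.1 : Ω) ≠ (p.2 : Ω) ∧
      rep (Sset S Γ Δ h α) • (p.1 : Ω) = h • (p.2 : Ω) := by
  rw [wseq_def] at hw
  split at hw
  · rename_i hp
    obtain rfl : hp.2.choose = p := by injection hw
    exact ⟨hp.1, hp.2.choose_spec⟩
  · exact absurd hw (by simp)

lemma h_mem_Sset (hmem : h ∈ S) (α : Ordinal.{u}) : h ∈ Sset S Γ Δ h α :=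
  ⟨hmem, fun _ _ _ _ => rfl⟩

lemma wseq_none_after {α β : Ordinal.{u}} (hβ : β < α)
    (hn : wseq S Γ Δ h β = none) : wseq S Γ Δ h α = none := by
  rw [wseq_def]
  apply dif_neg
  rintro ⟨h1, -⟩
  have := h1 β hβ
  rw [hn] at this
  simp at this

lemma fresh (hmem : h ∈ S) {α β : Ordinal.{u}} {p q : ↥Γ × ↥Δ} (hβ : β < α)
    (hp : wseq S Γ Δ h α = some p) (hq : wseq S Γ Δ h β = some q) : p.2 ≠ q.2 := by
  intro hpq
  obtain ⟨-, hne, heq⟩ := wseq_spec hp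
  have hrep : rep (Sset S Γ Δ h α) ∈ Sset S Γ Δ h α :=
    rep_mem ⟨h, h_mem_Sset hmem α⟩
  have h2 : rep (Sset S Γ Δ h α) • (q.2 : Ω) = h • (q.2 : Ω) := hrep.2 β hβ q hq
  have hco : (p.2 : Ω) = (q.2 : Ω) := congrArg Subtype.val hpq
  rw [hco] at heq
  have : (p.1 : Ω) = (q.2 : Ω) :=
    MulAction.injective (rep (Sset S Γ Δ h α)) (heq.trans h2.symm)
  exact hne (this.trans hco.symm)

lemma stage_unique (hmem : h ∈ S) {a b : Ordinal.{u}} {p q : ↥Γ × ↥Δ}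
    (hp : wseq S Γ Δ h a = some p) (hq : wseq S Γ Δ h b = some q)
    (hδ : p.2 = q.2) : a = b ∧ p = q := by
  rcases lt_trichotomy a b with h' | h' | h'
  · exact absurd hδ.symm (fresh hmem h' hq hp)
  · subst h'
    rw [hp] at hq
    exact ⟨rfl, (Option.some_inj.mp hq)⟩
  · exact absurd hδ (fresh hmem h' hp hq)

lemma exists_none (hmem : h ∈ S) : ∃ α : Ordinal.{u}, wseq S Γ Δ h α = none := by
  by_contra hcon
  push_neg at hcon
  have hall : ∀ α, (wseq S Γ Δ h α).isSome := fun α =>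
    Option.ne_none_iff_isSome.mp (hcon α)
  set D : Ordinal.{u} → ↥Δ := fun α => ((wseq S Γ Δ h α).get (hall α)).2 with hD
  have hsome : ∀ α, wseq S Γ Δ h α = some ((wseq S Γ Δ h α).get (hall α)) :=
    fun α => (Option.some_get _).symm
  have hDinj : Function.Injective D := by
    intro a b hab
    by_contra hne
    rcases lt_or_gt_of_ne hne with h' | h'
    · exact fresh hmem h' (hsome b) (hsome a) hab.symm
    · exact fresh hmem h' (hsome a) (hsome b) hab
  set c : Cardinal.{u} := Order.succ (#↥Δ) with hc
  have hinj2 : Function.Injective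
      (fun x : Set.Iio c.ord => ULift.up.{u + 1} (D x.1)) := by
    intro x y hxy
    exact Subtype.ext (hDinj (congrArg ULift.down hxy))
  have hle := Cardinal.mk_le_of_injective hinj2
  rw [Ordinal.mk_Iio_ordinal, Cardinal.mk_uLift, Cardinal.card_ord] at hle
  exact absurd (Cardinal.lift_le.mp hle) (not_le.mpr (Order.lt_succ _))

lemma rep_eq
    (HW : ∀ g ∈ S, ∀ h' ∈ S, g ≠ h' → ∃ p : ↥Γ × ↥Δ,
      ((p.1 : Ω) ≠ (p.2 : Ω) ∧ g • (p.1 : Ω) = h' • (p.2 : Ω)))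
    (hmem : h ∈ S) {α : Ordinal.{u}} (hnone : wseq S Γ Δ h α = none)
    (hpred : ∀ β, β < α → (wseq S Γ Δ h β).isSome) :
    rep (Sset S Γ Δ h α) = h := by
  by_contra hne
  have hrepS : rep (Sset S Γ Δ h α) ∈ S := (rep_mem ⟨h, h_mem_Sset hmem α⟩).1
  obtain ⟨p, hp1, hp2⟩ := HW _ hrepS _ hmem hne
  rw [wseq_def, dif_pos ⟨hpred, ⟨p, hp1, hp2⟩⟩] at hnone
  exact Option.some_ne_none _ hnone

/-- First encoding component -/
noncomputable def fEnc (S : Set G) (Γ Δ : Set Ω) (h : G) (δ : ↥Δ) : Option ↥Γ :=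
  if hp : ∃ q : ↥Γ × Ordinal.{u}, wseq S Γ Δ h q.2 = some (q.1, δ)
  then some hp.choose.1 else none

/-- Second encoding component: order of appearance -/
def rEnc (S : Set G) (Γ Δ : Set Ω) (h : G) (δ δ' : ↥Δ) : Prop :=
  ∃ a b : Ordinal.{u}, a < b ∧ (∃ γ, wseq S Γ Δ h a = some (γ, δ)) ∧
    (∃ γ, wseq S Γ Δ h b = some (γ, δ'))

lemma fEnc_eq (hmem : h ∈ S) {a : Ordinal.{u}} {γ : ↥Γ} {δ : ↥Δ}
    (hw : wseq S Γ Δ h a = some (γ, δ)) : fEnc S Γ Δ h δ = some γ := by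
  have hex : ∃ q : ↥Γ × Ordinal.{u}, wseq S Γ Δ h q.2 = some (q.1, δ) := ⟨(γ, a), hw⟩
  rw [fEnc, dif_pos hex]
  have hspec := hex.choose_spec
  obtain ⟨-, h2⟩ := stage_unique hmem hspec hw (rfl : ((hex.choose.1, δ) : ↥Γ × ↥Δ).2 = δ)
  rw [(congrArg Prod.fst h2 : hex.choose.1 = γ)]

lemma fEnc_dom {γ : ↥Γ} {δ : ↥Δ} (hf : fEnc S Γ Δ h δ = some γ) :
    ∃ a : Ordinal.{u}, wseq S Γ Δ h a = some (γ, δ) := by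
  rw [fEnc] at hf
  split at hf
  · rename_i hp
    obtain rfl : hp.choose.1 = γ := by injection hf
    exact ⟨hp.choose.2, hp.choose_spec⟩
  · exact absurd hf (by simp)

variable {h₁ h₂ : G}

lemma Sset_congr (α : Ordinal.{u})
    (hw : ∀ β, β < α → wseq S Γ Δ h₁ β = wseq S Γ Δ h₂ β) :
    Sset S Γ Δ h₁ α = Sset S Γ Δ h₂ α := by
  induction α using Ordinal.induction with
  | h α IH =>
    have hval : ∀ β, β < α → ∀ q : ↥Γ × ↥Δ, wseq S Γ Δ h₁ β = some q →
        h₁ • (q.2 : Ω) = h₂ • (q.2 : Ω) := by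
      intro β hβ q hq
      have hq2 : wseq S Γ Δ h₂ β = some q := (hw β hβ).symm.trans hq
      obtain ⟨-, -, he1⟩ := wseq_spec hq
      obtain ⟨-, -, he2⟩ := wseq_spec hq2
      have hSeq : Sset S Γ Δ h₁ β = Sset S Γ Δ h₂ β :=
        IH β hβ (fun γ' hγ' => hw γ' (hγ'.trans hβ))
      rw [hSeq] at he1
      rw [← he1, ← he2]
    ext x
    constructor
    · rintro ⟨hxS, hx⟩
      refine ⟨hxS, fun β hβ q hq => ?_⟩
      have hq1 : wseq S Γ Δ h₁ β = some q := (hw β hβ).trans hq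
      rw [← hval β hβ q hq1]
      exact hx β hβ q hq1
    · rintro ⟨hxS, hx⟩
      refine ⟨hxS, fun β hβ q hq => ?_⟩
      rw [hval β hβ q hq]
      exact hx β hβ q ((hw β hβ).symm.trans hq)

/-- the mixed case is impossible -/
lemma mixed_case (hm1 : h₁ ∈ S) (hm2 : h₂ ∈ S)
    (hf : fEnc S Γ Δ h₁ = fEnc S Γ Δ h₂) {α : Ordinal.{u}}
    (IH : ∀ β, β < α → wseq S Γ Δ h₁ β = wseq S Γ Δ h₂ β)
    {p : ↥Γ × ↥Δ} (hw1 : wseq S Γ Δ h₁ α = some p)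
    (hw2 : wseq S Γ Δ h₂ α = none) : False := by
  have hf1 : fEnc S Γ Δ h₁ p.2 = some p.1 := fEnc_eq hm1 hw1
  have hf2 : fEnc S Γ Δ h₂ p.2 = some p.1 := by rw [← hf]; exact hf1
  obtain ⟨σ, hσ⟩ := fEnc_dom hf2
  rcases lt_trichotomy σ α with h' | h' | h'
  · have hσ1 : wseq S Γ Δ h₁ σ = some (p.1, p.2) := (IH σ h').trans hσ
    exact fresh hm1 h' hw1 hσ1 rfl
  · subst h'
    rw [hσ] at hw2
    exact Option.some_ne_none _ hw2
  · rw [wseq_none_after h' hw2] at hσ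
    exact Option.some_ne_none _ hσ.symm

lemma wseq_congr (hm1 : h₁ ∈ S) (hm2 : h₂ ∈ S)
    (hf : fEnc S Γ Δ h₁ = fEnc S Γ Δ h₂) (hr : rEnc S Γ Δ h₁ = rEnc S Γ Δ h₂)
    (α : Ordinal.{u}) : wseq S Γ Δ h₁ α = wseq S Γ Δ h₂ α := by
  induction α using Ordinal.induction with
  | h α IH =>
    rcases hh2 : wseq S Γ Δ h₂ α with _ | p₂
    · rcases hh1 : wseq S Γ Δ h₁ α with _ | p₁
      · rfl
      · exact absurd (mixed_case hm1 hm2 hf IH hh1 hh2) id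
    · rcases hh1 : wseq S Γ Δ h₁ α with _ | p₁
      · refine absurd (mixed_case hm2 hm1 hf.symm (fun β hβ => (IH β hβ).symm) hh2 hh1) id
      · -- both `some`; show p₁ = p₂
        suffices hpp : p₁ = p₂ by rw [hpp]
        -- first: the Δ-components agree
        have hδ : p₁.2 = p₂.2 := by
          by_contra hδne
          -- h₂ uses p₁.2 at some stage σ
          have hf1 : fEnc S Γ Δ h₁ p₁.2 = some p₁.1 := fEnc_eq hm1 hh1
          have hf1' : fEnc S Γ Δ h₂ p₁.2 = some p₁.1 := by rw [← hf]; exact hf1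
          obtain ⟨σ, hσ⟩ := fEnc_dom hf1'
          have hσα : α < σ := by
            rcases lt_trichotomy σ α with h' | h' | h'
            · exact absurd rfl
                (fresh hm1 h' hh1 ((IH σ h').trans hσ))
            · subst h'
              rw [hh2] at hσ
              exact absurd (congrArg (Option.map Prod.snd) hσ)
                (by simpa using fun he => hδne he.symm)
            · exact h'
          -- h₁ uses p₂.2 at some stage τ
          have hf2 : fEnc S Γ Δ h₂ p₂.2 = some p₂.1 := fEnc_eq hm2 hh2
          have hf2' : fEnc S Γ Δ h₁ p₂.2 = some p₂.1 := by rw [hf]; exact hf2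
          obtain ⟨τ, hτ⟩ := fEnc_dom hf2'
          have hτα : α < τ := by
            rcases lt_trichotomy τ α with h' | h' | h'
            · exact absurd rfl
                (fresh hm2 h' hh2 ((IH τ h').symm.trans hτ))
            · subst h'
              rw [hh1] at hτ
              exact absurd (congrArg (Option.map Prod.snd) hτ)
                (by simpa using hδne)
            · exact h'
          -- now derive the order contradiction
          have hr1 : rEnc S Γ Δ h₁ p₁.2 p₂.2 :=
            ⟨α, τ, hτα, ⟨p₁.1, hh1⟩, ⟨p₂.1, hτ⟩⟩
          rw [hr] at hr1
          obtain ⟨a, b, hab, ⟨γa, hga⟩, ⟨γb, hgb⟩⟩ := hr1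
          -- in the run of h₂ : p₁.2 appears only at σ, p₂.2 only at α
          obtain ⟨ha', -⟩ := stage_unique hm2 hga hσ rfl
          obtain ⟨hb', -⟩ := stage_unique hm2 hgb hh2 rfl
          rw [ha', hb'] at hab
          exact absurd (hσα.trans hab) (lt_irrefl α)
        -- now the Γ-components
        have hg1 : fEnc S Γ Δ h₁ p₁.2 = some p₁.1 := fEnc_eq hm1 hh1
        have hg2 : fEnc S Γ Δ h₂ p₁.2 = some p₂.1 := by
          rw [hδ]; exact fEnc_eq hm2 hh2
        rw [hf, hg2] at hg1
        have : p₂.1 = p₁.1 := by injection hg1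
        exact Prod.ext this.symm hδ

theorem key (k : Cardinal.{u}) (hk : Cardinal.aleph0 ≤ k)
    (Γ Δ : Set Ω) (hΓ : Cardinal.mk Γ ≤ k) (hΔ : Cardinal.mk Δ ≤ k) (S : Set G)
    (HW : ∀ g ∈ S, ∀ h' ∈ S, g ≠ h' → ∃ p : ↥Γ × ↥Δ,
      ((p.1 : Ω) ≠ (p.2 : Ω) ∧ g • (p.1 : Ω) = h' • (p.2 : Ω))) :
    Cardinal.mk S ≤ 2 ^ k := by
  classical
  have hinj : Function.Injective
      (fun x : ↥S => (fEnc S Γ Δ (x : G), rEnc S Γ Δ (x : G))) := by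
    intro x y hxy
    have hfe : fEnc S Γ Δ (x : G) = fEnc S Γ Δ (y : G) := congrArg Prod.fst hxy
    have hre : rEnc S Γ Δ (x : G) = rEnc S Γ Δ (y : G) := congrArg Prod.snd hxy
    have hweq := wseq_congr x.2 y.2 hfe hre
    -- find the common minimal stopping stage
    obtain ⟨α', hα'⟩ := exists_none (S := S) (Γ := Γ) (Δ := Δ) x.2
    set T : Set Ordinal.{u} := {α | wseq S Γ Δ (x : G) α = none} with hT
    have hne : T.Nonempty := ⟨α', hα'⟩
    set α₀ := Ordinal.lt_wf.min T hne with hα₀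
    have hmem : wseq S Γ Δ (x : G) α₀ = none := Ordinal.lt_wf.min_mem T hne
    have hpred : ∀ β, β < α₀ → (wseq S Γ Δ (x : G) β).isSome := by
      intro β hβ
      by_contra hn
      have : wseq S Γ Δ (x : G) β = none := by
        rcases hw : wseq S Γ Δ (x : G) β with _ | q
        · rfl
        · rw [hw] at hn; simp at hn
      exact Ordinal.lt_wf.not_lt_min T this hβ
    have hmem2 : wseq S Γ Δ (y : G) α₀ = none := (hweq α₀).symm.trans hmem
    have hpred2 : ∀ β, β < α₀ → (wseq S Γ Δ (y : G) β).isSome := by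
      intro β hβ
      rw [← hweq β]
      exact hpred β hβ
    have e1 : rep (Sset S Γ Δ (x : G) α₀) = (x : G) := rep_eq HW x.2 hmem hpred
    have e2 : rep (Sset S Γ Δ (y : G) α₀) = (y : G) := rep_eq HW y.2 hmem2 hpred2
    have hSeq : Sset S Γ Δ (x : G) α₀ = Sset S Γ Δ (y : G) α₀ :=
      Sset_congr α₀ (fun β _ => hweq β)
    apply Subtype.ext
    rw [← e1, ← e2, hSeq]
  have hcard := Cardinal.mk_le_of_injective hinj
  -- cardinal arithmetic
  have h2k0 : (2 : Cardinal.{u}) ^ k ≠ 0 := by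
    exact Cardinal.power_ne_zero _ two_ne_zero
  have hpow : ((2 : Cardinal.{u}) ^ k) ^ k = 2 ^ k := by
    rw [← Cardinal.power_mul, Cardinal.mul_eq_self hk]
  have hb1 : #(↥Δ → Option ↥Γ) ≤ 2 ^ k := by
    rw [← Cardinal.power_def]
    calc #(Option ↥Γ) ^ #↥Δ ≤ (2 ^ k) ^ #↥Δ := by
          apply Cardinal.power_le_power_right
          rw [Cardinal.mk_option]
          calc #↥Γ + 1 ≤ k + 1 := by gcongr
            _ = k := Cardinal.add_one_eq hk
            _ ≤ 2 ^ k := (Cardinal.cantor k).le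
      _ ≤ (2 ^ k) ^ k := Cardinal.power_le_power_left h2k0 hΔ
      _ = 2 ^ k := hpow
  have hb2 : #(↥Δ → ↥Δ → Prop) ≤ 2 ^ k := by
    have e1 : #(↥Δ → ↥Δ → Prop) = #(Set ↥Δ) ^ #↥Δ := (Cardinal.power_def _ _).symm
    rw [e1, Cardinal.mk_set]
    calc ((2 : Cardinal.{u}) ^ #↥Δ) ^ #↥Δ ≤ (2 ^ k) ^ #↥Δ := by
          apply Cardinal.power_le_power_right
          exact Cardinal.power_le_power_left two_ne_zero hΔ
      _ ≤ (2 ^ k) ^ k := Cardinal.power_le_power_left h2k0 hΔ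
      _ = 2 ^ k := hpow
  calc Cardinal.mk S ≤ #((↥Δ → Option ↥Γ) × (↥Δ → ↥Δ → Prop)) := hcard
    _ = #(↥Δ → Option ↥Γ) * #(↥Δ → ↥Δ → Prop) := by
        rw [Cardinal.mk_prod, Cardinal.lift_id, Cardinal.lift_id]
    _ ≤ (2 ^ k) * (2 ^ k) := mul_le_mul' hb1 hb2
    _ = 2 ^ k := Cardinal.mul_eq_self (hk.trans (Cardinal.cantor k).le)

end

end CPaux

theorem chatzidakis_pappas {G Ω : Type u} [Group G] [MulAction G Ω]
    (k : Cardinal.{u}) (hk : Cardinal.aleph0 ≤ k)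
    (Γ Δ : Set Ω) (hΓ : Cardinal.mk Γ ≤ k) (hΔ : Cardinal.mk Δ ≤ k)
    (S : Set G) (hS : 2 ^ k < Cardinal.mk S) :
    ∃ g ∈ S, ∃ h ∈ S, g ≠ h ∧
      ((h⁻¹ * g) • Γ) ∩ Δ ⊆ {ω : Ω | (h⁻¹ * g) • ω = ω} := by
  by_contra hcon
  push_neg at hcon
  have HW : ∀ g ∈ S, ∀ h' ∈ S, g ≠ h' → ∃ p : ↥Γ × ↥Δ,
      ((p.1 : Ω) ≠ (p.2 : Ω) ∧ g • (p.1 : Ω) = h' • (p.2 : Ω)) := by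
    intro g hg h' hh' hne
    have hsub := hcon g hg h' hh' hne
    rw [Set.not_subset] at hsub
    obtain ⟨ω, hω, hωfix⟩ := hsub
    obtain ⟨hω1, hω2⟩ := hω
    obtain ⟨γ, hγ, hγω0⟩ := hω1
    have hγω : (h'⁻¹ * g) • γ = ω := hγω0
    have hωfix' : ¬((h'⁻¹ * g) • ω = ω) := hωfix
    refine ⟨(⟨γ, hγ⟩, ⟨ω, hω2⟩), ?_, ?_⟩
    · intro hco
      apply hωfix'
      have : γ = ω := hco
      rw [← this]
      exact hγω.trans this.symm
    · show g • γ = h' • ω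
      rw [mul_smul] at hγω
      exact (inv_smul_eq_iff.mp hγω)
  exact absurd (CPaux.key k hk Γ Δ hΓ hΔ S HW) (not_le.mpr hS)
end

section
/- Every permutation of an arbitrary set is a product of two involutions whose supports lie inside its own support: for every f ∈ Sym(Ω) there exist t₁, t₂ ∈ Sym(Ω) with t₁ * t₁ = 1, t₂ * t₂ = 1, f = t₁ * t₂, and every point fixed by f is fixed by both t₁ and t₂. -/
open MulAction

section Aux
variable {Ω : Type*}

private lemma zpa (f : Equiv.Perm Ω) (a b : ℤ) (x : Ω) :
    (f ^ a) ((f ^ b) x) = (f ^ (a + b)) x := by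
  rw [← Equiv.Perm.mul_apply, ← zpow_add]

private noncomputable def repPt (f : Equiv.Perm Ω) (x : Ω) : Ω :=
  (Quotient.mk (orbitRel (Subgroup.zpowers f) Ω) x).out

private lemma repPt_mem (f : Equiv.Perm Ω) (x : Ω) :
    repPt f x ∈ orbit (Subgroup.zpowers f) x := by
  have h := @Quotient.mk_out _ (orbitRel (Subgroup.zpowers f) Ω) x
  rw [orbitRel_apply] at h
  exact h

private lemma repPt_spec (f : Equiv.Perm Ω) (x : Ω) : ∃ k : ℤ, (f ^ k) (repPt f x) = x := by
  obtain ⟨⟨g, m, hm⟩, hg⟩ := repPt_mem f x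
  have h1 : (f ^ m) x = repPt f x := by simpa [← hm] using hg
  refine ⟨-m, ?_⟩
  rw [← h1, zpa]
  simp

private lemma repPt_zpow (f : Equiv.Perm Ω) (x : Ω) (k : ℤ) :
    repPt f ((f ^ k) x) = repPt f x := by
  unfold repPt
  congr 1
  exact Quotient.sound ⟨⟨f ^ k, ⟨k, rfl⟩⟩, rfl⟩

private lemma eq_neg (f : Equiv.Perm Ω) (b : Ω) {a c : ℤ} (h : (f ^ a) b = (f ^ c) b) :
    (f ^ (-a)) b = (f ^ (-c)) b := by
  have h1 : (f ^ (a - c)) b = b := by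
    have := congrArg (⇑(f ^ (-c))) h
    rw [zpa, zpa] at this
    simpa [add_comm, sub_eq_add_neg] using this
  have h2 : (f ^ (c - a)) b = b := by
    have := congrArg (⇑(f ^ (c - a))) h1
    rw [zpa] at this
    simpa using this.symm
  calc (f ^ (-a)) b = (f ^ (-c)) ((f ^ (c - a)) b) := by rw [zpa]; ring_nf
    _ = (f ^ (-c)) b := by rw [h2]

private noncomputable def kOf (f : Equiv.Perm Ω) (x : Ω) : ℤ := (repPt_spec f x).choose

private lemma kOf_spec (f : Equiv.Perm Ω) (x : Ω) : (f ^ kOf f x) (repPt f x) = x :=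
  (repPt_spec f x).choose_spec

private noncomputable def t2fun (f : Equiv.Perm Ω) (x : Ω) : Ω :=
  (f ^ (-(kOf f x))) (repPt f x)

private lemma t2fun_eq (f : Equiv.Perm Ω) (b x : Ω) (k : ℤ)
    (hb : repPt f x = b) (hk : (f ^ k) b = x) : t2fun f x = (f ^ (-k)) b := by
  unfold t2fun
  rw [hb]
  apply eq_neg
  rw [hk]
  rw [← hb]
  exact kOf_spec f x

private lemma repPt_idem (f : Equiv.Perm Ω) (x : Ω) : repPt f (repPt f x) = repPt f x := by
  unfold repPt
  congr 1
  exact Quotient.out_eq _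

private lemma repPt_t2fun (f : Equiv.Perm Ω) (x : Ω) : repPt f (t2fun f x) = repPt f x := by
  unfold t2fun
  rw [repPt_zpow, repPt_idem]

private lemma t2fun_invol (f : Equiv.Perm Ω) : Function.Involutive (t2fun f) := by
  intro x
  have hkx : (f ^ kOf f x) (repPt f x) = x := kOf_spec f x
  have h1 : t2fun f x = (f ^ (-(kOf f x))) (repPt f x) := rfl
  rw [t2fun_eq f (repPt f x) (t2fun f x) (-(kOf f x)) (repPt_t2fun f x) h1.symm]
  simpa using hkx

private lemma t2fun_f (f : Equiv.Perm Ω) (x : Ω) :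
    t2fun f (f x) = f⁻¹ (t2fun f x) := by
  have hkx : (f ^ kOf f x) (repPt f x) = x := kOf_spec f x
  have hrep : repPt f (f x) = repPt f x := by
    have h : f x = (f ^ (1:ℤ)) x := by simp
    rw [h, repPt_zpow]
  have hfx : (f ^ (kOf f x + 1)) (repPt f x) = f x := by
    conv_rhs => rw [← hkx]
    have h2 : f ((f ^ kOf f x) (repPt f x)) = (f ^ (1:ℤ)) ((f ^ kOf f x) (repPt f x)) := by simp
    rw [h2, zpa, add_comm]
  rw [t2fun_eq f (repPt f x) (f x) (kOf f x + 1) hrep hfx]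
  show _ = f⁻¹ (t2fun f x)
  unfold t2fun
  rw [show (f⁻¹ : Equiv.Perm Ω) = f ^ (-1 : ℤ) by simp, zpa]
  ring_nf

private lemma t2fun_fixed (f : Equiv.Perm Ω) (x : Ω) (hx : f x = x) : t2fun f x = x := by
  have hz : ∀ k : ℤ, (f ^ k) x = x := by
    intro k
    induction k using Int.induction_on with
    | zero => simp
    | succ n ih =>
        rw [add_comm, ← zpa f 1 n, ih]
        simpa using hx
    | pred n ih =>
        have h1 : f x = x := hx
        have hfi : f⁻¹ x = x := by conv_lhs => rw [← h1]; simp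
        rw [sub_eq_add_neg, ← zpa f (-(n:ℤ)) (-1)]
        simpa [hfi] using ih
  have hrep : repPt f x = x := by
    obtain ⟨⟨g, m, hm⟩, hg⟩ := repPt_mem f x
    have h1 : (f ^ m) x = repPt f x := by simpa [← hm] using hg
    rw [← h1, hz m]
  rw [t2fun_eq f x x 0 hrep (by simp)]
  simp

end Aux

theorem perm_eq_mul_two_involutions {Ω : Type*} (f : Equiv.Perm Ω) :
    ∃ t₁ t₂ : Equiv.Perm Ω, t₁ * t₁ = 1 ∧ t₂ * t₂ = 1 ∧ f = t₁ * t₂ ∧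
      ∀ x : Ω, f x = x → t₁ x = x ∧ t₂ x = x := by
  classical
  let t₂ : Equiv.Perm Ω := (t2fun_invol f).toPerm
  have ht₂app : ∀ x, t₂ x = t2fun f x := fun _ => rfl
  have ht₂ : t₂ * t₂ = 1 := by
    ext x; simp [ht₂app, Equiv.Perm.mul_apply, (t2fun_invol f) x]
  refine ⟨f * t₂, t₂, ?_, ht₂, ?_, ?_⟩
  · ext x
    simp only [Equiv.Perm.mul_apply, ht₂app, Equiv.Perm.one_apply]
    rw [t2fun_f]
    simp [(t2fun_invol f) x]
  · ext x
    simp [Equiv.Perm.mul_apply, ht₂app, (t2fun_invol f) x]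
  · intro x hx
    have h2 := t2fun_fixed f x hx
    exact ⟨by simp [Equiv.Perm.mul_apply, ht₂app, h2, hx], h2⟩
end

section
/- Let Ω be an infinite set. Then Sym(Ω) contains a free subgroup of rank 2^|Ω|: there exists an injective group homomorphism from the free group on the type Set Ω (an index set of cardinality 2^|Ω|) into Sym(Ω). -/
open Cardinal Function

/-- `FreeGroup.map` only depends on the values of the function on letters of the word. -/
private lemma freeGroup_map_congr {α β : Type*} [DecidableEq α] (f g : α → β) (x : FreeGroup α)
    (h : ∀ a ∈ x.toWord.map Prod.fst, f a = g a) :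
    FreeGroup.map f x = FreeGroup.map g x := by
  conv_lhs => rw [← FreeGroup.mk_toWord (x := x)]
  conv_rhs => rw [← FreeGroup.mk_toWord (x := x)]
  rw [FreeGroup.map.mk, FreeGroup.map.mk]
  congr 1
  apply List.map_congr_left
  intro a ha
  have := h a.1 (List.mem_map.2 ⟨a, ha, rfl⟩)
  simp [this]

/-- `FreeGroup.map` of an injective map (on a nonempty type) is injective. -/
private lemma freeGroup_map_injective {α β : Type*} [DecidableEq α] [Nonempty α] {f : α → β}
    (hf : Function.Injective f) : Function.Injective (FreeGroup.map f) := by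
  obtain ⟨g, hg⟩ := hf.hasLeftInverse
  have : Function.LeftInverse (FreeGroup.map g) (FreeGroup.map f) := fun x => by
    rw [FreeGroup.map.comp]
    calc FreeGroup.map (g ∘ f) x = FreeGroup.map id x := by
          apply freeGroup_map_congr; intro a _; exact hg a
      _ = x := FreeGroup.map.id x
  exact this.injective

/-- Extend a finite partial injection on an infinite type to a global injection. -/
private lemma exists_injective_extension {β : Type*} [Infinite β] (f : β → β) (L : Finset β)
    (hf : Set.InjOn f (L : Set β)) :
    ∃ g : β → β, Function.Injective g ∧ ∀ x ∈ L, g x = f x := by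
  classical
  have h1 : #(↥((L : Set β)ᶜ)) ≤ #(↥((f '' (L : Set β))ᶜ)) := by
    rw [Cardinal.mk_compl_of_infinite _ (by
      exact (Cardinal.lt_aleph0_of_finite _).trans_le (Cardinal.aleph0_le_mk β))]
    rw [Cardinal.mk_compl_of_infinite _ (by
      have : (f '' (L : Set β)).Finite := (L.finite_toSet).image f
      have := this.lt_aleph0
      exact this.trans_le (Cardinal.aleph0_le_mk β))]
  obtain ⟨e⟩ := Cardinal.le_def _ _ |>.1 h1
  refine ⟨fun x => if hx : x ∈ L then f x else (e ⟨x, hx⟩ : β), ?_, fun x hx => by simp [hx]⟩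
  intro a b hab
  by_cases ha : a ∈ L <;> by_cases hb : b ∈ L <;> simp only [ha, hb, dif_pos, dif_neg,
    not_false_iff] at hab
  · exact hf ha hb hab
  · exact absurd (hab ▸ Set.mem_image_of_mem f ha) (e ⟨b, hb⟩).2
  · exact absurd (hab ▸ Set.mem_image_of_mem f hb) (e ⟨a, ha⟩).2
  · exact congrArg Subtype.val (e.injective (Subtype.ext hab))

/-- A finite family of sets is separated by some finite set of points. -/
private lemma exists_separating_finset {Ω : Type*} (L : Finset (Set Ω)) :
    ∃ K : Finset Ω, ∀ S ∈ L, ∀ T ∈ L, (K : Set Ω) ∩ S = (K : Set Ω) ∩ T → S = T := by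
  classical
  induction L using Finset.induction with
  | empty => exact ⟨∅, by simp⟩
  | @insert S L hS ih =>
    obtain ⟨K, hK⟩ := ih
    -- for each T in L with T ≠ S, pick a separating point
    have hsep : ∀ T ∈ L, ∃ K' : Finset Ω, ¬ ((K' : Set Ω) ∩ S = (K' : Set Ω) ∩ T) ∨ S = T := by
      intro T hT
      by_cases hST : S = T
      · exact ⟨∅, Or.inr hST⟩
      · obtain ⟨x, hx⟩ : (symmDiff S T).Nonempty := Set.symmDiff_nonempty.2 hST
        rw [Set.mem_symmDiff] at hx
        refine ⟨{x}, Or.inl fun h => ?_⟩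
        have := Set.ext_iff.1 h x
        simp only [Finset.coe_singleton, Set.mem_inter_iff, Set.mem_singleton_iff,
          true_and] at this
        rcases hx with hx | hx
        · exact hx.2 (this.1 hx.1)
        · exact hx.2 (this.2 hx.1)
    choose Ksep hKsep using hsep
    refine ⟨K ∪ L.attach.biUnion (fun T => Ksep T.1 T.2), ?_⟩
    intro A hA B hB hAB
    have key : ∀ T (hT : T ∈ L),
        ((K ∪ L.attach.biUnion fun T => Ksep T.1 T.2 : Finset Ω) : Set Ω) ∩ S
          = ((K ∪ L.attach.biUnion fun T => Ksep T.1 T.2 : Finset Ω) : Set Ω) ∩ T → S = T := by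
      intro T hT h
      rcases hKsep T hT with hne | heq
      · exfalso
        apply hne
        have hsub : ((Ksep T hT : Finset Ω) : Set Ω) ⊆
            ((K ∪ L.attach.biUnion fun T => Ksep T.1 T.2 : Finset Ω) : Set Ω) := by
          intro x hx
          simp only [Finset.coe_union, Set.mem_union, Finset.coe_biUnion, Finset.mem_coe,
            Finset.mem_attach, Set.iUnion_true, Set.mem_iUnion]
          exact Or.inr ⟨⟨T, hT⟩, hx⟩
        ext x
        constructor
        · intro hx
          have : x ∈ ((K ∪ L.attach.biUnion fun T => Ksep T.1 T.2 : Finset Ω) : Set Ω) ∩ S :=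
            ⟨hsub hx.1, hx.2⟩
          rw [h] at this
          exact ⟨hx.1, this.2⟩
        · intro hx
          have : x ∈ ((K ∪ L.attach.biUnion fun T => Ksep T.1 T.2 : Finset Ω) : Set Ω) ∩ T :=
            ⟨hsub hx.1, hx.2⟩
          rw [← h] at this
          exact ⟨hx.1, this.2⟩
      · exact heq
    have hKsub : ∀ {A B : Set Ω},
        ((K ∪ L.attach.biUnion fun T => Ksep T.1 T.2 : Finset Ω) : Set Ω) ∩ A
          = ((K ∪ L.attach.biUnion fun T => Ksep T.1 T.2 : Finset Ω) : Set Ω) ∩ B →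
        (K : Set Ω) ∩ A = (K : Set Ω) ∩ B := by
      intro A B h
      have hsub : ((K : Finset Ω) : Set Ω) ⊆
          ((K ∪ L.attach.biUnion fun T => Ksep T.1 T.2 : Finset Ω) : Set Ω) := by
        intro x hx
        simp only [Finset.coe_union, Set.mem_union]
        exact Or.inl hx
      ext x
      constructor
      · intro hx
        have : x ∈ _ ∩ A := ⟨hsub hx.1, hx.2⟩
        rw [h] at this
        exact ⟨hx.1, this.2⟩
      · intro hx
        have : x ∈ _ ∩ B := ⟨hsub hx.1, hx.2⟩
        rw [← h] at this
        exact ⟨hx.1, this.2⟩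
    simp only [Finset.mem_insert] at hA hB
    rcases hA with rfl | hA <;> rcases hB with rfl | hB
    · rfl
    · exact key B hB hAB
    · exact (key A hA hAB.symm).symm
    · exact hK A hA B hB (hKsub hAB)

theorem free_subgroup_of_rank_continuum {Ω : Type*} [Infinite Ω] :
    ∃ φ : FreeGroup (Set Ω) →* Equiv.Perm Ω, Function.Injective φ := by
  classical
  -- The per-component map into the free group on finite sets
  set m : Finset Ω → Set Ω → Finset Ω := fun K S => K.filter (· ∈ S) with hm
  -- Step 1: the product map into ∀ K : Finset Ω, FreeGroup (Finset Ω) is injective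
  let Φ : FreeGroup (Set Ω) →* (∀ _ : Finset Ω, FreeGroup (Finset Ω)) :=
    MonoidHom.mk' (fun x K => FreeGroup.map (m K) x)
      (fun a b => by funext K; simp)
  have hΦ : Function.Injective Φ := by
    rw [injective_iff_map_eq_one]
    intro x hx
    by_contra hxne
    -- letters of x
    set L : Finset (Set Ω) := (x.toWord.map Prod.fst).toFinset with hL
    obtain ⟨K, hK⟩ := exists_separating_finset L
    -- coercion to sets
    have hcomp : ∀ S : Set Ω, ((m K S : Finset Ω) : Set Ω) = (K : Set Ω) ∩ S := by
      intro S; ext y; simp [hm, Set.mem_inter_iff, and_comm]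
    -- the component at K is 1
    have hxK : FreeGroup.map (m K) x = 1 := congrFun hx K
    -- push into FreeGroup (Set Ω)
    have h2 : FreeGroup.map (fun S : Set Ω => ((m K S : Finset Ω) : Set Ω)) x = 1 := by
      have hc := FreeGroup.map.comp (m K) (fun F : Finset Ω => (F : Set Ω)) x
      rw [hxK, map_one] at hc
      simpa [Function.comp_def] using hc.symm
    -- replace by a globally injective map
    have hinjOn : Set.InjOn (fun S : Set Ω => (K : Set Ω) ∩ S) (L : Set (Set Ω)) := by
      intro A hA B hB hAB
      exact hK A (by exact_mod_cast hA) B (by exact_mod_cast hB) hAB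
    have : Infinite (Set Ω) := Infinite.of_injective (fun w : Ω => ({w} : Set Ω))
      (fun a b h => by simpa using Set.ext_iff.1 h a)
    obtain ⟨g, hg, hgL⟩ := exists_injective_extension (fun S : Set Ω => (K : Set Ω) ∩ S) L hinjOn
    have h3 : FreeGroup.map g x = 1 := by
      rw [freeGroup_map_congr g (fun S : Set Ω => (K : Set Ω) ∩ S) x
        (fun a ha => hgL a (by simpa [hL] using ha))]
      calc FreeGroup.map (fun S : Set Ω => (K : Set Ω) ∩ S) x
          = FreeGroup.map (fun S : Set Ω => ((m K S : Finset Ω) : Set Ω)) x := by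
            apply freeGroup_map_congr; intro a _; exact (hcomp a).symm
        _ = 1 := h2
    exact hxne (freeGroup_map_injective hg (by rw [h3]; simp))
  -- Step 2: embed the product into Perm Ω
  -- Cayley embedding of each FreeGroup (Finset Ω) into its permutation group
  let cayley : FreeGroup (Finset Ω) →* Equiv.Perm (FreeGroup (Finset Ω)) :=
    MulAction.toPermHom _ _
  have hcayley : Function.Injective cayley := MulAction.toPerm_injective
  let Ψ : (∀ _ : Finset Ω, FreeGroup (Finset Ω)) →*
      (∀ _ : Finset Ω, Equiv.Perm (FreeGroup (Finset Ω))) :=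
    MonoidHom.mk' (fun f K => cayley (f K)) (fun a b => by funext K; simp)
  have hΨ : Function.Injective Ψ := by
    intro a b h
    funext K
    have hK : cayley (a K) = cayley (b K) := congrFun h K
    exact hcayley hK
  -- Sigma action
  let Θ := Equiv.Perm.sigmaCongrRightHom (fun _ : Finset Ω => FreeGroup (Finset Ω))
  have hΘ := Equiv.Perm.sigmaCongrRightHom_injective
    (β := fun _ : Finset Ω => FreeGroup (Finset Ω))
  -- embedding of the sigma type into Ω
  have hcard : #(Σ _ : Finset Ω, FreeGroup (Finset Ω)) ≤ #Ω := by
    rw [Cardinal.mk_sigma]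
    simp only [Cardinal.sum_const, Cardinal.lift_id]
    have h1 : #(Finset Ω) = #Ω := Cardinal.mk_finset_of_infinite Ω
    have h2 : #(FreeGroup (Finset Ω)) = #Ω := by
      rw [Cardinal.mk_freeGroup, h1]
      exact max_eq_left (Cardinal.aleph0_le_mk Ω)
    rw [h1, h2, Cardinal.mul_eq_self (Cardinal.aleph0_le_mk Ω)]
  obtain ⟨e⟩ := Cardinal.le_def _ _ |>.1 hcard
  let ι := Equiv.Perm.viaEmbeddingHom e
  have hι := Equiv.Perm.viaEmbeddingHom_injective e
  exact ⟨ι.comp (Θ.comp (Ψ.comp Φ)), hι.comp (hΘ.comp (hΨ.comp hΦ))⟩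
end

section
/- (Combinatorial lemma) Let I and A be sets with A countably infinite and I infinite (so ℵ₀ = |A| ≤ |I|). Then there exists a set B of functions from I to A such that |B| = 2^{|I|} and for every finite set of pairwise distinct members f₁, …, f_r of B there exists i ∈ I such that f₁(i), …, f_r(i) are pairwise distinct; equivalently, for every finite subset s of B there is i ∈ I such that evaluation at i is injective on s. -/
universe u

theorem combinatorial_lemma {I A : Type u} [Countable A] [Infinite A] [Infinite I] :
    ∃ B : Set (I → A), Cardinal.mk B = 2 ^ Cardinal.mk I ∧
      ∀ s : Finset (I → A), (↑s : Set (I → A)) ⊆ B →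
        ∃ i : I, Set.InjOn (fun f : I → A => f i) ↑s := by
  classical
  obtain ⟨eA⟩ : Nonempty (A ≃ ℕ) := nonempty_equiv_of_countable
  obtain ⟨eI⟩ : Nonempty (I ≃ Finset I) :=
    Cardinal.eq.mp (Cardinal.mk_finset_of_infinite I).symm
  set G : Set I → Finset I → ℕ := fun X s =>
    ((Fintype.equivFin (Finset {x // x ∈ s}))
      (s.attach.filter (fun x => (x : I) ∈ X))).val with hG
  set F : Set I → I → A := fun X i => eA.symm (G X (eI i)) with hF
  have Gkey : ∀ (X Y : Set I) (s : Finset I), G X s = G Y s →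
      ∀ i ∈ s, (i ∈ X ↔ i ∈ Y) := by
    intro X Y s h i hi
    have h2 : (Fintype.equivFin (Finset {x // x ∈ s}))
        (s.attach.filter (fun x => (x : I) ∈ X)) =
        (Fintype.equivFin (Finset {x // x ∈ s}))
        (s.attach.filter (fun x => (x : I) ∈ Y)) := Fin.val_injective h
    have h3 := (Fintype.equivFin _).injective h2
    have h4 := Finset.ext_iff.mp h3 ⟨i, hi⟩
    simpa using h4
  have Fkey : ∀ (X Y : Set I) (i : I), F X i = F Y i →
      ∀ j ∈ eI i, (j ∈ X ↔ j ∈ Y) := by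
    intro X Y i h
    exact Gkey X Y (eI i) (eA.symm.injective h)
  have Finj : Function.Injective F := by
    intro X Y h
    ext j
    have h1 := Fkey X Y (eI.symm {j}) (congrFun h _) j
    simp only [Equiv.apply_symm_apply, Finset.mem_singleton] at h1
    exact h1 trivial
  refine ⟨Set.range F, ?_, ?_⟩
  · rw [Cardinal.mk_range_eq _ Finj, Cardinal.mk_set]
  · intro t ht
    set X' : (I → A) → Set I := fun f =>
      if h : f ∈ Set.range F then h.choose else ∅ with hX'
    have hX'spec : ∀ f ∈ Set.range F, F (X' f) = f := by
      intro f hf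
      simp only [hX', dif_pos hf]
      exact hf.choose_spec
    have hdiff : ∀ X Y : Set I, X ≠ Y → ∃ i, ¬(i ∈ X ↔ i ∈ Y) := by
      intro X Y hXY
      by_contra hc
      push_neg at hc
      exact hXY (Set.ext fun i => hc i)
    set pt : (I → A) → (I → A) → I := fun f g =>
      if h : X' f ≠ X' g then (hdiff _ _ h).choose else Classical.arbitrary I
      with hpt
    have hptspec : ∀ f g, X' f ≠ X' g → ¬(pt f g ∈ X' f ↔ pt f g ∈ X' g) := by
      intro f g h
      simp only [hpt, dif_pos h]
      exact (hdiff _ _ h).choose_spec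
    set S : Finset I := t.biUnion (fun f => t.image (pt f)) with hS
    refine ⟨eI.symm S, ?_⟩
    intro f hf g hg heq
    by_contra hne
    have hfB : f ∈ Set.range F := ht hf
    have hgB : g ∈ Set.range F := ht hg
    have hXne : X' f ≠ X' g := by
      intro h
      apply hne
      rw [← hX'spec f hfB, ← hX'spec g hgB, h]
    have hmem : pt f g ∈ S := by
      rw [hS]
      refine Finset.mem_biUnion.mpr ⟨f, hf, Finset.mem_image.mpr ⟨g, hg, rfl⟩⟩
    have heq' : F (X' f) (eI.symm S) = F (X' g) (eI.symm S) := by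
      rw [hX'spec f hfB, hX'spec g hgB]; exact heq
    have := Fkey _ _ _ heq' (pt f g)
    rw [Equiv.apply_symm_apply] at this
    exact hptspec f g hXne (this hmem)
end

section
/- Let Ω be an infinite set. Then there exists an injective group homomorphism φ from the free group on the type Set Ω into Sym(Ω) whose image is a highly transitive subgroup: for every natural number k and all injective tuples a, b : Fin k → Ω there exists an element w of the free group such that φ(w)(a i) = b i for every i. -/
open Function Equiv Set
open scoped Classical

/-- finitary permutation mapping one injective tuple to another. -/
lemma exists_finitary_perm (X : Type*) :
    ∀ (k : ℕ) (u v : Fin k → X), Function.Injective u → Function.Injective v →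
      ∃ c : Equiv.Perm X, (∀ i, c (u i) = v i) ∧ {x | c x ≠ x}.Finite := by
  intro k
  induction k with
  | zero => exact fun u v _ _ => ⟨1, fun i => i.elim0, by simp⟩
  | succ k ih =>
    intro u v hu hv
    obtain ⟨c', h1, h2⟩ := ih (u ∘ Fin.succ) (v ∘ Fin.succ)
      (hu.comp (Fin.succ_injective _)) (hv.comp (Fin.succ_injective _))
    classical
    refine ⟨Equiv.swap (c' (u 0)) (v 0) * c', ?_, ?_⟩
    · intro i
      refine Fin.cases ?_ ?_ i
      · simp [Equiv.swap_apply_left]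
      · intro j
        have hj : c' (u j.succ) = v j.succ := h1 j
        have h3 : v j.succ ≠ c' (u 0) := by
          intro h
          have := c'.injective (hj.trans h)
          exact Fin.succ_ne_zero j (hu this)
        have h4 : v j.succ ≠ v 0 := fun h => Fin.succ_ne_zero j (hv h)
        simp [Equiv.Perm.mul_apply, hj, Equiv.swap_apply_of_ne_of_ne h3 h4]
    · apply Set.Finite.subset (h2.union ((Set.finite_singleton (c' (u 0))).union (Set.finite_singleton (v 0))))
      intro x hx
      by_cases hcx : c' x = x
      · simp only [mem_setOf_eq, Equiv.Perm.mul_apply, hcx] at hx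
        rcases eq_or_ne x (c' (u 0)) with h | h
        · exact Or.inr (Or.inl (by simp [h]))
        rcases eq_or_ne x (v 0) with h' | h'
        · exact Or.inr (Or.inr (by simp [h']))
        exact absurd (Equiv.swap_apply_of_ne_of_ne h h') hx
      · exact Or.inl hcx

lemma mk_freeGroup_eq (α : Type*) [Infinite α] : Cardinal.mk (FreeGroup α) = Cardinal.mk α := by
  classical
  apply le_antisymm
  · calc Cardinal.mk (FreeGroup α) ≤ Cardinal.mk (List (α × Bool)) :=
          Cardinal.mk_le_of_injective FreeGroup.toWord_injective
      _ = Cardinal.mk (α × Bool) := Cardinal.mk_list_eq_mk _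
      _ = Cardinal.mk (α ⊕ α) := Cardinal.mk_congr ((Equiv.prodComm _ _).trans (Equiv.boolProdEquivSum α))
      _ = Cardinal.mk α := by
          rw [Cardinal.mk_sum]
          simp [Cardinal.add_eq_self (Cardinal.aleph0_le_mk α)]
  · exact Cardinal.mk_le_of_injective FreeGroup.of_injective


namespace HTF

variable {Ω : Type*} [Infinite Ω]

abbrev XX (Ω : Type*) := Finset Ω × FreeGroup (Finset Ω)

lemma mk_XX_eq : Cardinal.mk (XX Ω) = Cardinal.mk Ω := by
  have hJ : Cardinal.mk (Finset Ω) = Cardinal.mk Ω := Cardinal.mk_finset_of_infinite Ω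
  rw [Cardinal.mk_prod, Cardinal.lift_id, Cardinal.lift_id, mk_freeGroup_eq, hJ,
    Cardinal.mul_eq_self (Cardinal.aleph0_le_mk Ω)]

lemma exists_equiv_XX : Nonempty (XX Ω ≃ Ω) := Cardinal.eq.1 mk_XX_eq

-- task embedding
lemma exists_task_embedding :
    Nonempty ((Σ k : ℕ, (Fin k → XX Ω) × (Fin k → XX Ω)) ↪ Set Ω) := by
  rw [← Cardinal.le_def]
  have h1 : Cardinal.mk (Σ k : ℕ, (Fin k → XX Ω) × (Fin k → XX Ω))
      ≤ Cardinal.mk (List (XX Ω) × List (XX Ω)) := by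
    apply Cardinal.mk_le_of_injective (f := fun t => (List.ofFn t.2.1, List.ofFn t.2.2))
    rintro ⟨k, a, b⟩ ⟨k', a', b'⟩ h
    simp only [Prod.mk.injEq] at h
    obtain ⟨h1, h2⟩ := h
    have hk : k = k' := by
      have := congrArg List.length h1
      simpa using this
    subst hk
    simp only [List.ofFn_inj] at h1 h2
    simp [h1, h2]
  have h2 : Cardinal.mk (List (XX Ω) × List (XX Ω)) = Cardinal.mk Ω := by
    have : Cardinal.mk (List (XX Ω)) = Cardinal.mk Ω := by
      rw [Cardinal.mk_list_eq_mk, mk_XX_eq]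
    rw [Cardinal.mk_prod]
    simp only [Cardinal.lift_id]
    rw [this, Cardinal.mul_eq_self (Cardinal.aleph0_le_mk Ω)]
  calc _ ≤ Cardinal.mk Ω := h1.trans h2.le
    _ ≤ Cardinal.mk (Set Ω) := by
        rw [Cardinal.mk_set]
        exact (Cardinal.cantor _).le


noncomputable def tr (s : Finset Ω) (A : Set Ω) : Finset Ω :=
  s.filter (fun y => y ∈ A)

lemma mem_tr {s : Finset Ω} {A : Set Ω} {y : Ω} : y ∈ tr s A ↔ y ∈ s ∧ y ∈ A := by
  simp [tr]

noncomputable def lam (A : Set Ω) : Equiv.Perm (XX Ω) :=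
  Equiv.prodShear (Equiv.refl _) (fun s => Equiv.mulLeft (FreeGroup.of (tr s A)))

lemma lam_apply (A : Set Ω) (s : Finset Ω) (w : FreeGroup (Finset Ω)) :
    lam A (s, w) = (s, FreeGroup.of (tr s A) * w) := rfl

abbrev Task (Ω : Type*) := Σ k : ℕ, (Fin k → XX Ω) × (Fin k → XX Ω)

variable (assign : Task Ω ↪ Set Ω)

noncomputable def taskPerm (t : Task Ω) (A : Set Ω) : Equiv.Perm (XX Ω) :=
  if h2 : Function.Injective t.2.1 ∧ Function.Injective t.2.2 then
    (exists_finitary_perm (XX Ω) t.1 (fun i => lam A (t.2.1 i)) t.2.2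
      ((lam A).injective.comp h2.1) h2.2).choose
  else 1

lemma taskPerm_support (t : Task Ω) (A : Set Ω) : {x | taskPerm t A x ≠ x}.Finite := by
  unfold taskPerm
  split_ifs with h2
  · exact (exists_finitary_perm (XX Ω) t.1 (fun i => lam A (t.2.1 i)) t.2.2
      ((lam A).injective.comp h2.1) h2.2).choose_spec.2
  · simp

lemma taskPerm_spec (t : Task Ω) (A : Set Ω) (h1 : Function.Injective t.2.1)
    (h2 : Function.Injective t.2.2) : ∀ i, taskPerm t A (lam A (t.2.1 i)) = t.2.2 i := by
  unfold taskPerm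
  rw [dif_pos ⟨h1, h2⟩]
  exact (exists_finitary_perm (XX Ω) t.1 (fun i => lam A (t.2.1 i)) t.2.2
    ((lam A).injective.comp h1) h2).choose_spec.1

noncomputable def corr (A : Set Ω) : Equiv.Perm (XX Ω) :=
  if h : ∃ t, assign t = A then taskPerm h.choose A else 1

lemma corr_support (A : Set Ω) : {x | corr assign A x ≠ x}.Finite := by
  unfold corr
  split_ifs with h
  · exact taskPerm_support _ _
  · simp

lemma corr_spec (t : Task Ω) (h1 : Function.Injective t.2.1) (h2 : Function.Injective t.2.2) :
    ∀ i, corr assign (assign t) (lam (assign t) (t.2.1 i)) = t.2.2 i := by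
  intro i
  have hex : ∃ t', assign t' = assign t := ⟨t, rfl⟩
  have hch : hex.choose = t := assign.injective hex.choose_spec
  unfold corr
  rw [dif_pos hex, hch]
  exact taskPerm_spec t (assign t) h1 h2 i

noncomputable def phiX : FreeGroup (Set Ω) →* Equiv.Perm (XX Ω) :=
  FreeGroup.lift (fun A => corr assign A * lam A)

lemma phiX_of_fiber {s : Finset Ω} {A : Set Ω}
    (hfix : ∀ w : FreeGroup (Finset Ω), corr assign A (s, w) = (s, w))
    (w : FreeGroup (Finset Ω)) :
    phiX assign (FreeGroup.of A) (s, w) = (s, FreeGroup.of (tr s A) * w) := by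
  rw [phiX, FreeGroup.lift_apply_of]
  show corr assign A (lam A (s, w)) = _
  rw [lam_apply, hfix]

lemma phiX_of_inv_fiber {s : Finset Ω} {A : Set Ω}
    (hfix : ∀ w : FreeGroup (Finset Ω), corr assign A (s, w) = (s, w))
    (w : FreeGroup (Finset Ω)) :
    phiX assign (FreeGroup.of A)⁻¹ (s, w) = (s, (FreeGroup.of (tr s A))⁻¹ * w) := by
  rw [map_inv, phiX, FreeGroup.lift_apply_of]
  show ((corr assign A * lam A)⁻¹ : Equiv.Perm (XX Ω)) (s, w) = _
  rw [mul_inv_rev, Equiv.Perm.mul_apply]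
  have h1 : ((corr assign A)⁻¹ : Equiv.Perm (XX Ω)) (s, w) = (s, w) := by
    conv_lhs => rw [← hfix w]
    exact (corr assign A).symm_apply_apply _
  rw [h1]
  apply (lam A).injective
  rw [Equiv.Perm.inv_def, Equiv.apply_symm_apply, lam_apply, mul_inv_cancel_left]

lemma phiX_mk (s : Finset Ω) (T : Set (Set Ω))
    (H : ∀ A ∈ T, ∀ w : FreeGroup (Finset Ω), corr assign A (s, w) = (s, w)) :
    ∀ L : List (Set Ω × Bool), (∀ p ∈ L, p.1 ∈ T) → ∀ w,
      phiX assign (FreeGroup.mk L) (s, w)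
        = (s, FreeGroup.map (tr s) (FreeGroup.mk L) * w) := by
  intro L
  induction L with
  | nil =>
    intro _ w
    rw [← FreeGroup.one_eq_mk]
    simp
  | cons p L ih =>
    intro hT w
    have hmk : FreeGroup.mk (p :: L) = FreeGroup.mk [p] * FreeGroup.mk L := by
      rw [FreeGroup.mul_mk]; rfl
    have hA : p.1 ∈ T := hT p (List.mem_cons_self)
    rw [hmk, map_mul, Equiv.Perm.mul_apply,
      ih (fun q hq => hT q (List.mem_cons_of_mem _ hq)) w, map_mul, mul_assoc]
    obtain ⟨A, b⟩ := p
    cases b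
    · have h1 : FreeGroup.mk [(A, false)] = (FreeGroup.of A)⁻¹ := by
        have : FreeGroup.of A = FreeGroup.mk [(A, true)] := rfl
        rw [this, FreeGroup.inv_mk]
        simp [FreeGroup.invRev]
      rw [h1, phiX_of_inv_fiber assign (H A hA), map_inv, FreeGroup.map.of]
    · have h1 : FreeGroup.mk [(A, true)] = FreeGroup.of A := rfl
      rw [h1, phiX_of_fiber assign (H A hA), FreeGroup.map.of]

lemma map_congr_letters {α β : Type*} (f g : α → β) (L : List (α × Bool))
    (h : ∀ p ∈ L, f p.1 = g p.1) :
    FreeGroup.map f (FreeGroup.mk L) = FreeGroup.map g (FreeGroup.mk L) := by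
  rw [FreeGroup.map.mk, FreeGroup.map.mk]
  congr 1
  exact List.map_congr_left fun p hp => by rw [h p hp]

theorem phiX_injective : Function.Injective (phiX assign) := by
  rw [injective_iff_map_eq_one]
  intro x hx
  by_contra hne
  set L := x.toWord with hL
  set T : Finset (Set Ω) := (L.map Prod.fst).toFinset with hT
  -- separating point chooser
  have hd : ∀ A B : Set Ω, A ≠ B → ∃ y, y ∈ symmDiff A B :=
    fun A B hAB => Set.symmDiff_nonempty.2 hAB
  let d : Set Ω → Set Ω → Ω := fun A B =>
    if h : A ≠ B then (hd A B h).choose else Classical.arbitrary Ω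
  let s₀ : Finset Ω := (T ×ˢ T).image fun p => d p.1 p.2
  -- bad fibers
  let Bad : Set (Finset Ω) := ⋃ A ∈ (T : Set (Set Ω)), Prod.fst '' {x | corr assign A x ≠ x}
  have hBad : Bad.Finite :=
    Set.Finite.biUnion T.finite_toSet fun A _ => (corr_support assign A).image _
  -- choose a good fiber s ⊇ s₀
  have hesc : ∃ ω ∈ (↑s₀ : Set Ω)ᶜ, insert ω s₀ ∉ Bad := by
    by_contra hcon
    push_neg at hcon
    have hinj : Set.InjOn (fun ω => insert ω s₀) (↑s₀ : Set Ω)ᶜ := by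
      intro ω1 h1 ω2 h2 he
      replace he : insert ω1 s₀ = insert ω2 s₀ := he
      have : ω1 ∈ insert ω2 s₀ := by
        rw [← he]; exact Finset.mem_insert_self _ _
      rcases Finset.mem_insert.1 this with h | h
      · exact h
      · exact absurd h h1
    have hinf : ((fun ω => insert ω s₀) '' (↑s₀ : Set Ω)ᶜ).Infinite :=
      (s₀.finite_toSet.infinite_compl).image hinj
    exact hinf (hBad.subset (by rintro _ ⟨ω, hω, rfl⟩; exact hcon ω hω))
  obtain ⟨ω, hω, hgood⟩ := hesc
  set s : Finset Ω := insert ω s₀ with hs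
  have hsub : s₀ ⊆ s := Finset.subset_insert _ _
  -- trace injectivity on letters
  have htrinj : ∀ A ∈ T, ∀ B ∈ T, tr s A = tr s B → A = B := by
    intro A hA B hB htr
    by_contra hAB
    have hy := (hd A B hAB).choose_spec
    have hyd : d A B = (hd A B hAB).choose := dif_pos hAB
    have hys : d A B ∈ s := hsub (Finset.mem_image.2 ⟨(A, B), Finset.mem_product.2 ⟨hA, hB⟩, rfl⟩)
    rw [hyd] at hys
    rw [Set.mem_symmDiff] at hy
    rcases hy with ⟨h1, h2⟩ | ⟨h1, h2⟩
    · have : (hd A B hAB).choose ∈ tr s A := mem_tr.2 ⟨hys, h1⟩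
      rw [htr] at this
      exact h2 (mem_tr.1 this).2
    · have : (hd A B hAB).choose ∈ tr s B := mem_tr.2 ⟨hys, h1⟩
      rw [← htr] at this
      exact h2 (mem_tr.1 this).2
  -- fibers over s are fixed by corrections of letters
  have H : ∀ A ∈ (T : Set (Set Ω)), ∀ w : FreeGroup (Finset Ω), corr assign A (s, w) = (s, w) := by
    intro A hA w
    by_contra hne'
    exact hgood (Set.mem_biUnion hA ⟨(s, w), hne', rfl⟩)
  -- evaluate
  have hlet : ∀ p ∈ L, p.1 ∈ (T : Set (Set Ω)) := fun p hp =>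
    Finset.mem_coe.2 (List.mem_toFinset.2 (List.mem_map_of_mem hp))
  have heval := phiX_mk assign s (T : Set (Set Ω)) H L hlet 1
  rw [FreeGroup.mk_toWord (x := x)] at heval
  rw [hx, mul_one] at heval
  have hmap1 : FreeGroup.map (tr s) x = 1 := by
    have h2 := (Prod.ext_iff.1 heval).2
    simpa using h2.symm
  -- retraction
  let r : Finset Ω → Set Ω := fun u => if h : ∃ A, A ∈ T ∧ tr s A = u then h.choose else ∅
  have hr : ∀ A ∈ T, r (tr s A) = A := by
    intro A hA
    have hex : ∃ B, B ∈ T ∧ tr s B = tr s A := ⟨A, hA, rfl⟩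
    show dite _ _ _ = A
    rw [dif_pos hex]
    exact htrinj _ hex.choose_spec.1 _ hA hex.choose_spec.2
  have hx1 : x = FreeGroup.map r (FreeGroup.map (tr s) x) := by
    rw [FreeGroup.map.comp]
    conv_lhs => rw [← FreeGroup.mk_toWord (x := x)]
    conv_rhs => rw [← FreeGroup.mk_toWord (x := x)]
    rw [map_congr_letters (r ∘ tr s) id x.toWord
      (fun p hp => hr p.1 (List.mem_toFinset.2 (List.mem_map_of_mem hp)))]
    exact (FreeGroup.map.id _).symm
  rw [hmap1, map_one] at hx1
  exact hne hx1

theorem phiX_trans (k : ℕ) (a b : Fin k → XX Ω) (ha : Function.Injective a)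
    (hb : Function.Injective b) :
    ∃ w : FreeGroup (Set Ω), ∀ i, phiX assign w (a i) = b i := by
  refine ⟨FreeGroup.of (assign ⟨k, a, b⟩), fun i => ?_⟩
  rw [phiX, FreeGroup.lift_apply_of]
  exact corr_spec assign ⟨k, a, b⟩ ha hb i

end HTF


theorem highly_transitive_free_subgroup {Ω : Type*} [Infinite Ω] :
    ∃ φ : FreeGroup (Set Ω) →* Equiv.Perm Ω, Function.Injective φ ∧
      ∀ (k : ℕ) (a b : Fin k → Ω), Function.Injective a → Function.Injective b →
        ∃ w : FreeGroup (Set Ω), ∀ i : Fin k, φ w (a i) = b i := by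
  classical
  obtain ⟨e⟩ := HTF.exists_equiv_XX (Ω := Ω)
  obtain ⟨assign⟩ := HTF.exists_task_embedding (Ω := Ω)
  let Φ : Equiv.Perm (HTF.XX Ω) →* Equiv.Perm Ω :=
    { toFun := fun g => (e.symm.trans (g.trans e)),
      map_one' := by ext x; simp,
      map_mul' := by
        intro g h
        ext x
        simp [Equiv.Perm.mul_apply] }
  have hΦ : Function.Injective Φ := by
    intro g h hgh
    refine Equiv.ext fun y => ?_
    have := congrArg (fun (p : Equiv.Perm Ω) => e.symm (p (e y))) hgh
    simpa [Φ] using this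
  refine ⟨Φ.comp (HTF.phiX assign), hΦ.comp (HTF.phiX_injective assign), ?_⟩
  intro k a b ha hb
  obtain ⟨w, hw⟩ := HTF.phiX_trans assign k (fun i => e.symm (a i)) (fun i => e.symm (b i))
    (e.symm.injective.comp ha) (e.symm.injective.comp hb)
  refine ⟨w, fun i => ?_⟩
  show e ((HTF.phiX assign w) (e.symm (a i))) = b i
  rw [hw i]
  exact e.apply_symm_apply _
end

section
/- Let Ω be a set and for Γ ⊆ Ω let Sym(Γ) denote the subgroup {f ∈ Sym(Ω) : f x = x for all x ∉ Γ} of Sym(Ω). If Γ₁, Γ₂ ⊆ Ω satisfy |Γ₁ ∩ Γ₂| = |Γ₁ ∪ Γ₂| (as cardinal numbers), then the subgroup of Sym(Ω) generated by Sym(Γ₁) and Sym(Γ₂) is exactly Sym(Γ₁ ∪ Γ₂). -/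
/-- The subgroup of `Equiv.Perm Ω` consisting of permutations fixing every point
outside `Γ`; this is the copy of `Sym(Γ)` inside `Sym(Ω)`. -/
def symOn {Ω : Type*} (Γ : Set Ω) : Subgroup (Equiv.Perm Ω) where
  carrier := {f | ∀ x ∉ Γ, f x = x}
  one_mem' := fun _ _ => rfl
  mul_mem' := by
    intro f g hf hg x hx
    have hg' : g x = x := hg x hx
    have hf' : f x = x := hf x hx
    show f (g x) = x
    rw [hg', hf']
  inv_mem' := by
    intro f hf x hx
    have hf' : f x = x := hf x hx
    calc f⁻¹ x = f⁻¹ (f x) := by rw [hf']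
    _ = x := Equiv.symm_apply_apply f x

open Cardinal Set Equiv

lemma mem_symOn {Ω : Type*} {Γ : Set Ω} {f : Equiv.Perm Ω} :
    f ∈ symOn Γ ↔ ∀ x ∉ Γ, f x = x := Iff.rfl

lemma symOn_mono {Ω : Type*} {Γ Γ' : Set Ω} (h : Γ ⊆ Γ') : symOn Γ ≤ symOn Γ' :=
  fun _f hf x hx => hf x (fun hx' => hx (h hx'))

lemma symOn_maps {Ω : Type*} {Γ : Set Ω} {f : Equiv.Perm Ω} (hf : f ∈ symOn Γ)
    {x : Ω} (hx : x ∈ Γ) : f x ∈ Γ := by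
  by_contra hfx
  have h1 : f (f x) = f x := hf (f x) hfx
  have h2 : f x = x := f.injective h1
  rw [h2] at hfx; exact hfx hx

/-- Extension lemma: given `S, T ⊆ Z` with `|S| = |T|` and `|Z\S| = |Z\T|`, there
is a permutation supported on `Z` mapping `S` into `T` and `Z\S` into `Z\T`. -/
lemma exists_symOn_maps {Ω : Type*} (Z S T : Set Ω) (hS : S ⊆ Z) (hT : T ⊆ Z)
    (h1 : Cardinal.mk ↥S = Cardinal.mk ↥T)
    (h2 : Cardinal.mk ↥(Z \ S) = Cardinal.mk ↥(Z \ T)) :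
    ∃ h : Equiv.Perm Ω, h ∈ symOn Z ∧ (∀ x ∈ S, h x ∈ T) ∧ (∀ x ∈ Z \ S, h x ∈ Z \ T) := by
  classical
  obtain ⟨e₁⟩ := Cardinal.eq.mp h1
  obtain ⟨e₂⟩ := Cardinal.eq.mp h2
  -- subtype equivalences
  let pS : ↥Z → Prop := fun x => (x : Ω) ∈ S
  let pT : ↥Z → Prop := fun x => (x : Ω) ∈ T
  let aS : {x : ↥Z // pS x} ≃ ↥S := Equiv.subtypeSubtypeEquivSubtype (fun hx => hS hx)
  let aT : {x : ↥Z // pT x} ≃ ↥T := Equiv.subtypeSubtypeEquivSubtype (fun hx => hT hx)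
  let bS : {x : ↥Z // ¬ pS x} ≃ ↥(Z \ S) :=
    (Equiv.subtypeSubtypeEquivSubtypeInter (· ∈ Z) (· ∉ S)).trans
      (Equiv.subtypeEquivRight (fun x => Iff.rfl))
  let bT : {x : ↥Z // ¬ pT x} ≃ ↥(Z \ T) :=
    (Equiv.subtypeSubtypeEquivSubtypeInter (· ∈ Z) (· ∉ T)).trans
      (Equiv.subtypeEquivRight (fun x => Iff.rfl))
  let a : {x : ↥Z // pS x} ≃ {x : ↥Z // pT x} := aS.trans (e₁.trans aT.symm)
  let b : {x : ↥Z // ¬ pS x} ≃ {x : ↥Z // ¬ pT x} := bS.trans (e₂.trans bT.symm)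
  let σ : Equiv.Perm ↥Z :=
    (Equiv.sumCompl pS).symm.trans ((a.sumCongr b).trans (Equiv.sumCompl pT))
  have hσpos : ∀ (x : ↥Z) (hx : pS x), σ x = ↑(a ⟨x, hx⟩) := by
    intro x hx
    show (Equiv.sumCompl pT) ((a.sumCongr b) ((Equiv.sumCompl pS).symm x)) = _
    rw [Equiv.sumCompl_symm_apply_of_pos (p := pS) hx]
    rfl
  have hσneg : ∀ (x : ↥Z) (hx : ¬ pS x), σ x = ↑(b ⟨x, hx⟩) := by
    intro x hx
    show (Equiv.sumCompl pT) ((a.sumCongr b) ((Equiv.sumCompl pS).symm x)) = _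
    rw [Equiv.sumCompl_symm_apply_of_neg (p := pS) hx]
    rfl
  refine ⟨Equiv.Perm.ofSubtype (p := (· ∈ Z)) σ, ?_, ?_, ?_⟩
  · intro x hx
    exact Equiv.Perm.ofSubtype_apply_of_not_mem σ hx
  · intro x hx
    have hxZ : x ∈ Z := hS hx
    rw [Equiv.Perm.ofSubtype_apply_of_mem σ hxZ, hσpos ⟨x, hxZ⟩ hx]
    exact (a ⟨⟨x, hxZ⟩, hx⟩).2
  · intro x hx
    have hxZ : x ∈ Z := hx.1
    have hxS : ¬ pS ⟨x, hxZ⟩ := hx.2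
    rw [Equiv.Perm.ofSubtype_apply_of_mem σ hxZ, hσneg ⟨x, hxZ⟩ hxS]
    exact ⟨(b ⟨⟨x, hxZ⟩, hxS⟩).1.2, (b ⟨⟨x, hxZ⟩, hxS⟩).2⟩

/-- Splitting lemma: inside an infinite set `R`, find a subset of the cardinality of `B`
whose complement in `R` still has the full cardinality of `R`. -/
lemma exists_split {Ω : Type*} (R B : Set Ω) (hinf : ℵ₀ ≤ Cardinal.mk ↥R)
    (hB : Cardinal.mk ↥B ≤ Cardinal.mk ↥R) :
    ∃ B' : Set Ω, B' ⊆ R ∧ Cardinal.mk ↥B' = Cardinal.mk ↥B ∧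
      Cardinal.mk ↥(R \ B') = Cardinal.mk ↥R := by
  have hsum : Cardinal.mk (↥R ⊕ ↥R) = Cardinal.mk ↥R := by
    simp [Cardinal.mk_sum, Cardinal.add_eq_self hinf]
  obtain ⟨E⟩ := Cardinal.eq.mp hsum
  obtain ⟨ι⟩ := (Cardinal.le_def ↥B ↥R).mp hB
  let u : ↥B → Ω := fun b => ↑(E (Sum.inl (ι b)))
  have hu : Function.Injective u := by
    intro b₁ b₂ h
    have := E.injective (Subtype.ext h)
    exact ι.injective (Sum.inl_injective this)
  let v : ↥R → Ω := fun r => ↑(E (Sum.inr r))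
  have hv : Function.Injective v := by
    intro r₁ r₂ h
    have := E.injective (Subtype.ext h)
    exact Sum.inr_injective this
  refine ⟨Set.range u, ?_, ?_, ?_⟩
  · rintro _ ⟨b, rfl⟩; exact (E (Sum.inl (ι b))).2
  · exact Cardinal.mk_range_eq u hu
  · apply le_antisymm (Cardinal.mk_le_mk_of_subset diff_subset)
    have hsub : Set.range v ⊆ R \ Set.range u := by
      rintro _ ⟨r, rfl⟩
      refine ⟨(E (Sum.inr r)).2, ?_⟩
      rintro ⟨b, hb⟩
      have := E.injective (Subtype.ext hb)
      simp at this
    calc Cardinal.mk ↥R = Cardinal.mk ↥(Set.range v) := (Cardinal.mk_range_eq v hv).symm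
      _ ≤ _ := Cardinal.mk_le_mk_of_subset hsub

lemma aux_main {Ω : Type*} (Γ₁ Γ₂ : Set Ω)
    (hΔ : Cardinal.mk ↥(Γ₁ ∩ Γ₂) = Cardinal.mk ↥(Γ₁ ∪ Γ₂))
    (hinf : ℵ₀ ≤ Cardinal.mk ↥(Γ₁ ∪ Γ₂))
    (f : Equiv.Perm Ω) (hf : f ∈ symOn (Γ₁ ∪ Γ₂))
    (hR : Cardinal.mk ↥(Γ₂ \ (⇑f '' (Γ₁ \ Γ₂))) = Cardinal.mk ↥(Γ₁ ∪ Γ₂)) :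
    f ∈ symOn Γ₁ ⊔ symOn Γ₂ := by
  classical
  have hΓ1sub : Γ₁ ⊆ Γ₁ ∪ Γ₂ := subset_union_left
  have hΓ2sub : Γ₂ ⊆ Γ₁ ∪ Γ₂ := subset_union_right
  have hκ2 : Cardinal.mk ↥Γ₂ ≤ Cardinal.mk ↥(Γ₁ ∪ Γ₂) := Cardinal.mk_le_mk_of_subset hΓ2sub
  have hfmem : ∀ x ∈ Γ₁ ∪ Γ₂, f x ∈ Γ₁ ∪ Γ₂ := fun x hx => symOn_maps hf hx
  have hfmem' : ∀ x, f x ∈ Γ₁ ∪ Γ₂ → x ∈ Γ₁ ∪ Γ₂ := by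
    intro x hx
    by_contra hc
    rw [hf x hc] at hx
    exact hc hx
  have hAΓ2 : ∀ x ∈ Γ₁ \ Γ₂, x ∉ Γ₂ := fun x hx => hx.2
  have hΓA2 : ∀ x, x ∈ Γ₁ ∪ Γ₂ → x ∉ Γ₁ \ Γ₂ → x ∈ Γ₂ := by
    intro x hx hxa
    rcases hx with h1 | h2
    · by_contra h2
      exact hxa ⟨h1, h2⟩
    · exact h2
  -- split `R := Γ₂ \ f '' A` into a copy `B'` of `Bs := Γ₂ \ Γ₁` and a full-size rest `W`
  obtain ⟨B', hB'R, hB'B, hRB'⟩ := exists_split (Γ₂ \ (⇑f '' (Γ₁ \ Γ₂))) (Γ₂ \ Γ₁)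
    (by rw [hR]; exact hinf)
    (by rw [hR]; exact Cardinal.mk_le_mk_of_subset (diff_subset.trans hΓ2sub))
  set FA := ⇑f '' (Γ₁ \ Γ₂) with hFAdef
  set W := (Γ₂ \ FA) \ B' with hWdef
  have hWΓ2 : W ⊆ Γ₂ := fun x hx => hx.1.1
  have hWFA : ∀ x ∈ W, x ∉ FA := fun x hx => hx.1.2
  have hWcard : Cardinal.mk ↥W = Cardinal.mk ↥(Γ₁ ∪ Γ₂) := hRB'.trans hR
  have hB'W : ∀ x ∈ B', x ∉ W := fun x hx h => h.2 hx
  have hRWB' : (Γ₂ \ FA) \ W = B' := diff_diff_cancel_left hB'R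
  set D := (⇑f ⁻¹' ((Γ₁ \ Γ₂) ∪ W)) \ (Γ₁ \ Γ₂) with hDdef
  have hDsubΓ2 : D ⊆ Γ₂ := by
    intro x hx
    have h1 : f x ∈ Γ₁ ∪ Γ₂ := by
      rcases hx.1 with h | h
      · exact hΓ1sub h.1
      · exact hΓ2sub (hWΓ2 h)
    exact hΓA2 x (hfmem' x h1) hx.2
  have hfD : ⇑f '' D = ((Γ₁ \ Γ₂) ∪ W) \ FA := by
    ext y
    constructor
    · rintro ⟨x, hx, rfl⟩
      refine ⟨hx.1, ?_⟩
      rintro ⟨a, ha, hae⟩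
      have haa : a = x := f.injective hae
      rw [haa] at ha
      exact hx.2 ha
    · rintro ⟨hy1, hy2⟩
      refine ⟨f.symm y, ⟨?_, ?_⟩, f.apply_symm_apply y⟩
      · rw [Set.mem_preimage, f.apply_symm_apply]
        exact hy1
      · intro ha
        exact hy2 ⟨f.symm y, ha, f.apply_symm_apply y⟩
  have hDcard : Cardinal.mk ↥D = Cardinal.mk ↥(Γ₁ ∪ Γ₂) := by
    apply le_antisymm (le_trans (Cardinal.mk_le_mk_of_subset hDsubΓ2) hκ2)
    have hWD : W ⊆ ⇑f '' D := by
      rw [hfD]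
      exact fun x hx => ⟨Or.inr hx, hWFA x hx⟩
    calc Cardinal.mk ↥(Γ₁ ∪ Γ₂) = Cardinal.mk ↥W := hWcard.symm
      _ ≤ Cardinal.mk ↥(⇑f '' D) := Cardinal.mk_le_mk_of_subset hWD
      _ = Cardinal.mk ↥D := Cardinal.mk_image_eq f.injective
  have hΓ2D : Γ₂ \ D = ⇑f ⁻¹' B' := by
    ext x
    constructor
    · rintro ⟨hx2, hxD⟩
      have hxA : x ∉ Γ₁ \ Γ₂ := fun h => h.2 hx2
      have hfx : f x ∉ (Γ₁ \ Γ₂) ∪ W := fun h => hxD ⟨h, hxA⟩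
      have hfxΓ : f x ∈ Γ₁ ∪ Γ₂ := hfmem x (hΓ2sub hx2)
      have hfxFA : f x ∉ FA := by
        rintro ⟨a, ha, hae⟩
        exact hxA (f.injective hae ▸ ha)
      have hfx2 : f x ∈ Γ₂ := hΓA2 _ hfxΓ (fun h => hfx (Or.inl h))
      have hfxW : f x ∉ W := fun h => hfx (Or.inr h)
      show f x ∈ B'
      rw [← hRWB']
      exact ⟨⟨hfx2, hfxFA⟩, hfxW⟩
    · intro hx
      have hfxR : f x ∈ Γ₂ \ FA := hB'R hx
      have hxA : x ∉ Γ₁ \ Γ₂ := fun h => hfxR.2 ⟨x, h, rfl⟩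
      have hxΓ : x ∈ Γ₁ ∪ Γ₂ := hfmem' x (hΓ2sub hfxR.1)
      refine ⟨hΓA2 x hxΓ hxA, ?_⟩
      intro hD
      rcases hD.1 with hcase | hcase
      · exact (hAΓ2 _ hcase) hfxR.1
      · exact hB'W _ hx hcase
  have hΓ2Dcard : Cardinal.mk ↥(Γ₂ \ D) = Cardinal.mk ↥(Γ₂ \ Γ₁) := by
    rw [hΓ2D]
    rw [Cardinal.mk_preimage_of_injective_of_subset_range ⇑f B' f.injective
      (by rw [Equiv.range_eq_univ]; exact subset_univ _)]
    exact hB'B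
  set Y := (FA ∩ Γ₂) ∪ W with hYdef
  have hYΓ2 : Y ⊆ Γ₂ := union_subset inter_subset_right hWΓ2
  have hYcard : Cardinal.mk ↥Y = Cardinal.mk ↥(Γ₁ ∪ Γ₂) := by
    apply le_antisymm (le_trans (Cardinal.mk_le_mk_of_subset hYΓ2) hκ2)
    rw [← hWcard]
    exact Cardinal.mk_le_mk_of_subset subset_union_right
  have hΓ2Y : Γ₂ \ Y = B' := by
    ext x
    constructor
    · rintro ⟨hx2, hxY⟩
      have hxFA : x ∉ FA := fun hc => hxY (Or.inl ⟨hc, hx2⟩)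
      have hxW : x ∉ W := fun hc => hxY (Or.inr hc)
      rw [← hRWB']
      exact ⟨⟨hx2, hxFA⟩, hxW⟩
    · intro hx
      have hxR : x ∈ Γ₂ \ FA := hB'R hx
      refine ⟨hxR.1, ?_⟩
      intro hc
      rcases hc with hc | hc
      · exact hxR.2 hc.1
      · exact hB'W _ hx hc
  have hΓ2Δ : Γ₂ \ (Γ₁ ∩ Γ₂) = Γ₂ \ Γ₁ := by
    ext x
    simp only [mem_diff, mem_inter_iff]
    tauto
  obtain ⟨h₁, hh₁, hmap₁, hmap₁'⟩ := exists_symOn_maps Γ₂ (Γ₁ ∩ Γ₂) D inter_subset_right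
    hDsubΓ2 (hΔ.trans hDcard.symm) (by rw [hΓ2Δ]; exact hΓ2Dcard.symm)
  obtain ⟨h₂, hh₂, hmap₂, hmap₂'⟩ := exists_symOn_maps Γ₂ Y (Γ₁ ∩ Γ₂) hYΓ2 inter_subset_right
    (hYcard.trans hΔ.symm) (by rw [hΓ2Δ, hΓ2Y]; exact hB'B)
  set p : Equiv.Perm Ω := h₂ * (f * h₁) with hpdef
  have hpx : ∀ x, p x = h₂ (f (h₁ x)) := fun _ => rfl
  have hπ1 : ∀ x ∈ Γ₁, p x ∈ Γ₁ := by
    intro x hx1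
    by_cases hx2 : x ∈ Γ₂
    · have hz : h₁ x ∈ D := hmap₁ x ⟨hx1, hx2⟩
      rcases hz.1 with hA | hW
      · rw [hpx, hh₂ _ (hAΓ2 _ hA)]
        exact hA.1
      · have hY : f (h₁ x) ∈ Y := Or.inr hW
        rw [hpx]
        exact (hmap₂ _ hY).1
    · have hxA : x ∈ Γ₁ \ Γ₂ := ⟨hx1, hx2⟩
      have hz : h₁ x = x := hh₁ x hx2
      by_cases hfx2 : f x ∈ Γ₂
      · have hY : f x ∈ Y := Or.inl ⟨⟨x, hxA, rfl⟩, hfx2⟩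
        rw [hpx, hz]
        exact (hmap₂ _ hY).1
      · rw [hpx, hz, hh₂ _ hfx2]
        rcases hfmem x (hΓ1sub hx1) with hc | hc
        · exact hc
        · exact absurd hc hfx2
  have hπ2 : ∀ x ∈ Γ₂ \ Γ₁, p x ∈ Γ₂ \ Γ₁ := by
    intro x hx
    have hxΔ : x ∈ Γ₂ \ (Γ₁ ∩ Γ₂) := by rw [hΓ2Δ]; exact hx
    have h1 : h₁ x ∈ Γ₂ \ D := hmap₁' x hxΔ
    have h2 : f (h₁ x) ∈ B' := by
      rw [hΓ2D] at h1
      exact h1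
    have h3 : f (h₁ x) ∈ Γ₂ \ Y := by rw [hΓ2Y]; exact h2
    have h4 := hmap₂' _ h3
    rw [hΓ2Δ] at h4
    rw [hpx]
    exact h4
  have hπ3 : ∀ x, x ∉ Γ₁ ∪ Γ₂ → p x = x := by
    intro x hx
    have hx2 : x ∉ Γ₂ := fun hc => hx (hΓ2sub hc)
    rw [hpx, hh₁ x hx2, hf x hx, hh₂ x hx2]
  have hiff : ∀ x, x ∈ Γ₁ ↔ p x ∈ Γ₁ := by
    intro x
    constructor
    · exact hπ1 x
    · intro hp
      by_contra hx1
      by_cases hx2 : x ∈ Γ₂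
      · exact (hπ2 x ⟨hx2, hx1⟩).2 hp
      · have hxΓ : x ∉ Γ₁ ∪ Γ₂ := by
          intro hc
          rcases hc with hc | hc
          · exact hx1 hc
          · exact hx2 hc
        rw [hπ3 x hxΓ] at hp
        exact hx1 hp
  set g : Equiv.Perm Ω := Equiv.Perm.ofSubtype (p.subtypePerm (fun x => (hiff x).symm)) with hgdef
  have hg : g ∈ symOn Γ₁ := fun x hx => Equiv.Perm.ofSubtype_apply_of_not_mem _ hx
  have hgp : ∀ x ∈ Γ₁, g x = p x := by
    intro x hx
    rw [hgdef, Equiv.Perm.ofSubtype_apply_of_mem _ hx]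
    rfl
  have hq : g⁻¹ * p ∈ symOn Γ₂ := by
    intro x hx2
    by_cases hx1 : x ∈ Γ₁
    · show g⁻¹ (p x) = x
      rw [← hgp x hx1]
      exact Equiv.symm_apply_apply g x
    · have hxΓ : x ∉ Γ₁ ∪ Γ₂ := by
        intro hc
        rcases hc with hc | hc
        · exact hx1 hc
        · exact hx2 hc
      show g⁻¹ (p x) = x
      rw [hπ3 x hxΓ]
      have hgx : g x = x := hg x hx1
      calc g⁻¹ x = g⁻¹ (g x) := by rw [hgx]
        _ = x := Equiv.symm_apply_apply g x
  have hfactor : f = h₂⁻¹ * (g * (g⁻¹ * p)) * h₁⁻¹ := by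
    rw [hpdef]
    group
  rw [hfactor]
  exact mul_mem (mul_mem (Subgroup.mem_sup_right (inv_mem hh₂))
    (mul_mem (Subgroup.mem_sup_left hg) (Subgroup.mem_sup_right hq)))
    (Subgroup.mem_sup_right (inv_mem hh₁))

theorem sup_symOn_eq_symOn_union {Ω : Type*} (Γ₁ Γ₂ : Set Ω)
    (h : Cardinal.mk ↥(Γ₁ ∩ Γ₂) = Cardinal.mk ↥(Γ₁ ∪ Γ₂)) :
    symOn Γ₁ ⊔ symOn Γ₂ = symOn (Γ₁ ∪ Γ₂) := by
  apply le_antisymm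
  · exact sup_le (symOn_mono subset_union_left) (symOn_mono subset_union_right)
  intro f hf
  by_cases hinf : ℵ₀ ≤ Cardinal.mk ↥(Γ₁ ∪ Γ₂)
  · -- dichotomy
    have hdich : Cardinal.mk ↥(Γ₂ \ (⇑f '' (Γ₁ \ Γ₂))) = Cardinal.mk ↥(Γ₁ ∪ Γ₂) ∨
        Cardinal.mk ↥(Γ₁ \ (⇑f '' (Γ₂ \ Γ₁))) = Cardinal.mk ↥(Γ₁ ∪ Γ₂) := by
      by_contra hcon
      push_neg at hcon
      obtain ⟨hc1, hc2⟩ := hcon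
      have hle1 : Cardinal.mk ↥(Γ₂ \ (⇑f '' (Γ₁ \ Γ₂))) ≤ Cardinal.mk ↥(Γ₁ ∪ Γ₂) :=
        Cardinal.mk_le_mk_of_subset (diff_subset.trans subset_union_right)
      have hle2 : Cardinal.mk ↥(Γ₁ \ (⇑f '' (Γ₂ \ Γ₁))) ≤ Cardinal.mk ↥(Γ₁ ∪ Γ₂) :=
        Cardinal.mk_le_mk_of_subset (diff_subset.trans subset_union_left)
      have hsub : Γ₁ ∩ Γ₂ ⊆ (Γ₂ \ (⇑f '' (Γ₁ \ Γ₂))) ∪ (Γ₁ \ (⇑f '' (Γ₂ \ Γ₁))) := by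
        intro x hx
        by_cases hxa : x ∈ ⇑f '' (Γ₁ \ Γ₂)
        · right
          refine ⟨hx.1, ?_⟩
          rintro ⟨b, hb, hbe⟩
          obtain ⟨a, ha, hae⟩ := hxa
          have : a = b := f.injective (hae.trans hbe.symm)
          rw [this] at ha
          exact hb.2 ha.1
        · exact Or.inl ⟨hx.2, hxa⟩
      have : Cardinal.mk ↥(Γ₁ ∪ Γ₂) < Cardinal.mk ↥(Γ₁ ∪ Γ₂) := by
        calc Cardinal.mk ↥(Γ₁ ∪ Γ₂) = Cardinal.mk ↥(Γ₁ ∩ Γ₂) := h.symm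
          _ ≤ Cardinal.mk ↥((Γ₂ \ (⇑f '' (Γ₁ \ Γ₂))) ∪ (Γ₁ \ (⇑f '' (Γ₂ \ Γ₁)))) :=
            Cardinal.mk_le_mk_of_subset hsub
          _ ≤ Cardinal.mk ↥(Γ₂ \ (⇑f '' (Γ₁ \ Γ₂))) + Cardinal.mk ↥(Γ₁ \ (⇑f '' (Γ₂ \ Γ₁))) :=
            Cardinal.mk_union_le _ _
          _ < Cardinal.mk ↥(Γ₁ ∪ Γ₂) :=
            Cardinal.add_lt_of_lt hinf (lt_of_le_of_ne hle1 hc1) (lt_of_le_of_ne hle2 hc2)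
      exact absurd this (lt_irrefl _)
    rcases hdich with h1 | h2
    · exact aux_main Γ₁ Γ₂ h hinf f hf h1
    · have huc : Γ₂ ∪ Γ₁ = Γ₁ ∪ Γ₂ := union_comm _ _
      have hic : Γ₂ ∩ Γ₁ = Γ₁ ∩ Γ₂ := inter_comm _ _
      have := aux_main Γ₂ Γ₁ (by rw [huc, hic]; exact h) (by rw [huc]; exact hinf) f
        (by rw [huc]; exact hf) (by rw [huc]; exact h2)
      rw [sup_comm]
      exact this
  · -- finite case: Γ₁ ∪ Γ₂ = Γ₁ ∩ Γ₂, so Γ₁ = Γ₂ = Γ₁ ∪ Γ₂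
    have hss : Γ₁ ∩ Γ₂ ⊆ Γ₁ ∪ Γ₂ := inter_subset_left.trans subset_union_left
    have hd : Cardinal.mk ↥((Γ₁ ∪ Γ₂) \ (Γ₁ ∩ Γ₂)) + Cardinal.mk ↥(Γ₁ ∩ Γ₂) =
        Cardinal.mk ↥(Γ₁ ∪ Γ₂) := Cardinal.mk_diff_add_mk hss
    rw [h] at hd
    have hlt : Cardinal.mk ↥(Γ₁ ∪ Γ₂) < ℵ₀ := lt_of_not_ge hinf
    have h0 : Cardinal.mk ↥((Γ₁ ∪ Γ₂) \ (Γ₁ ∩ Γ₂)) = 0 := by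
      have : Cardinal.mk ↥((Γ₁ ∪ Γ₂) \ (Γ₁ ∩ Γ₂)) + Cardinal.mk ↥(Γ₁ ∪ Γ₂) =
          0 + Cardinal.mk ↥(Γ₁ ∪ Γ₂) := by rw [zero_add]; exact hd
      exact Cardinal.eq_of_add_eq_add_right this hlt
    have hempty : (Γ₁ ∪ Γ₂) \ (Γ₁ ∩ Γ₂) = ∅ :=
      Set.isEmpty_coe_sort.mp (Cardinal.mk_eq_zero_iff.mp h0)
    have hsub2 : Γ₁ ∪ Γ₂ ⊆ Γ₁ ∩ Γ₂ := diff_eq_empty.mp hempty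
    have hΓ1 : Γ₁ = Γ₁ ∪ Γ₂ :=
      Set.Subset.antisymm subset_union_left (hsub2.trans inter_subset_left)
    rw [← hΓ1] at hf
    exact le_sup_left (α := Subgroup (Equiv.Perm Ω)) hf
end

section
/- (Dixon–Neumann–Thomas / Semmes) Let Ω be a countably infinite set, S = Sym(Ω), and G a subgroup of S. Then the index of G in S (the cardinality of the left coset space S/G) is strictly less than 2^{ℵ₀} if and only if there exists a finite subset Δ₀ of Ω such that S_(Δ₀) ≤ G ≤ S_{Δ₀}, where S_(Δ₀) = {g ∈ S : g x = x for all x ∈ Δ₀} is the pointwise stabilizer of Δ₀ and S_{Δ₀} = {g ∈ S : g maps Δ₀ onto Δ₀} is the setwise stabilizer of Δ₀. -/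
open Pointwise Equiv Cardinal
set_option linter.unusedSectionVars false

namespace DNT

variable {Ω : Type*} [Countable Ω] [Infinite Ω]

/-- The subgroup of permutations supported inside `A`. -/
def symOn (A : Set Ω) : Subgroup (Equiv.Perm Ω) where
  carrier := {g | ∀ x ∉ A, g x = x}
  one_mem' := fun x _ => rfl
  mul_mem' := by
    intro a b ha hb x hx
    show a (b x) = x
    rw [hb x hx, ha x hx]
  inv_mem' := by
    intro a ha x hx
    show a⁻¹ x = x
    have := ha x hx
    conv_lhs => rw [← this]
    simp

lemma mem_symOn {A : Set Ω} {g : Equiv.Perm Ω} : g ∈ symOn A ↔ ∀ x ∉ A, g x = x := Iff.rfl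

lemma symOn_mono {A B : Set Ω} (h : A ⊆ B) : symOn A ≤ symOn B := by
  intro g hg x hx
  exact hg x (fun hxA => hx (h hxA))

lemma fixingSubgroup_eq (Δ : Set Ω) :
    fixingSubgroup (Equiv.Perm Ω) Δ = symOn (Ω := Ω) Δᶜ := by
  ext g
  rw [mem_fixingSubgroup_iff, mem_symOn]
  constructor
  · intro h x hx
    exact h x (by simpa using hx)
  · intro h x hx
    exact h x (by simpa using hx)

lemma apply_mem_of {A : Set Ω} {g : Equiv.Perm Ω} (hg : g ∈ symOn A) {x : Ω} (hx : x ∈ A) :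
    g x ∈ A := by
  by_contra hout
  have h1 : g (g x) = g x := hg _ hout
  have hx' : g x = x := g.injective h1
  rw [hx'] at hout
  exact hout hx

lemma inv_apply_mem_of {A : Set Ω} {g : Equiv.Perm Ω} (hg : g ∈ symOn A) {x : Ω} (hx : x ∈ A) :
    g⁻¹ x ∈ A := apply_mem_of (inv_mem hg) hx

lemma commute_of_disjoint {A B : Set Ω} {a b : Equiv.Perm Ω} (ha : a ∈ symOn A)
    (hb : b ∈ symOn B) (hd : ∀ x, x ∈ A → x ∈ B → False) : Commute a b := by
  apply Equiv.Perm.Disjoint.commute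
  intro x
  by_cases hx : x ∈ A
  · exact Or.inr (hb x (fun hxB => hd x hx hxB))
  · exact Or.inl (ha x hx)

/-- piecewise permutation constructor -/
lemma perm_piecewise (A : Set Ω) (F Finv : Ω → Ω)
    (h1 : ∀ x ∈ A, F x ∈ A ∧ Finv (F x) = x)
    (h2 : ∀ x ∈ A, Finv x ∈ A ∧ F (Finv x) = x) :
    ∃ π : Equiv.Perm Ω, (∀ x ∈ A, π x = F x) ∧ π ∈ symOn A := by
  classical
  set f : Ω → Ω := fun x => if x ∈ A then F x else x with hf
  set finv : Ω → Ω := fun x => if x ∈ A then Finv x else x with hfinv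
  have L : Function.LeftInverse finv f := by
    intro x
    by_cases hx : x ∈ A
    · simp only [hf, hfinv, hx, if_true, (h1 x hx).1, (h1 x hx).2]
    · simp only [hf, hfinv, hx, if_false]
  have R : Function.RightInverse finv f := by
    intro x
    by_cases hx : x ∈ A
    · simp only [hf, hfinv, hx, if_true, (h2 x hx).1, (h2 x hx).2]
    · simp only [hf, hfinv, hx, if_false]
  refine ⟨⟨f, finv, L, R⟩, ?_, ?_⟩
  · intro x hx
    show f x = F x
    rw [hf]; simp only [hx, if_true]
  · intro x hx
    show f x = x
    rw [hf]; simp only [hx, if_false]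

lemma infinite_coe {X : Set Ω} (hX : X.Infinite) : #↥X = ℵ₀ := by
  haveI := hX.to_subtype
  exact mk_eq_aleph0 ↥X

lemma equiv_of_infinite {X Y : Set Ω} (hX : X.Infinite) (hY : Y.Infinite) :
    Nonempty (↥X ≃ ↥Y) := by
  haveI := hX.to_subtype
  haveI := hY.to_subtype
  exact nonempty_equiv_of_countable

lemma equiv_of_denum (α : Type*) [Countable α] [Infinite α] {X : Set Ω} (hX : X.Infinite) :
    Nonempty (α ≃ ↥X) := by
  haveI := hX.to_subtype
  exact nonempty_equiv_of_countable


/-- Extension of a bijection between co-infinite subsets of `A` to a permutation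
supported on `A`. -/
lemma ext_perm (A X Y : Set Ω) (hXA : X ⊆ A) (hYA : Y ⊆ A) (e : ↥X ≃ ↥Y)
    (hAX : (A \ X).Infinite) (hAY : (A \ Y).Infinite) :
    ∃ π : Equiv.Perm Ω, (∀ x, (hx : x ∈ X) → π x = ↑(e ⟨x, hx⟩)) ∧ π ∈ symOn A ∧
      ⇑π '' X = Y := by
  classical
  obtain ⟨c⟩ := equiv_of_infinite hAX hAY
  set F : Ω → Ω := fun x =>
    if h : x ∈ X then ↑(e ⟨x, h⟩) else if h : x ∈ A \ X then ↑(c ⟨x, h⟩) else x with hF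
  set Finv : Ω → Ω := fun y =>
    if h : y ∈ Y then ↑(e.symm ⟨y, h⟩) else if h : y ∈ A \ Y then ↑(c.symm ⟨y, h⟩) else y
    with hFinv
  have key1 : ∀ x ∈ A, F x ∈ A ∧ Finv (F x) = x := by
    intro x hx
    by_cases hxX : x ∈ X
    · have hv : F x = ↑(e ⟨x, hxX⟩) := by rw [hF]; simp only [hxX, dif_pos]
      have hmem : (↑(e ⟨x, hxX⟩) : Ω) ∈ Y := (e ⟨x, hxX⟩).2
      constructor
      · rw [hv]; exact hYA hmem
      · rw [hv, hFinv]
        simp only [hmem, dif_pos]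
        have : (⟨↑(e ⟨x, hxX⟩), hmem⟩ : ↥Y) = e ⟨x, hxX⟩ := rfl
        rw [this, Equiv.symm_apply_apply]
    · have hxd : x ∈ A \ X := ⟨hx, hxX⟩
      have hv : F x = ↑(c ⟨x, hxd⟩) := by rw [hF]; simp only [hxX, dif_neg, hxd, dif_pos,
        not_false_iff]
      have hmem : (↑(c ⟨x, hxd⟩) : Ω) ∈ A \ Y := (c ⟨x, hxd⟩).2
      constructor
      · rw [hv]; exact hmem.1
      · rw [hv, hFinv]
        simp only [hmem.2, dif_neg, not_false_iff, hmem, dif_pos]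
        have : (⟨↑(c ⟨x, hxd⟩), hmem⟩ : ↥(A \ Y)) = c ⟨x, hxd⟩ := rfl
        rw [this, Equiv.symm_apply_apply]
  have key2 : ∀ y ∈ A, Finv y ∈ A ∧ F (Finv y) = y := by
    intro y hy
    by_cases hyY : y ∈ Y
    · have hv : Finv y = ↑(e.symm ⟨y, hyY⟩) := by rw [hFinv]; simp only [hyY, dif_pos]
      have hmem : (↑(e.symm ⟨y, hyY⟩) : Ω) ∈ X := (e.symm ⟨y, hyY⟩).2
      constructor
      · rw [hv]; exact hXA hmem
      · rw [hv, hF]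
        simp only [hmem, dif_pos]
        have : (⟨↑(e.symm ⟨y, hyY⟩), hmem⟩ : ↥X) = e.symm ⟨y, hyY⟩ := rfl
        rw [this, Equiv.apply_symm_apply]
    · have hyd : y ∈ A \ Y := ⟨hy, hyY⟩
      have hv : Finv y = ↑(c.symm ⟨y, hyd⟩) := by
        rw [hFinv]; simp only [hyY, dif_neg, hyd, dif_pos, not_false_iff]
      have hmem : (↑(c.symm ⟨y, hyd⟩) : Ω) ∈ A \ X := (c.symm ⟨y, hyd⟩).2
      constructor
      · rw [hv]; exact hmem.1
      · rw [hv, hF]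
        simp only [hmem.2, dif_neg, not_false_iff, hmem, dif_pos]
        have : (⟨↑(c.symm ⟨y, hyd⟩), hmem⟩ : ↥(A \ X)) = c.symm ⟨y, hyd⟩ := rfl
        rw [this, Equiv.apply_symm_apply]
  obtain ⟨π, hπ1, hπ2⟩ := perm_piecewise A F Finv key1 key2
  have happ : ∀ x, (hx : x ∈ X) → π x = ↑(e ⟨x, hx⟩) := by
    intro x hx
    rw [hπ1 x (hXA hx), hF]
    simp only [hx, dif_pos]
  refine ⟨π, happ, hπ2, ?_⟩
  apply Set.Subset.antisymm
  · rintro y ⟨x, hx, rfl⟩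
    rw [happ x hx]
    exact (e ⟨x, hx⟩).2
  · intro y hy
    refine ⟨↑(e.symm ⟨y, hy⟩), (e.symm ⟨y, hy⟩).2, ?_⟩
    rw [happ _ (e.symm ⟨y, hy⟩).2]
    have : (⟨↑(e.symm ⟨y, hy⟩), (e.symm ⟨y, hy⟩).2⟩ : ↥X) = e.symm ⟨y, hy⟩ := rfl
    rw [this, Equiv.apply_symm_apply]

lemma split2 {X : Set Ω} (hX : X.Infinite) :
    ∃ Z₁ Z₂ : Set Ω, Z₁ ⊆ X ∧ Z₂ ⊆ X ∧ (∀ x, x ∈ Z₁ → x ∈ Z₂ → False) ∧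
      Z₁.Infinite ∧ Z₂.Infinite := by
  obtain ⟨e⟩ := equiv_of_denum (ℕ × Bool) hX
  refine ⟨Set.range (fun n : ℕ => ↑(e (n, false))), Set.range (fun n : ℕ => ↑(e (n, true))),
    ?_, ?_, ?_, ?_, ?_⟩
  · rintro x ⟨n, rfl⟩; exact (e (n, false)).2
  · rintro x ⟨n, rfl⟩; exact (e (n, true)).2
  · rintro x ⟨n, rfl⟩ ⟨m, hm⟩
    have := Subtype.val_injective hm
    have := e.injective this
    simp at this
  · apply Set.infinite_range_of_injective
    intro a b hab
    have := e.injective (Subtype.val_injective hab)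
    simpa using this
  · apply Set.infinite_range_of_injective
    intro a b hab
    have := e.injective (Subtype.val_injective hab)
    simpa using this

lemma compress_perm (A X Z : Set Ω) (hXA : X ⊆ A) (hZA : Z ⊆ A) (hZ : Z.Infinite)
    (hAX : (A \ X).Infinite) :
    ∃ π : Equiv.Perm Ω, π ∈ symOn A ∧ ∀ x ∈ X, π x ∈ Z := by
  obtain ⟨Z₁, Z₂, hZ₁, hZ₂, hdisj, hZ₁i, hZ₂i⟩ := split2 hZ
  have hle : #↥X ≤ #↥Z₁ := by
    rw [infinite_coe hZ₁i]
    exact mk_le_aleph0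
  obtain ⟨j⟩ := Cardinal.le_def _ _ |>.mp hle
  set Y : Set Ω := Set.range (fun x : ↥X => (↑(j x) : Ω)) with hYdef
  have hinj : Function.Injective (fun x : ↥X => (↑(j x) : Ω)) := by
    intro a b hab
    exact j.injective (Subtype.val_injective hab)
  have hYZ₁ : Y ⊆ Z₁ := by rintro y ⟨x, rfl⟩; exact (j x).2
  have hYA : Y ⊆ A := fun y hy => hZA (hZ₁ (hYZ₁ hy))
  have hAY : (A \ Y).Infinite :=
    hZ₂i.mono (fun z hz => ⟨hZA (hZ₂ hz), fun hzY => hdisj z (hYZ₁ hzY) hz⟩)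
  set e : ↥X ≃ ↥Y := Equiv.ofInjective _ hinj with he
  obtain ⟨π, hπ1, hπ2, hπ3⟩ := ext_perm A X Y hXA hYA e hAX hAY
  refine ⟨π, hπ2, fun x hx => ?_⟩
  rw [hπ1 x hx]
  exact hZ₁ (hYZ₁ (e ⟨x, hx⟩).2)


/-- Gluing disjointly supported permutations along a set of indices. -/
lemma glue_exists (Bl : ℕ → Set Ω)
    (hd : ∀ i j, ∀ x, x ∈ Bl i → x ∈ Bl j → i = j)
    (f : ℕ → Equiv.Perm Ω) (hf : ∀ i, f i ∈ symOn (Bl i)) (T : Set ℕ) :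
    ∃ p : Equiv.Perm Ω, (∀ i, i ∈ T → ∀ x ∈ Bl i, p x = f i x) ∧
      (∀ x, (∀ i, i ∈ T → x ∉ Bl i) → p x = x) ∧
      (∀ i, i ∈ T → ∀ x ∈ Bl i, p⁻¹ x = (f i)⁻¹ x) := by
  classical
  set A : Set Ω := {x | ∃ i, i ∈ T ∧ x ∈ Bl i} with hA
  set F : Ω → Ω := fun x => if h : ∃ i, i ∈ T ∧ x ∈ Bl i then f h.choose x else x with hF
  set Finv : Ω → Ω := fun x => if h : ∃ i, i ∈ T ∧ x ∈ Bl i then (f h.choose)⁻¹ x else x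
    with hFinv
  have Fval : ∀ (i : ℕ) (x : Ω), i ∈ T → x ∈ Bl i → F x = f i x := by
    intro i x hi hx
    have hex : ∃ j, j ∈ T ∧ x ∈ Bl j := ⟨i, hi, hx⟩
    rw [hF]
    simp only [hex, dif_pos]
    obtain ⟨hjT, hjx⟩ := hex.choose_spec
    rw [hd _ _ _ hjx hx]
  have Finvval : ∀ (i : ℕ) (x : Ω), i ∈ T → x ∈ Bl i → Finv x = (f i)⁻¹ x := by
    intro i x hi hx
    have hex : ∃ j, j ∈ T ∧ x ∈ Bl j := ⟨i, hi, hx⟩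
    rw [hFinv]
    simp only [hex, dif_pos]
    obtain ⟨hjT, hjx⟩ := hex.choose_spec
    rw [hd _ _ _ hjx hx]
  have key1 : ∀ x ∈ A, F x ∈ A ∧ Finv (F x) = x := by
    rintro x ⟨i, hi, hx⟩
    have h1 : F x = f i x := Fval i x hi hx
    have h2 : f i x ∈ Bl i := apply_mem_of (hf i) hx
    constructor
    · rw [h1]; exact ⟨i, hi, h2⟩
    · rw [h1, Finvval i _ hi h2]
      simp
  have key2 : ∀ x ∈ A, Finv x ∈ A ∧ F (Finv x) = x := by
    rintro x ⟨i, hi, hx⟩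
    have h1 : Finv x = (f i)⁻¹ x := Finvval i x hi hx
    have h2 : (f i)⁻¹ x ∈ Bl i := inv_apply_mem_of (hf i) hx
    constructor
    · rw [h1]; exact ⟨i, hi, h2⟩
    · rw [h1, Fval i _ hi h2]
      simp
  obtain ⟨p, hp1, hp2⟩ := perm_piecewise A F Finv key1 key2
  have prop1 : ∀ i, i ∈ T → ∀ x ∈ Bl i, p x = f i x := by
    intro i hi x hx
    rw [hp1 x ⟨i, hi, hx⟩, Fval i x hi hx]
  have prop2 : ∀ x, (∀ i, i ∈ T → x ∉ Bl i) → p x = x := by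
    intro x hx
    apply hp2
    rintro ⟨i, hi, hxi⟩
    exact hx i hi hxi
  refine ⟨p, prop1, prop2, ?_⟩
  intro i hi x hx
  have h2 : (f i)⁻¹ x ∈ Bl i := inv_apply_mem_of (hf i) hx
  have : p ((f i)⁻¹ x) = x := by rw [prop1 i hi _ h2]; simp
  calc p⁻¹ x = p⁻¹ (p ((f i)⁻¹ x)) := by rw [this]
    _ = (f i)⁻¹ x := by simp

lemma pigeonhole (G : Subgroup (Equiv.Perm Ω))
    (hG : Cardinal.mk (Equiv.Perm Ω ⧸ G) < 2 ^ Cardinal.aleph0)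
    (F : (ℕ → Bool) → Equiv.Perm Ω) : ∃ r s, r ≠ s ∧ (F r)⁻¹ * F s ∈ G := by
  by_contra h
  push_neg at h
  have hinj : Function.Injective (fun r => (QuotientGroup.mk (F r) : Equiv.Perm Ω ⧸ G)) := by
    intro r s hrs
    by_contra hne
    exact h r s hne (QuotientGroup.eq.mp hrs)
  have hcard : #(ℕ → Bool) = 2 ^ Cardinal.aleph0 := by
    rw [← Cardinal.mk_bool, ← Cardinal.mk_nat, Cardinal.power_def]
  have h1 := Cardinal.lift_mk_le'.mpr ⟨⟨_, hinj⟩⟩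
  rw [hcard] at h1
  have h2 := Cardinal.lift_lt.mpr hG
  rw [Cardinal.lift_power, Cardinal.lift_two, Cardinal.lift_aleph0] at h1 h2
  exact absurd (lt_of_le_of_lt h1 h2) (lt_irrefl _)

/-- An almost disjoint family of infinite subsets of ℕ indexed by `ℕ → Bool`. -/
lemma adFamily : ∃ D : (ℕ → Bool) → Set ℕ, (∀ r, (D r).Infinite) ∧
    ∀ r s, r ≠ s → (D r ∩ D s).Finite := by
  obtain ⟨lb⟩ : Nonempty (List Bool ≃ ℕ) := nonempty_equiv_of_countable
  set pre : (ℕ → Bool) → ℕ → ℕ := fun r n => lb ((List.range n).map r) with hpre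
  have pinj : ∀ r, Function.Injective (pre r) := by
    intro r a b hab
    have := lb.injective hab
    have hlen := congrArg List.length this
    simpa using hlen
  refine ⟨fun r => Set.range (pre r), fun r => Set.infinite_range_of_injective (pinj r), ?_⟩
  intro r s hrs
  have hex : ∃ n, r n ≠ s n := by
    by_contra hc
    push_neg at hc
    exact hrs (funext hc)
  set n₀ := Nat.find hex with hn₀
  have hsub : Set.range (pre r) ∩ Set.range (pre s) ⊆ (pre r) '' (Set.Iic n₀) := by
    rintro x ⟨⟨n, rfl⟩, ⟨m, hm⟩⟩
    have hlists := lb.injective hm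
    have hlen : m = n := by
      have := congrArg List.length hlists
      simpa using this
    subst hlen
    have hcomp : ∀ i, i < m → s i = r i := by
      intro i hi
      have h1 := List.getElem_of_eq hlists (show i < ((List.range m).map s).length by
        simpa using hi)
      simpa using h1
    have hmle : m ≤ n₀ := by
      by_contra hgt
      push_neg at hgt
      exact (Nat.find_spec hex) ((hcomp n₀ hgt).symm)
    exact ⟨m, hmle, rfl⟩
  exact Set.Finite.subset ((Set.finite_Iic n₀).image _) hsub


/-- A permutation with infinite support admits an infinite set `X` with `ν X ∩ X = ∅`. -/
lemma exists_shadow (ν : Equiv.Perm Ω) (h : {x | ν x ≠ x}.Infinite) :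
    ∃ X : Set Ω, X ⊆ {x | ν x ≠ x} ∧ X.Infinite ∧ ∀ x ∈ X, ν x ∉ X := by
  classical
  have hne : ∀ s : Finset Ω,
      ({x | ν x ≠ x} \ (↑s ∪ ⇑ν '' ↑s ∪ ⇑ν⁻¹ '' ↑s)).Nonempty := by
    intro s
    apply Set.Infinite.nonempty
    apply h.diff
    exact ((s.finite_toSet.union (s.finite_toSet.image _)).union (s.finite_toSet.image _))
  choose step hstep using hne
  set acc : ℕ → Finset Ω := fun n => Nat.rec ∅ (fun _ a => insert (step a) a) n with hacc
  set x : ℕ → Ω := fun n => step (acc n) with hx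
  have haccsucc : ∀ n, acc (n + 1) = insert (x n) (acc n) := fun n => rfl
  have hmem : ∀ n m, m < n → x m ∈ acc n := by
    intro n
    induction n with
    | zero => intro m hm; omega
    | succ k ih =>
      intro m hm
      rw [haccsucc]
      rcases Nat.lt_succ_iff_lt_or_eq.mp hm with h' | h'
      · exact Finset.mem_insert_of_mem (ih m h')
      · rw [h']; exact Finset.mem_insert_self _ _
  have hs1 : ∀ n, ν (x n) ≠ x n := fun n => (hstep (acc n)).1
  have hs2 : ∀ n, x n ∉ (↑(acc n) : Set Ω) ∪ ⇑ν '' ↑(acc n) ∪ ⇑ν⁻¹ '' ↑(acc n) :=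
    fun n => (hstep (acc n)).2
  have hxinj : Function.Injective x := by
    intro a b hab
    by_contra hne'
    rcases Nat.lt_or_ge a b with h' | h'
    · exact hs2 b (Or.inl (Or.inl (by rw [← hab]; exact_mod_cast hmem b a h')))
    · have h'' : b < a := lt_of_le_of_ne h' (Ne.symm hne')
      exact hs2 a (Or.inl (Or.inl (by rw [hab]; exact_mod_cast hmem a b h'')))
  refine ⟨Set.range x, ?_, Set.infinite_range_of_injective hxinj, ?_⟩
  · rintro y ⟨n, rfl⟩; exact hs1 n
  · rintro y ⟨m, rfl⟩ ⟨n, hn⟩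
    rcases Nat.lt_trichotomy m n with h' | h' | h'
    · exact hs2 n (Or.inl (Or.inr ⟨x m, by exact_mod_cast hmem n m h', hn.symm⟩))
    · exact hs1 m (by rw [h'] at hn ⊢; exact hn.symm)
    · refine hs2 m (Or.inr ⟨x n, by exact_mod_cast hmem m n h', ?_⟩)
      rw [hn]; simp

/-- Commutators of permutations supported on `X` belong to `N`, when `N` is normalized by
`symOn A`, contains `ν`, and `ν X ∩ X = ∅`. -/
lemma comm_mem (N : Subgroup (Equiv.Perm Ω)) (A X : Set Ω) (hXA : X ⊆ A)
    (ν : Equiv.Perm Ω) (hν : ν ∈ N)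
    (hnorm : ∀ σ ∈ symOn A, ∀ n ∈ N, σ * n * σ⁻¹ ∈ N)
    (hX : ∀ x ∈ X, ν x ∉ X) :
    ∀ h h' : Equiv.Perm Ω, h ∈ symOn X → h' ∈ symOn X → h * h' * h⁻¹ * h'⁻¹ ∈ N := by
  intro h h' hh hh'
  have hw : ∀ k : Equiv.Perm Ω, k ∈ symOn X → ν * k * ν⁻¹ * k⁻¹ ∈ N := by
    intro k hk
    have h1 : k * ν⁻¹ * k⁻¹ ∈ N := hnorm k (symOn_mono hXA hk) ν⁻¹ (inv_mem hν)
    have h2 := mul_mem hν h1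
    have h3 : ν * (k * ν⁻¹ * k⁻¹) = ν * k * ν⁻¹ * k⁻¹ := by group
    rwa [h3] at h2
  have hconj : ν * h' * ν⁻¹ ∈ symOn (⇑ν '' X) := by
    intro z hz
    show ν (h' (ν⁻¹ z)) = z
    have hnz : ν⁻¹ z ∉ X := fun hmemz => hz ⟨ν⁻¹ z, hmemz, by simp⟩
    rw [hh' _ hnz]
    simp
  have hdisj : ∀ z, z ∈ X → z ∈ ⇑ν '' X → False := by
    rintro z hz ⟨y, hy, rfl⟩
    exact hX y hy hz
  have c : Commute h⁻¹ (ν * h' * ν⁻¹) := commute_of_disjoint (inv_mem hh) hconj hdisj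
  have e1 : (ν * h * ν⁻¹ * h⁻¹) * (ν * h' * ν⁻¹ * h'⁻¹) =
      ν * h * ν⁻¹ * (h⁻¹ * (ν * h' * ν⁻¹)) * h'⁻¹ := by group
  rw [c.eq] at e1
  have e1' : (ν * h * ν⁻¹ * h⁻¹) * (ν * h' * ν⁻¹ * h'⁻¹) = ν * (h * h') * ν⁻¹ * (h' * h)⁻¹ := by
    rw [e1]; group
  have m1 := hw h hh
  have m2 := hw h' hh'
  have m3 := inv_mem (hw (h' * h) (mul_mem hh' hh))
  have hNmem : (ν * h * ν⁻¹ * h⁻¹) * (ν * h' * ν⁻¹ * h'⁻¹) *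
      (ν * (h' * h) * ν⁻¹ * (h' * h)⁻¹)⁻¹ ∈ N := mul_mem (mul_mem m1 m2) m3
  rw [e1'] at hNmem
  have e2 : ν * (h * h') * ν⁻¹ * (h' * h)⁻¹ * (ν * (h' * h) * ν⁻¹ * (h' * h)⁻¹)⁻¹ =
      ν * (h * h' * h⁻¹ * h'⁻¹) * ν⁻¹ := by group
  rw [e2] at hNmem
  have hfin : h * h' * h⁻¹ * h'⁻¹ = ν⁻¹ * (ν * (h * h' * h⁻¹ * h'⁻¹) * ν⁻¹) * ν := by group
  rw [hfin]
  exact mul_mem (mul_mem (inv_mem hν) hNmem) hν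

/-- Transport of a permutation of `ℕ × ℤ` to a permutation of `Ω` supported on `X`. -/
lemma transport (X : Set Ω) (e : ℕ × ℤ ≃ ↥X) (q : Equiv.Perm (ℕ × ℤ)) :
    ∃ Q : Equiv.Perm Ω, Q ∈ symOn X ∧ (∀ z, Q ↑(e z) = ↑(e (q z))) ∧
      (∀ z, Q⁻¹ ↑(e z) = ↑(e (q⁻¹ z))) := by
  classical
  set F : Ω → Ω := fun ω => if h : ω ∈ X then ↑(e (q (e.symm ⟨ω, h⟩))) else ω with hF
  set Finv : Ω → Ω := fun ω => if h : ω ∈ X then ↑(e (q⁻¹ (e.symm ⟨ω, h⟩))) else ω with hFinv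
  have hFval : ∀ ω, (h : ω ∈ X) → F ω = ↑(e (q (e.symm ⟨ω, h⟩))) := by
    intro ω h; rw [hF]; simp only [h, dif_pos]
  have hFinvval : ∀ ω, (h : ω ∈ X) → Finv ω = ↑(e (q⁻¹ (e.symm ⟨ω, h⟩))) := by
    intro ω h; rw [hFinv]; simp only [h, dif_pos]
  have key1 : ∀ ω ∈ X, F ω ∈ X ∧ Finv (F ω) = ω := by
    intro ω h
    have h1 := hFval ω h
    have hmem : (↑(e (q (e.symm ⟨ω, h⟩))) : Ω) ∈ X := (e (q (e.symm ⟨ω, h⟩))).2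
    constructor
    · rw [h1]; exact hmem
    · rw [h1, hFinvval _ hmem]
      have : (⟨↑(e (q (e.symm ⟨ω, h⟩))), hmem⟩ : ↥X) = e (q (e.symm ⟨ω, h⟩)) := rfl
      rw [this]
      simp
  have key2 : ∀ ω ∈ X, Finv ω ∈ X ∧ F (Finv ω) = ω := by
    intro ω h
    have h1 := hFinvval ω h
    have hmem : (↑(e (q⁻¹ (e.symm ⟨ω, h⟩))) : Ω) ∈ X := (e (q⁻¹ (e.symm ⟨ω, h⟩))).2
    constructor
    · rw [h1]; exact hmem
    · rw [h1, hFval _ hmem]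
      have : (⟨↑(e (q⁻¹ (e.symm ⟨ω, h⟩))), hmem⟩ : ↥X) = e (q⁻¹ (e.symm ⟨ω, h⟩)) := rfl
      rw [this]
      simp
  obtain ⟨Q, hQ1, hQ2⟩ := perm_piecewise X F Finv key1 key2
  have heval : ∀ z, Q ↑(e z) = ↑(e (q z)) := by
    intro z
    have hm : (↑(e z) : Ω) ∈ X := (e z).2
    rw [hQ1 _ hm, hFval _ hm]
    have : (⟨↑(e z), hm⟩ : ↥X) = e z := rfl
    rw [this, Equiv.symm_apply_apply]
  refine ⟨Q, hQ2, heval, ?_⟩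
  intro z
  have h1 : Q ↑(e (q⁻¹ z)) = ↑(e z) := by rw [heval]; simp
  calc Q⁻¹ ↑(e z) = Q⁻¹ (Q ↑(e (q⁻¹ z))) := by rw [h1]
    _ = ↑(e (q⁻¹ z)) := by simp


/-- If `N` contains all commutators of permutations supported on an infinite set `X`,
then `N` contains the full symmetric group on some infinite subset `Y ⊆ X`. -/
lemma symOn_le_of_comm (N : Subgroup (Equiv.Perm Ω)) (X : Set Ω) (hX : X.Infinite)
    (hcomm : ∀ h h' : Equiv.Perm Ω, h ∈ symOn X → h' ∈ symOn X →
      h * h' * h⁻¹ * h'⁻¹ ∈ N) :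
    ∃ Y : Set Ω, Y ⊆ X ∧ Y.Infinite ∧ symOn Y ≤ N := by
  classical
  obtain ⟨e⟩ := equiv_of_denum (ℕ × ℤ) hX
  set Y : Set Ω := Set.range (fun n : ℕ => (↑(e (n, 0)) : Ω)) with hYdef
  have hYX : Y ⊆ X := by rintro y ⟨n, rfl⟩; exact (e (n, 0)).2
  have hYinf : Y.Infinite := by
    apply Set.infinite_range_of_injective
    intro a b hab
    have := e.injective (Subtype.val_injective hab)
    simpa using this
  refine ⟨Y, hYX, hYinf, ?_⟩
  intro f hf
  -- f maps Y to Y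
  have hfY : ∀ n : ℕ, ∃ m : ℕ, f ↑(e (n, 0)) = ↑(e (m, 0)) := by
    intro n
    have : f ↑(e (n, 0)) ∈ Y := apply_mem_of hf ⟨n, rfl⟩
    obtain ⟨m, hm⟩ := this
    exact ⟨m, hm.symm⟩
  have hfY' : ∀ n : ℕ, ∃ m : ℕ, f⁻¹ ↑(e (n, 0)) = ↑(e (m, 0)) := by
    intro n
    have : f⁻¹ ↑(e (n, 0)) ∈ Y := apply_mem_of (inv_mem hf) ⟨n, rfl⟩
    obtain ⟨m, hm⟩ := this
    exact ⟨m, hm.symm⟩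
  choose fh hfh using hfY
  choose fih hfih using hfY'
  have hpair : ∀ n, fih (fh n) = n := by
    intro n
    have h1 : f⁻¹ ↑(e (fh n, 0)) = ↑(e (fih (fh n), 0)) := hfih (fh n)
    rw [← hfh n] at h1
    simp only [Equiv.Perm.coe_inv, Equiv.symm_apply_apply] at h1
    have := e.injective (Subtype.val_injective h1)
    simpa using this.symm
  have hpair' : ∀ n, fh (fih n) = n := by
    intro n
    have h1 : f ↑(e (fih n, 0)) = ↑(e (fh (fih n), 0)) := hfh (fih n)
    rw [← hfih n] at h1
    simp only [Equiv.Perm.coe_inv, Equiv.apply_symm_apply] at h1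
    have := e.injective (Subtype.val_injective h1)
    simpa using this.symm
  set uhat : Equiv.Perm (ℕ × ℤ) :=
    { toFun := fun z => if 0 ≤ z.2 then (fh z.1, z.2) else z
      invFun := fun z => if 0 ≤ z.2 then (fih z.1, z.2) else z
      left_inv := by
        intro z
        by_cases hz : 0 ≤ z.2
        · simp only [hz, if_true, hpair]
        · simp only [hz, if_false]
      right_inv := by
        intro z
        by_cases hz : 0 ≤ z.2
        · simp only [hz, if_true, hpair']
        · simp only [hz, if_false] } with huhat
  set shat : Equiv.Perm (ℕ × ℤ) := Equiv.prodCongr (Equiv.refl ℕ) (Equiv.addRight (1 : ℤ))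
    with hshat
  obtain ⟨U, hU1, hU2, hU3⟩ := transport X e uhat
  obtain ⟨S, hS1, hS2, hS3⟩ := transport X e shat
  have hkey : f = U * S * U⁻¹ * S⁻¹ := by
    apply Equiv.ext
    intro ω
    by_cases hω : ω ∈ X
    · obtain ⟨z, rfl⟩ : ∃ z : ℕ × ℤ, ω = ↑(e z) := ⟨e.symm ⟨ω, hω⟩, by simp⟩
      show f ↑(e z) = U (S (U⁻¹ (S⁻¹ ↑(e z))))
      rw [hS3, hU3, hS2, hU2]
      obtain ⟨n, k⟩ := z
      have hs_inv : shat⁻¹ (n, k) = (n, k - 1) := rfl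
      rw [hs_inv]
      rcases lt_trichotomy k 0 with hk | hk | hk
      · have h1 : uhat⁻¹ (n, k - 1) = (n, k - 1) := by
          show (if 0 ≤ k - 1 then (fih n, k - 1) else (n, k - 1)) = (n, k - 1)
          rw [if_neg (by omega)]
        rw [h1]
        have h2 : shat (n, k - 1) = (n, k) := by
          show (n, k - 1 + 1) = (n, k); congr 1; omega
        rw [h2]
        have h3 : uhat (n, k) = (n, k) := by
          show (if 0 ≤ k then (fh n, k) else (n, k)) = (n, k)
          rw [if_neg (by omega)]
        rw [h3]
        -- f fixes e (n,k) since k ≠ 0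
        apply hf
        rintro ⟨m, hm⟩
        have := e.injective (Subtype.val_injective hm.symm)
        have : k = 0 := congrArg Prod.snd this
        omega
      · subst hk
        have h1 : uhat⁻¹ (n, (0:ℤ) - 1) = (n, (0:ℤ) - 1) := by
          show (if (0:ℤ) ≤ 0 - 1 then (fih n, 0 - 1) else (n, 0 - 1)) = (n, 0 - 1)
          rw [if_neg (by omega)]
        rw [h1]
        have h2 : shat (n, (0:ℤ) - 1) = (n, 0) := by
          show (n, 0 - 1 + 1) = (n, (0:ℤ)); norm_num
        rw [h2]
        have h3 : uhat (n, (0:ℤ)) = (fh n, 0) := by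
          show (if (0:ℤ) ≤ 0 then (fh n, 0) else (n, 0)) = (fh n, 0)
          rw [if_pos le_rfl]
        rw [h3]
        exact hfh n
      · have h1 : uhat⁻¹ (n, k - 1) = (fih n, k - 1) := by
          show (if 0 ≤ k - 1 then (fih n, k - 1) else (n, k - 1)) = (fih n, k - 1)
          rw [if_pos (by omega)]
        rw [h1]
        have h2 : shat (fih n, k - 1) = (fih n, k) := by
          show (fih n, k - 1 + 1) = (fih n, k); congr 1; omega
        rw [h2]
        have h3 : uhat (fih n, k) = (n, k) := by
          show (if 0 ≤ k then (fh (fih n), k) else (fih n, k)) = (n, k)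
          rw [if_pos (by omega), hpair']
        rw [h3]
        apply hf
        rintro ⟨m, hm⟩
        have := e.injective (Subtype.val_injective hm.symm)
        have : k = 0 := congrArg Prod.snd this
        omega
    · show f ω = (U * S * U⁻¹ * S⁻¹) ω
      have hωY : ω ∉ Y := fun hy => hω (hYX hy)
      rw [hf ω hωY]
      show ω = U (S (U⁻¹ (S⁻¹ ω)))
      rw [(inv_mem hS1 : S⁻¹ ∈ symOn X) ω hω, (inv_mem hU1 : U⁻¹ ∈ symOn X) ω hω,
        hS1 ω hω, hU1 ω hω]
  rw [hkey]
  exact hcomm U S hU1 hS1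


/-- Main case of the generation lemma. -/
lemma lemC_main (H : Subgroup (Equiv.Perm Ω)) (A₁ A₂ : Set Ω)
    (h1 : symOn A₁ ≤ H) (h2 : symOn A₂ ≤ H) (hI : (A₁ ∩ A₂).Infinite)
    (σ : Equiv.Perm Ω) (hσ : σ ∈ symOn (A₁ ∪ A₂))
    (hR : {x | x ∈ A₂ ∧ σ x ∉ A₁}.Infinite) : σ ∈ H := by
  classical
  set W := A₁ ∪ A₂ with hW
  set C := A₂ \ A₁ with hC
  set Z := {x | x ∈ A₂ ∧ σ x ∉ A₁} with hZ
  have hZA₂ : Z ⊆ A₂ := fun x hx => hx.1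
  have hCA₂ : C ⊆ A₂ := fun x hx => hx.1
  have hA₂C : (A₂ \ C).Infinite := by
    apply hI.mono
    intro x hx
    exact ⟨hx.2, fun hc => hc.2 hx.1⟩
  obtain ⟨β, hβ1, hβ2⟩ := compress_perm A₂ C Z hCA₂ hZA₂ hR hA₂C
  have hφ : ∀ c ∈ C, σ (β c) ∈ C := by
    intro c hc
    have hz : β c ∈ Z := hβ2 c hc
    have hw : σ (β c) ∈ W := apply_mem_of hσ (Or.inr hz.1)
    rcases hw with hw1 | hw2
    · exact absurd hw1 hz.2
    · exact ⟨hw2, hz.2⟩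
  set g : Ω → Ω := fun x => σ (β x) with hg
  have hginj : Function.Injective g := fun a b hab => β.injective (σ.injective hab)
  set X' : Set Ω := g '' C with hX'
  have hX'C : X' ⊆ C := by rintro y ⟨c, hc, rfl⟩; exact hφ c hc
  have hX'A₂ : X' ⊆ A₂ := fun y hy => (hX'C hy).1
  have hA₂X' : (A₂ \ X').Infinite := hA₂C.mono (fun x hx => ⟨hx.1, fun h' => hx.2 (hX'C h')⟩)
  obtain ⟨γ, hγ1, hγ2, _⟩ := ext_perm A₂ C X' hCA₂ hX'A₂ (Equiv.Set.image g C hginj)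
    hA₂C hA₂X'
  have hγval : ∀ c ∈ C, γ c = σ (β c) := by
    intro c hc
    rw [hγ1 c hc]
    rfl
  set τ := γ⁻¹ * σ * β with hτ
  have hτA₁ : τ ∈ symOn A₁ := by
    intro x hx
    show γ⁻¹ (σ (β x)) = x
    by_cases hxA₂ : x ∈ A₂
    · have hxC : x ∈ C := ⟨hxA₂, hx⟩
      rw [← hγval x hxC]
      simp
    · have hxW : x ∉ W := fun hw => hw.elim hx hxA₂
      rw [hβ1 x hxA₂, hσ x hxW, (inv_mem hγ2 : γ⁻¹ ∈ symOn A₂) x hxA₂]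
  have hfinal : σ = γ * τ * β⁻¹ := by rw [hτ]; group
  rw [hfinal]
  exact mul_mem (mul_mem (h2 hγ2) (h1 hτA₁)) (h2 (inv_mem hβ1))

/-- Generation lemma, case where `A₂ \ A₁` is finite. -/
lemma lemC_fin (H : Subgroup (Equiv.Perm Ω)) (A₁ A₂ : Set Ω)
    (h1 : symOn A₁ ≤ H) (h2 : symOn A₂ ≤ H) (hI : (A₁ ∩ A₂).Infinite)
    (hC : (A₂ \ A₁).Finite) : symOn (A₁ ∪ A₂) ≤ H := by
  classical
  intro σ hσ
  set W := A₁ ∪ A₂ with hW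
  set C := A₂ \ A₁ with hCdef
  set X : Set Ω := (⇑σ '' C) ∩ A₁ with hXdef
  have hXfin : X.Finite := (hC.image _).inter_of_left _
  have hXA₁ : X ⊆ A₁ := fun x hx => hx.2
  have hIA₁ : A₁ ∩ A₂ ⊆ A₁ := Set.inter_subset_left
  have hA₁X : (A₁ \ X).Infinite := ((hI.mono hIA₁).diff hXfin)
  obtain ⟨κ, hκ1, hκ2⟩ := compress_perm A₁ X (A₁ ∩ A₂) hXA₁ hIA₁ hI hA₁X
  have hφ : ∀ c ∈ C, κ (σ c) ∈ A₂ := by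
    intro c hc
    have hw : σ c ∈ W := apply_mem_of hσ (Or.inr hc.1)
    rcases hw with hw1 | hw2
    · exact (hκ2 _ ⟨Set.mem_image_of_mem _ hc, hw1⟩).2
    · by_cases hσc : σ c ∈ A₁
      · exact (hκ2 _ ⟨Set.mem_image_of_mem _ hc, hσc⟩).2
      · rw [hκ1 _ hσc]; exact hw2
  set g : Ω → Ω := fun x => κ (σ x) with hg
  have hginj : Function.Injective g := fun a b hab => σ.injective (κ.injective hab)
  set X' : Set Ω := g '' C with hX'
  have hX'A₂ : X' ⊆ A₂ := by rintro y ⟨c, hc, rfl⟩; exact hφ c hc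
  have hCA₂ : C ⊆ A₂ := fun x hx => hx.1
  have hA₂C : (A₂ \ C).Infinite := by
    apply hI.mono
    intro x hx
    exact ⟨hx.2, fun hc => hc.2 hx.1⟩
  have hA₂X' : (A₂ \ X').Infinite := by
    apply Set.Infinite.diff
    · exact hI.mono (fun x hx => hx.2)
    · exact hC.image g
  obtain ⟨γ, hγ1, hγ2, _⟩ := ext_perm A₂ C X' hCA₂ hX'A₂ (Equiv.Set.image g C hginj)
    hA₂C hA₂X'
  have hγval : ∀ c ∈ C, γ c = κ (σ c) := by
    intro c hc
    rw [hγ1 c hc]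
    rfl
  set τ := γ⁻¹ * κ * σ with hτ
  have hτA₁ : τ ∈ symOn A₁ := by
    intro x hx
    show γ⁻¹ (κ (σ x)) = x
    by_cases hxA₂ : x ∈ A₂
    · have hxC : x ∈ C := ⟨hxA₂, hx⟩
      rw [← hγval x hxC]
      simp
    · have hxW : x ∉ W := fun hw => hw.elim hx hxA₂
      rw [hσ x hxW, hκ1 x hx, (inv_mem hγ2 : γ⁻¹ ∈ symOn A₂) x hxA₂]
  have hfinal : σ = κ⁻¹ * γ * τ := by rw [hτ]; group
  rw [hfinal]
  exact mul_mem (mul_mem (h1 (inv_mem hκ1)) (h2 hγ2)) (h1 hτA₁)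

/-- Generation lemma, case where all three pieces are infinite. -/
lemma lemC_inf (H : Subgroup (Equiv.Perm Ω)) (A₁ A₂ : Set Ω)
    (h1 : symOn A₁ ≤ H) (h2 : symOn A₂ ≤ H) (hI : (A₁ ∩ A₂).Infinite)
    (hC : (A₂ \ A₁).Infinite) (hC₁ : (A₁ \ A₂).Infinite) : symOn (A₁ ∪ A₂) ≤ H := by
  classical
  intro σ hσ
  by_cases hcase : {x | x ∈ A₂ ∧ σ x ∉ A₁}.Infinite
  · exact lemC_main H A₁ A₂ h1 h2 hI σ hσ hcase
  · have hF₂ : {x | x ∈ A₂ ∧ σ x ∉ A₁}.Finite := Set.not_infinite.mp hcase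
    set W := A₁ ∪ A₂ with hW
    set C := A₂ \ A₁ with hCdef
    set C₁ := A₁ \ A₂ with hC₁def
    obtain ⟨Z, Z', hZI, hZ'I, hZdisj, hZinf, hZ'inf⟩ := split2 hI
    obtain ⟨e₂⟩ := equiv_of_infinite hC hZinf
    obtain ⟨θ₂, hθ₂1, hθ₂2, hθ₂3⟩ := ext_perm A₂ C Z (fun x hx => hx.1)
      (fun x hx => (hZI hx).2) e₂
      (hI.mono (fun x hx => ⟨hx.2, fun hc => hc.2 hx.1⟩))
      (hC.mono (fun x hx => ⟨hx.1, fun hz => hx.2 (hZI hz).1⟩))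
    obtain ⟨e₁⟩ := equiv_of_infinite hZinf hC₁
    obtain ⟨θ₁, hθ₁1, hθ₁2, hθ₁3⟩ := ext_perm A₁ Z C₁ (fun x hx => (hZI hx).1)
      (fun x hx => hx.1) e₁
      (hC₁.mono (fun x hx => ⟨hx.1, fun hz => hx.2 (hZI hz).2⟩))
      (hI.mono (fun x hx => ⟨hx.1, fun hc => hc.2 hx.2⟩))
    set ψ := θ₁ * θ₂ with hψ
    have hψC : ∀ c ∈ C, ψ c ∈ C₁ := by
      intro c hc
      show θ₁ (θ₂ c) ∈ C₁
      have h1' : θ₂ c ∈ Z := by rw [← hθ₂3]; exact Set.mem_image_of_mem _ hc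
      rw [← hθ₁3]
      exact Set.mem_image_of_mem _ h1'
    have hψinvC₁ : ∀ y ∈ C₁, ψ⁻¹ y ∈ C := by
      intro y hy
      have h1' : θ₁⁻¹ y ∈ Z := by
        obtain ⟨z, hz, hzeq⟩ := (show y ∈ ⇑θ₁ '' Z by rw [hθ₁3]; exact hy)
        rw [← hzeq]
        simpa using hz
      have h2' : θ₂⁻¹ (θ₁⁻¹ y) ∈ C := by
        obtain ⟨c, hcC, hceq⟩ := (show θ₁⁻¹ y ∈ ⇑θ₂ '' C by rw [hθ₂3]; exact h1')
        rw [← hceq]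
        simpa using hcC
      show ψ⁻¹ y ∈ C
      rw [hψ]
      simpa using h2'
    have hψW : ψ ∈ symOn W :=
      mul_mem (symOn_mono Set.subset_union_left hθ₁2)
        (symOn_mono Set.subset_union_right hθ₂2)
    set σ' := σ * ψ with hσ'
    have hσ'W : σ' ∈ symOn W := mul_mem hσ hψW
    -- the set E
    have hpreC : (⇑σ⁻¹ '' C) ⊆ C₁ ∪ {x | x ∈ A₂ ∧ σ x ∉ A₁} := by
      rintro y ⟨c, hcC, rfl⟩
      have hσx : σ (σ⁻¹ c) ∈ C := by simpa using hcC
      have hxW : σ⁻¹ c ∈ W := by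
        by_contra hxW
        rw [hσ _ hxW] at hσx
        exact hxW (Or.inr hσx.1)
      rcases hxW with hy1 | hy2
      · by_cases hy2' : σ⁻¹ c ∈ A₂
        · exact Or.inr ⟨hy2', hσx.2⟩
        · exact Or.inl ⟨hy1, hy2'⟩
      · exact Or.inr ⟨hy2, hσx.2⟩
    have hpreinf : (⇑σ⁻¹ '' C).Infinite := hC.image (σ⁻¹.injective.injOn)
    have hE : ((⇑σ⁻¹ '' C) \ {x | x ∈ A₂ ∧ σ x ∉ A₁}).Infinite := hpreinf.diff hF₂
    have hR' : {x | x ∈ A₂ ∧ σ' x ∉ A₁}.Infinite := by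
      refine (hE.image (ψ⁻¹.injective.injOn)).mono ?_
      rintro x ⟨y, ⟨hy1, hy2⟩, rfl⟩
      have hyC₁ : y ∈ C₁ := (hpreC hy1).resolve_right hy2
      have hx1 : ψ⁻¹ y ∈ C := hψinvC₁ y hyC₁
      refine ⟨hx1.1, ?_⟩
      have heq1 : σ' (ψ⁻¹ y) = σ y := by
        rw [hσ']
        simp
      rw [heq1]
      obtain ⟨c, hcC, hc⟩ := hy1
      have heq2 : σ y = c := by rw [← hc]; simp
      rw [heq2]
      exact hcC.2
    have hσ'H : σ' ∈ H := lemC_main H A₁ A₂ h1 h2 hI σ' hσ'W hR'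
    have : σ = σ' * ψ⁻¹ := by rw [hσ']; group
    rw [this]
    exact mul_mem hσ'H (inv_mem (mul_mem (h1 hθ₁2) (h2 hθ₂2)))


/-- Phase 1: a block `A` on which every permutation factors as (element of `G`) * (element
supported on a disjoint set `C`). -/
lemma phase1 (G : Subgroup (Equiv.Perm Ω))
    (hG : Cardinal.mk (Equiv.Perm Ω ⧸ G) < 2 ^ Cardinal.aleph0) :
    ∃ A C : Set Ω, A.Infinite ∧ Aᶜ.Infinite ∧ (∀ x, x ∈ A → x ∈ C → False) ∧
      (∀ σ ∈ symOn A, ∃ g ∈ G, ∃ t ∈ symOn C, σ = g * t) := by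
  classical
  obtain ⟨E⟩ : Nonempty (Ω ≃ ℕ × ℕ) := nonempty_equiv_of_countable
  set Bl : ℕ → Set Ω := fun n => {x | (E x).1 = n + 1} with hBl
  set Cn : ℕ → Set Ω := fun n => {x | n + 1 < (E x).1} with hCn
  have hd : ∀ i j, ∀ x : Ω, x ∈ Bl i → x ∈ Bl j → i = j := by
    intro i j x hi hj
    have : i + 1 = j + 1 := by rw [← hi, ← hj]
    omega
  have hBlinf : ∀ n, (Bl n).Infinite := by
    intro n
    apply Set.infinite_of_injective_forall_mem (f := fun k : ℕ => E.symm (n + 1, k))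
    · intro a b hab
      have := E.symm.injective hab
      simpa using this
    · intro k
      show (E (E.symm (n + 1, k))).1 = n + 1
      simp
  have hBlc : ∀ n, (Bl n)ᶜ.Infinite := by
    intro n
    apply Set.infinite_of_injective_forall_mem (f := fun k : ℕ => E.symm (0, k))
    · intro a b hab
      have := E.symm.injective hab
      simpa using this
    · intro k
      show ¬(E (E.symm (0, k))).1 = n + 1
      simp
  have hBlCn : ∀ n, ∀ x, x ∈ Bl n → x ∈ Cn n → False := by
    intro n x h1 h2
    have h1' : (E x).1 = n + 1 := h1
    have h2' : n + 1 < (E x).1 := h2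
    omega
  by_cases hcase : ∀ n : ℕ, ∃ σ ∈ symOn (Bl n),
      (∀ g ∈ G, ∀ t ∈ symOn (Cn n), σ ≠ g * t) ∧
      (∀ g ∈ G, ∀ t ∈ symOn (Cn n), σ⁻¹ ≠ g * t)
  · -- contradiction via gluing and pigeonhole
    exfalso
    choose σf hσf1 hσf2 hσf3 using hcase
    have hglue : ∀ r : ℕ → Bool, ∃ p : Equiv.Perm Ω,
        (∀ i, i ∈ {i | r i = true} → ∀ x ∈ Bl i, p x = σf i x) ∧
        (∀ x, (∀ i, i ∈ {i | r i = true} → x ∉ Bl i) → p x = x) ∧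
        (∀ i, i ∈ {i | r i = true} → ∀ x ∈ Bl i, p⁻¹ x = (σf i)⁻¹ x) :=
      fun r => glue_exists Bl hd σf hσf1 {i | r i = true}
    choose p hp1 hp2 hp3 using hglue
    obtain ⟨r, s, hrs, hq⟩ := pigeonhole G hG p
    set q := (p r)⁻¹ * p s with hqdef
    have hex : ∃ n, r n ≠ s n := by
      by_contra hc
      push_neg at hc
      exact hrs (funext hc)
    set n₀ := Nat.find hex with hn₀
    have hbelow : ∀ i, i < n₀ → r i = s i := fun i hi => by
      have := Nat.find_min hex hi
      simpa using this
    -- common computation: q fixes points outside Bl n₀ ∪ Cn n₀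
    have hqfix : ∀ x, x ∉ Cn n₀ → x ∉ Bl n₀ → q x = x := by
      intro x hx1 hx2
      have hxi : ∀ i, x ∈ Bl i → i < n₀ := by
        intro i hxi
        have h1 : (E x).1 = i + 1 := hxi
        have h2 : ¬(n₀ + 1 < (E x).1) := hx1
        have h3 : i ≠ n₀ := fun h => hx2 (h ▸ hxi)
        omega
      show (p r)⁻¹ (p s x) = x
      by_cases hxB : ∃ i, s i = true ∧ x ∈ Bl i
      · obtain ⟨i, hsi, hxBi⟩ := hxB
        have hilt := hxi i hxBi
        have hri : r i = true := by rw [hbelow i hilt]; exact hsi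
        rw [hp1 s i hsi x hxBi]
        have hmem : σf i x ∈ Bl i := apply_mem_of (hσf1 i) hxBi
        rw [hp3 r i hri _ hmem]
        simp
      · push_neg at hxB
        rw [hp2 s x (fun i hi hxBi => hxB i hi hxBi)]
        have hnr : ∀ i, r i = true → x ∉ Bl i := by
          intro i hri hxBi
          have hilt := hxi i hxBi
          exact hxB i (by rw [← hbelow i hilt]; exact hri) hxBi
        have : p r x = x := hp2 r x hnr
        calc (p r)⁻¹ x = (p r)⁻¹ (p r x) := by rw [this]
          _ = x := by simp
    rcases Bool.dichotomy (s n₀) with hsn | hsn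
    · -- s n₀ = false, hence r n₀ = true : q acts as (σf n₀)⁻¹ on Bl n₀
      have hrn : r n₀ = true := by
        have h := Nat.find_spec hex
        rw [hsn] at h
        revert h
        cases r n₀ <;> simp
      set τ := (σf n₀) * q with hτdef
      have hτ : τ ∈ symOn (Cn n₀) := by
        intro x hx
        show σf n₀ ((p r)⁻¹ (p s x)) = x
        by_cases hxB : x ∈ Bl n₀
        · have h1 : p s x = x := by
            apply hp2
            intro i hi hxBi
            have hin : i = n₀ := hd i n₀ x hxBi hxB
            rw [hin] at hi
            have hcontr : s n₀ = true := hi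
            rw [hsn] at hcontr
            cases hcontr
          rw [h1, hp3 r n₀ hrn x hxB]
          simp
        · have h1 : q x = x := hqfix x hx hxB
          have h1' : (p r)⁻¹ (p s x) = x := h1
          rw [h1']
          exact hσf1 n₀ x hxB
      have : (σf n₀)⁻¹ = q * τ⁻¹ := by rw [hτdef]; group
      exact hσf3 n₀ q hq τ⁻¹ (inv_mem hτ) this
    · -- s n₀ = true, r n₀ = false : q acts as σf n₀ on Bl n₀
      have hrn : r n₀ = false := by
        have h := Nat.find_spec hex
        rw [hsn] at h
        revert h
        cases r n₀ <;> simp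
      set τ := (σf n₀)⁻¹ * q with hτdef
      have hτ : τ ∈ symOn (Cn n₀) := by
        intro x hx
        show (σf n₀)⁻¹ ((p r)⁻¹ (p s x)) = x
        by_cases hxB : x ∈ Bl n₀
        · rw [hp1 s n₀ (show n₀ ∈ {i | s i = true} from hsn) x hxB]
          have hmem : σf n₀ x ∈ Bl n₀ := apply_mem_of (hσf1 n₀) hxB
          have h1 : p r (σf n₀ x) = σf n₀ x := by
            apply hp2
            intro i hi hxBi
            have hin : i = n₀ := hd i n₀ _ hxBi hmem
            rw [hin] at hi
            have hcontr : r n₀ = true := hi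
            rw [hrn] at hcontr
            cases hcontr
          have h2 : (p r)⁻¹ (σf n₀ x) = σf n₀ x := by
            calc (p r)⁻¹ (σf n₀ x) = (p r)⁻¹ (p r (σf n₀ x)) := by rw [h1]
              _ = σf n₀ x := by simp
          rw [h2]
          simp
        · have h1 : q x = x := hqfix x hx hxB
          have h1' : (p r)⁻¹ (p s x) = x := h1
          rw [h1']
          exact (inv_mem (hσf1 n₀) : (σf n₀)⁻¹ ∈ symOn (Bl n₀)) x hxB
      have : σf n₀ = q * τ⁻¹ := by rw [hτdef]; group
      exact hσf2 n₀ q hq τ⁻¹ (inv_mem hτ) this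
  · push_neg at hcase
    obtain ⟨n, hn⟩ := hcase
    refine ⟨Bl n, Cn n, hBlinf n, hBlc n, hBlCn n, ?_⟩
    intro σ hσ
    by_cases hdir : ∃ g ∈ G, ∃ t ∈ symOn (Cn n), σ = g * t
    · exact hdir
    · push_neg at hdir
      have h1 : ∀ g ∈ G, ∀ t ∈ symOn (Cn n), σ ≠ g * t := hdir
      have h2 := hn σ hσ h1
      obtain ⟨g, hg, t, ht, hdec⟩ := h2
      -- σ⁻¹ = g * t, so σ = t⁻¹ * g⁻¹, and σ commutes with t
      have hc : Commute σ t := commute_of_disjoint hσ ht (hBlCn n)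
      have hσeq : σ = t⁻¹ * g⁻¹ := by
        calc σ = (σ⁻¹)⁻¹ := by simp
          _ = (g * t)⁻¹ := by rw [hdec]
          _ = t⁻¹ * g⁻¹ := by group
      have hgi : g⁻¹ = t * σ := by rw [hσeq]; group
      have hgi2 : g⁻¹ = σ * t := by rw [hgi, ← hc.eq]
      refine ⟨g⁻¹, inv_mem hg, t⁻¹, inv_mem ht, ?_⟩
      rw [hgi2]
      group


/-- Bridge: from phase 1 data, `G` contains the full symmetric group on some moiety. -/
lemma bridge (G : Subgroup (Equiv.Perm Ω))
    (hG : Cardinal.mk (Equiv.Perm Ω ⧸ G) < 2 ^ Cardinal.aleph0)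
    (A C : Set Ω) (hA : A.Infinite) (hAc : Aᶜ.Infinite)
    (hdisj : ∀ x, x ∈ A → x ∈ C → False)
    (hstar : ∀ σ ∈ symOn A, ∃ g ∈ G, ∃ t ∈ symOn C, σ = g * t) :
    ∃ Y : Set Ω, Y.Infinite ∧ Yᶜ.Infinite ∧ symOn Y ≤ G := by
  classical
  set N := G ⊓ symOn A with hN
  have hnorm : ∀ σ ∈ symOn A, ∀ n ∈ N, σ * n * σ⁻¹ ∈ N := by
    intro σ hσ n hn
    obtain ⟨hn1, hn2⟩ := Subgroup.mem_inf.mp hn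
    obtain ⟨g, hg, t, ht, hdec⟩ := hstar σ hσ
    have hc : Commute t n := commute_of_disjoint ht hn2 (fun x hxC hxA => hdisj x hxA hxC)
    have htn : t * n * t⁻¹ = n := by rw [hc.eq]; group
    have heq : σ * n * σ⁻¹ = g * (t * n * t⁻¹) * g⁻¹ := by rw [hdec]; group
    rw [hN, Subgroup.mem_inf]
    constructor
    · rw [heq, htn]
      exact mul_mem (mul_mem hg hn1) (inv_mem hg)
    · intro x hx
      show σ (n (σ⁻¹ x)) = x
      rw [(symOn A).inv_mem hσ x hx, hn2 x hx, hσ x hx]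
  -- construct an element of N with infinite support
  obtain ⟨D, hDinf, hDad⟩ := adFamily
  obtain ⟨ea⟩ := equiv_of_denum (ℕ × Bool) hA
  set pt : ℕ × Bool → Ω := fun z => ↑(ea z) with hpt
  have hptinj : Function.Injective pt := fun a b hab => ea.injective (Subtype.val_injective hab)
  have hptA : ∀ z, pt z ∈ A := fun z => (ea z).2
  set Bl : ℕ → Set Ω := fun i => {pt (i, false), pt (i, true)} with hBl
  have hd : ∀ i j, ∀ x : Ω, x ∈ Bl i → x ∈ Bl j → i = j := by
    intro i j x hi hj
    rcases hi with hi | hi <;> rcases hj with hj | hj <;>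
    · rw [hi] at hj
      have := hptinj hj
      simp_all
  set tw : ℕ → Equiv.Perm Ω := fun i => Equiv.swap (pt (i, false)) (pt (i, true)) with htw
  have htwmem : ∀ i, tw i ∈ symOn (Bl i) := by
    intro i x hx
    apply Equiv.swap_apply_of_ne_of_ne
    · exact fun h => hx (Or.inl h)
    · exact fun h => hx (Or.inr h)
  have hglue : ∀ r : ℕ → Bool, ∃ p : Equiv.Perm Ω,
      (∀ i, i ∈ D r → ∀ x ∈ Bl i, p x = tw i x) ∧
      (∀ x, (∀ i, i ∈ D r → x ∉ Bl i) → p x = x) ∧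
      (∀ i, i ∈ D r → ∀ x ∈ Bl i, p⁻¹ x = (tw i)⁻¹ x) :=
    fun r => glue_exists Bl hd tw htwmem (D r)
  choose u hu1 hu2 hu3 using hglue
  obtain ⟨r, s, hrs, hq⟩ := pigeonhole G hG u
  set ν := (u r)⁻¹ * u s with hν
  have hBlA : ∀ i, Bl i ⊆ A := by
    rintro i x (hx | hx) <;> (rw [hx]; exact hptA _)
  have hνA : ν ∈ symOn A := by
    intro x hx
    show (u r)⁻¹ (u s x) = x
    have h1 : u s x = x := hu2 s x (fun i _ hxB => hx (hBlA i hxB))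
    have h2 : u r x = x := hu2 r x (fun i _ hxB => hx (hBlA i hxB))
    rw [h1]
    calc (u r)⁻¹ x = (u r)⁻¹ (u r x) := by rw [h2]
      _ = x := by simp
  have hνN : ν ∈ N := Subgroup.mem_inf.mpr ⟨hq, hνA⟩
  -- infinite support
  have hsupp : {x | ν x ≠ x}.Infinite := by
    have hsr : (D s \ D r).Infinite := by
      have h1 : D s \ D r = D s \ (D s ∩ D r) := by
        ext i
        simp only [Set.mem_diff, Set.mem_inter_iff]
        tauto
      rw [h1]
      exact (hDinf s).diff (hDad s r (Ne.symm hrs))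
    have hinj2 : Set.InjOn (fun i => pt (i, false)) (D s \ D r) := by
      intro a _ b _ hab
      have := hptinj hab
      simpa using this
    refine (hsr.image hinj2).mono ?_
    rintro x ⟨i, ⟨hiDs, hiDr⟩, rfl⟩
    show ν (pt (i, false)) ≠ pt (i, false)
    have h1 : u s (pt (i, false)) = pt (i, true) := by
      rw [hu1 s i hiDs _ (Or.inl rfl)]
      exact Equiv.swap_apply_left _ _
    have h2 : u r (pt (i, true)) = pt (i, true) := by
      apply hu2
      intro j hjDr hxB
      have : j = i := hd j i _ hxB (Or.inr rfl)
      rw [this] at hjDr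
      exact hiDr hjDr
    have h3 : ν (pt (i, false)) = pt (i, true) := by
      show (u r)⁻¹ (u s (pt (i, false))) = pt (i, true)
      rw [h1]
      calc (u r)⁻¹ (pt (i, true)) = (u r)⁻¹ (u r (pt (i, true))) := by rw [h2]
        _ = pt (i, true) := by simp
    rw [h3]
    intro hcontr
    have := hptinj hcontr
    simp at this
  -- shadow set and commutators
  obtain ⟨X, hXsupp, hXinf, hXsh⟩ := exists_shadow ν hsupp
  have hXA : X ⊆ A := by
    intro x hx
    by_contra hxA
    exact (hXsupp hx) (hνA x hxA)
  have hcomm := comm_mem N A X hXA ν hνN hnorm hXsh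
  obtain ⟨Y, hYX, hYinf, hYN⟩ := symOn_le_of_comm N X hXinf hcomm
  refine ⟨Y, hYinf, ?_, fun σ hσ => (Subgroup.mem_inf.mp (hYN hσ)).1⟩
  apply hAc.mono
  intro x hx
  exact fun hY => hx (hXA (hYX hY))


/-- Phase 2: from a moiety `B` with `symOn B ≤ G`, get a finite `Δ` with
`symOn Δᶜ ≤ G`. -/
lemma phase2 (G : Subgroup (Equiv.Perm Ω))
    (hG : Cardinal.mk (Equiv.Perm Ω ⧸ G) < 2 ^ Cardinal.aleph0)
    (B : Set Ω) (hB : B.Infinite) (hBc : Bᶜ.Infinite) (hBG : symOn B ≤ G) :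
    ∃ Δ : Set Ω, Δ.Finite ∧ symOn Δᶜ ≤ G := by
  classical
  obtain ⟨D, hDinf, hDad⟩ := adFamily
  obtain ⟨eb⟩ := equiv_of_denum ℕ hB
  set pt : ℕ → Ω := fun n => ↑(eb n) with hptdef
  have hptinj : Function.Injective pt := fun a b hab => eb.injective (Subtype.val_injective hab)
  have hptB : ∀ n, pt n ∈ B := fun n => (eb n).2
  set D' : (ℕ → Bool) → Set Ω := fun r => pt '' (D r) with hD'
  have hD'B : ∀ r, D' r ⊆ B := by rintro r x ⟨n, _, rfl⟩; exact hptB n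
  have hD'inf : ∀ r, (D' r).Infinite := fun r => (hDinf r).image (hptinj.injOn)
  have hperm : ∀ r : ℕ → Bool, ∃ h : Equiv.Perm Ω,
      (∀ x, (hx : x ∈ Bᶜ) → True) ∧ h ∈ symOn (Set.univ : Set Ω) ∧ ⇑h '' Bᶜ = D' r := by
    intro r
    obtain ⟨e⟩ := equiv_of_infinite hBc (hD'inf r)
    have hu1 : ((Set.univ : Set Ω) \ Bᶜ).Infinite := by
      apply hB.mono
      intro x hx
      exact ⟨trivial, fun hc => hc hx⟩
    have hu2 : ((Set.univ : Set Ω) \ D' r).Infinite := by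
      apply hBc.mono
      intro x hx
      exact ⟨trivial, fun hd' => hx (hD'B r hd')⟩
    obtain ⟨h, h1, h2, h3⟩ := ext_perm (Set.univ : Set Ω) Bᶜ (D' r)
      (Set.subset_univ _) (Set.subset_univ _) e hu1 hu2
    exact ⟨h, fun _ _ => trivial, h2, h3⟩
  choose h _ _ hh3 using hperm
  obtain ⟨r, s, hrs, hqG⟩ := pigeonhole G hG h
  set g := (h r)⁻¹ * h s with hgdef
  have himg : ∀ (t : ℕ → Bool) (x : Ω), x ∉ B → h t x ∈ D' t := by
    intro t x hx
    rw [← hh3 t]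
    exact Set.mem_image_of_mem _ hx
  have himg' : ∀ (t : ℕ → Bool) (x : Ω), h t x ∈ D' t → x ∉ B := by
    intro t x hx
    obtain ⟨y, hy, hyeq⟩ := (hh3 t) ▸ hx
    rwa [← (h t).injective hyeq]
  -- key membership facts
  set K : Set Ω := ⇑g '' B with hK
  have hgB : ∀ x, x ∈ B ↔ g x ∈ K := by
    intro x
    constructor
    · intro hx; exact Set.mem_image_of_mem _ hx
    · rintro ⟨y, hy, hyeq⟩
      rwa [← g.injective hyeq]
  have hmemK : ∀ x, x ∈ K ↔ g⁻¹ x ∈ B := by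
    intro x
    constructor
    · rintro ⟨y, hy, rfl⟩; simpa using hy
    · intro hx
      refine ⟨g⁻¹ x, hx, by simp⟩
  -- (1) B ∩ K is infinite
  have hIinf : (B ∩ K).Infinite := by
    have hsub : ⇑(h r)⁻¹ '' Bᶜ ⊆ B ∩ K := by
      rintro y ⟨w, hw, rfl⟩
      constructor
      · by_contra hyB
        have := himg r _ hyB
        have h2 : h r ((h r)⁻¹ w) = w := by simp
        rw [h2] at this
        exact hw (hD'B r this)
      · rw [hmemK]
        by_contra hxB
        have h1 : g⁻¹ ((h r)⁻¹ w) = (h s)⁻¹ w := by rw [hgdef]; simp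
        rw [h1] at hxB
        have := himg s _ hxB
        have h2 : h s ((h s)⁻¹ w) = w := by simp
        rw [h2] at this
        exact hw (hD'B s this)
    exact (hBc.image ((h r)⁻¹.injective.injOn)).mono hsub
  -- (2) Bᶜ ∩ Kᶜ is finite
  have hfin : (Bᶜ ∩ Kᶜ).Finite := by
    have hsub : Bᶜ ∩ Kᶜ ⊆ ⇑(h r)⁻¹ '' (D' r ∩ D' s) := by
      rintro x ⟨hx1, hx2⟩
      have hd1 : h r x ∈ D' r := himg r x hx1
      have hd2 : h r x ∈ D' s := by
        have hx3 : g⁻¹ x ∉ B := fun hc => hx2 ((hmemK x).mpr hc)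
        have := himg s _ hx3
        have h1 : h s (g⁻¹ x) = h r x := by rw [hgdef]; simp
        rwa [h1] at this
      exact ⟨h r x, ⟨hd1, hd2⟩, by simp⟩
    apply Set.Finite.subset _ hsub
    apply Set.Finite.image
    have : D' r ∩ D' s ⊆ pt '' (D r ∩ D s) := by
      rintro x ⟨⟨n, hn, rfl⟩, ⟨m, hm, hmeq⟩⟩
      have : m = n := hptinj hmeq
      exact ⟨n, ⟨hn, this ▸ hm⟩, rfl⟩
    exact ((hDad r s hrs).image _).subset this
  -- (3) K \ B infinite
  have hKB : (K \ B).Infinite := by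
    have heq : K \ B = Bᶜ \ (Bᶜ ∩ Kᶜ) := by
      ext x
      simp only [Set.mem_diff, Set.mem_inter_iff, Set.mem_compl_iff]
      tauto
    rw [heq]
    exact hBc.diff hfin
  -- (4) B \ K infinite
  have hBK : (B \ K).Infinite := by
    have hKc : Kᶜ.Infinite := by
      have heq : Kᶜ = ⇑g '' Bᶜ := by
        ext x
        rw [Set.mem_compl_iff, hmemK]
        constructor
        · intro hx
          exact ⟨g⁻¹ x, hx, by simp⟩
        · rintro ⟨y, hy, rfl⟩
          simpa using hy
      rw [heq]
      exact hBc.image (g.injective.injOn)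
    have heq : B \ K = Kᶜ \ (Bᶜ ∩ Kᶜ) := by
      ext x
      simp only [Set.mem_diff, Set.mem_inter_iff, Set.mem_compl_iff]
      tauto
    rw [heq]
    exact hKc.diff hfin
  -- (5) symOn K ≤ G
  have hKG : symOn K ≤ G := by
    intro σ hσ
    have hconj : g⁻¹ * σ * g ∈ symOn B := by
      intro x hx
      show g⁻¹ (σ (g x)) = x
      have : g x ∉ K := fun hc => hx ((hgB x).mpr hc)
      rw [hσ _ this]
      simp
    have : σ = g * (g⁻¹ * σ * g) * g⁻¹ := by group
    rw [this]
    exact mul_mem (mul_mem hqG (hBG hconj)) (inv_mem hqG)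
  -- conclude
  have hgen := lemC_inf G B K hBG hKG hIinf hKB hBK
  refine ⟨(B ∪ K)ᶜ, ?_, ?_⟩
  · have : (B ∪ K)ᶜ = Bᶜ ∩ Kᶜ := by rw [Set.compl_union]
    rw [this]
    exact hfin
  · rw [compl_compl]
    exact hgen


/-- Phase 3: minimize the finite set; the minimal one is setwise stabilized by `G`. -/
lemma phase3 (G : Subgroup (Equiv.Perm Ω)) (Δ : Set Ω) (hΔfin : Δ.Finite)
    (hΔ : symOn Δᶜ ≤ G) :
    ∃ Δ₀ : Set Ω, Δ₀.Finite ∧ symOn Δ₀ᶜ ≤ G ∧ ∀ g ∈ G, ⇑g '' Δ₀ = Δ₀ := by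
  classical
  have hex : ∃ n : ℕ, ∃ t : Finset Ω, t.card = n ∧ symOn (↑t : Set Ω)ᶜ ≤ G :=
    ⟨hΔfin.toFinset.card, hΔfin.toFinset, rfl, by rwa [Set.Finite.coe_toFinset]⟩
  obtain ⟨s₀, hcard, hle⟩ := Nat.find_spec hex
  refine ⟨↑s₀, s₀.finite_toSet, hle, ?_⟩
  intro g hg
  have hconj : symOn ((↑(s₀.image g) : Set Ω))ᶜ ≤ G := by
    intro σ hσ
    have h1 : g⁻¹ * σ * g ∈ symOn (↑s₀ : Set Ω)ᶜ := by
      intro x hx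
      show g⁻¹ (σ (g x)) = x
      have hxs : x ∈ s₀ := by
        by_contra hc
        exact hx hc
      have hgx : g x ∈ (↑(s₀.image g) : Set Ω) := by
        simp only [Finset.coe_image, Set.mem_image, Finset.mem_coe]
        exact ⟨x, hxs, rfl⟩
      rw [hσ _ (fun hc => hc hgx)]
      simp
    have : σ = g * (g⁻¹ * σ * g) * g⁻¹ := by group
    rw [this]
    exact mul_mem (mul_mem hg (hle h1)) (inv_mem hg)
  have hI : ((↑s₀ : Set Ω)ᶜ ∩ (↑(s₀.image g) : Set Ω)ᶜ).Infinite := by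
    have h1 : ((↑s₀ ∪ ↑(s₀.image g) : Set Ω)).Finite :=
      (s₀.finite_toSet).union (s₀.image g).finite_toSet
    have := h1.infinite_compl
    rwa [Set.compl_union] at this
  have hCfin : ((↑(s₀.image g) : Set Ω)ᶜ \ (↑s₀ : Set Ω)ᶜ).Finite := by
    apply Set.Finite.subset s₀.finite_toSet
    intro x hx
    have := hx.2
    simpa using this
  have hgen := lemC_fin G ((↑s₀ : Set Ω)ᶜ) ((↑(s₀.image g) : Set Ω)ᶜ) hle hconj hI hCfin
  set s₁ := s₀ ∩ s₀.image g with hs₁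
  have hgen' : symOn (↑s₁ : Set Ω)ᶜ ≤ G := by
    have heq : (↑s₁ : Set Ω)ᶜ = (↑s₀ : Set Ω)ᶜ ∪ (↑(s₀.image g) : Set Ω)ᶜ := by
      rw [hs₁, Finset.coe_inter, Set.compl_inter]
    rw [heq]
    exact hgen
  have hge : Nat.find hex ≤ s₁.card := Nat.find_min' hex ⟨s₁, rfl, hgen'⟩
  have hsub : s₁ ⊆ s₀ := Finset.inter_subset_left
  have heq₁ : s₁ = s₀ := Finset.eq_of_subset_of_card_le hsub (by rw [hcard]; exact hge)
  have hsub2 : s₀ ⊆ s₀.image g := by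
    intro x hx
    have : x ∈ s₁ := heq₁.symm ▸ hx
    exact (Finset.mem_inter.mp this).2
  have hcardim : (s₀.image g).card ≤ s₀.card := Finset.card_image_le
  have heq₂ : s₀ = s₀.image g := Finset.eq_of_subset_of_card_le hsub2 hcardim
  rw [← Finset.coe_image, ← heq₂]

/-- Easy direction. -/
lemma easy (G : Subgroup (Equiv.Perm Ω)) (Δ₀ : Set Ω) (hfin : Δ₀.Finite)
    (hfix : fixingSubgroup (Equiv.Perm Ω) Δ₀ ≤ G) :
    Cardinal.mk (Equiv.Perm Ω ⧸ G) < 2 ^ Cardinal.aleph0 := by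
  classical
  set F := fixingSubgroup (Equiv.Perm Ω) Δ₀ with hF
  -- surjection from the quotient by F
  set φ : (Equiv.Perm Ω ⧸ F) → (Equiv.Perm Ω ⧸ G) :=
    Quotient.map' id (fun a b hab => by
      rw [QuotientGroup.leftRel_apply] at hab ⊢
      exact hfix hab) with hφ
  have hsur : Function.Surjective φ := by
    intro q
    refine Quotient.inductionOn' q ?_
    intro z
    refine ⟨Quotient.mk'' z, ?_⟩
    rw [hφ]
    exact Quotient.map'_mk'' _ _ _
  have h1 : #(Equiv.Perm Ω ⧸ G) ≤ #(Equiv.Perm Ω ⧸ F) := Cardinal.mk_le_of_surjective hsur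
  -- injection into a countable type
  haveI : Finite ↥Δ₀ := hfin
  set j : (Equiv.Perm Ω ⧸ F) → (↥Δ₀ → Ω) := fun q =>
    Quotient.liftOn' q (fun σ (d : ↥Δ₀) => σ (↑d : Ω)) (fun a b hab => by
      rw [QuotientGroup.leftRel_apply] at hab
      funext d
      have hd := (mem_fixingSubgroup_iff (Equiv.Perm Ω)).mp hab (↑d : Ω) d.2
      have hd' : a⁻¹ (b ↑d) = (↑d : Ω) := hd
      show a (↑d : Ω) = b ↑d
      conv_rhs => rw [← (show a (a⁻¹ (b ↑d)) = b ↑d from Equiv.apply_symm_apply a (b ↑d)), hd']) with hj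
  have hjinj : Function.Injective j := by
    intro q1 q2
    refine Quotient.inductionOn₂' q1 q2 ?_
    intro a b hab
    apply Quotient.sound'
    rw [QuotientGroup.leftRel_apply, hF, mem_fixingSubgroup_iff]
    intro y hy
    have hval : a ((⟨y, hy⟩ : ↥Δ₀) : Ω) = b ((⟨y, hy⟩ : ↥Δ₀) : Ω) := congrFun hab _
    have hval' : a y = b y := hval
    show a⁻¹ (b y) = y
    rw [← hval']
    simp
  have h2 : #(Equiv.Perm Ω ⧸ F) ≤ Cardinal.aleph0 := by
    have := Cardinal.mk_le_of_injective hjinj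
    exact this.trans Cardinal.mk_le_aleph0
  exact lt_of_le_of_lt (h1.trans h2) (Cardinal.cantor Cardinal.aleph0)

end DNT

theorem subgroups_of_small_index_countable {Ω : Type*} [Countable Ω] [Infinite Ω]
    (G : Subgroup (Equiv.Perm Ω)) :
    Cardinal.mk (Equiv.Perm Ω ⧸ G) < 2 ^ Cardinal.aleph0 ↔
      ∃ Δ₀ : Set Ω, Δ₀.Finite ∧
        fixingSubgroup (Equiv.Perm Ω) Δ₀ ≤ G ∧
        G ≤ MulAction.stabilizer (Equiv.Perm Ω) Δ₀ := by
  constructor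
  · intro hG
    obtain ⟨A, C, hA, hAc, hdisj, hstar⟩ := DNT.phase1 G hG
    obtain ⟨Y, hY, hYc, hYG⟩ := DNT.bridge G hG A C hA hAc hdisj hstar
    obtain ⟨Δ, hΔfin, hΔ⟩ := DNT.phase2 G hG Y hY hYc hYG
    obtain ⟨Δ₀, h1, h2, h3⟩ := DNT.phase3 G Δ hΔfin hΔ
    refine ⟨Δ₀, h1, ?_, ?_⟩
    · rw [DNT.fixingSubgroup_eq]
      exact h2
    · intro g hg
      rw [MulAction.mem_stabilizer_iff]
      have himg := h3 g hg
      have hsmul : g • Δ₀ = ⇑g '' Δ₀ := by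
        ext x
        simp only [Set.mem_smul_set, Set.mem_image]
        constructor
        · rintro ⟨y, hy, rfl⟩
          exact ⟨y, hy, rfl⟩
        · rintro ⟨y, hy, rfl⟩
          exact ⟨y, hy, rfl⟩
      rw [hsmul, himg]
  · rintro ⟨Δ₀, hfin, hfix, _⟩
    exact DNT.easy G Δ₀ hfin hfix
end

section
/- (Sierpiński) Let Γ be an infinite set and n = |Γ|. Then there exists a family (Γ_i)_{i ∈ I} of subsets of Γ such that |I| > n, each Γ_i is a moiety of Γ, and |Γ_i ∩ Γ_j| < n whenever i ≠ j. -/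
universe u

open Cardinal Set

/-- Diagonalization: given any `Γ`-indexed family of functions `Γ → Γ`, there is a function
almost disjoint (agreement set of size `< #Γ`) from every member of the family. -/
lemma sierpinski_aux_diag {Γ : Type u} [Infinite Γ] (e : Γ → (Γ → Γ)) :
    ∃ f : Γ → Γ, ∀ η, #{ξ | f ξ = e η ξ} < #Γ := by
  obtain ⟨r, wo, hr⟩ := Cardinal.ord_eq Γ
  -- the "initial segment including ξ"
  set Iic' : Γ → Set Γ := fun ξ => {η | r η ξ ∨ η = ξ} with hIic'
  have hIic_lt : ∀ ξ : Γ, #(Iic' ξ) < #Γ := by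
    intro ξ
    have h1 : #{η | r η ξ} < #Γ := by
      have := Cardinal.card_typein_lt (r := r) ξ hr
      rw [Ordinal.card_typein] at this
      exact this
    have h2 : Iic' ξ ⊆ {η | r η ξ} ∪ {ξ} := by
      intro a ha; rcases ha with h | h
      · exact Or.inl h
      · exact Or.inr (by simp [h])
    calc #(Iic' ξ) ≤ #(({η | r η ξ} ∪ {ξ} : Set Γ)) := Cardinal.mk_le_mk_of_subset h2
      _ ≤ #{η | r η ξ} + #({ξ} : Set Γ) := Cardinal.mk_union_le _ _
      _ < #Γ := by
          refine Cardinal.add_lt_of_lt (Cardinal.infinite_iff.mp ‹Infinite Γ›) h1 ?_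
          simpa using Cardinal.one_lt_aleph0.trans_le (Cardinal.infinite_iff.mp ‹Infinite Γ›)
  have key : ∀ ξ : Γ, ∃ y : Γ, y ∉ (fun η => e η ξ) '' (Iic' ξ) := by
    intro ξ
    have hlt : #((fun η => e η ξ) '' (Iic' ξ)) < #Γ :=
      lt_of_le_of_lt (Cardinal.mk_image_le) (hIic_lt ξ)
    by_contra h
    push_neg at h
    have : ((fun η => e η ξ) '' (Iic' ξ)) = Set.univ := Set.eq_univ_of_forall h
    rw [this, Cardinal.mk_univ] at hlt
    exact lt_irrefl _ hlt
  choose f hf using key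
  refine ⟨f, fun η => ?_⟩
  have hsub : {ξ | f ξ = e η ξ} ⊆ {ξ | r ξ η} := by
    intro ξ hξ
    by_contra hrξ
    have hmem : η ∈ Iic' ξ := by
      rcases (or_iff_not_imp_left.mpr fun h1 => or_iff_not_imp_right.mpr fun h2 => wo.trichotomous η ξ h1 h2 : r η ξ ∨ η = ξ ∨ r ξ η) with h | h | h
      · exact Or.inl h
      · exact Or.inr h
      · exact absurd h hrξ
    exact hf ξ ⟨η, hmem, hξ.symm⟩
  have h1 : #{ξ | r ξ η} < #Γ := by
    have := Cardinal.card_typein_lt (r := r) η hr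
    rw [Ordinal.card_typein] at this
    exact this
  exact lt_of_le_of_lt (Cardinal.mk_le_mk_of_subset hsub) h1

/-- Any small family of functions can be "escaped". -/
lemma sierpinski_aux_extend {Γ : Type u} [Infinite Γ] (S : Set (Γ → Γ)) (hS : #S ≤ #Γ) :
    ∃ f : Γ → Γ, ∀ g ∈ S, #{ξ | f ξ = g ξ} < #Γ := by
  rcases S.eq_empty_or_nonempty with h | h
  · subst h
    exact ⟨id, fun g hg => absurd hg (Set.notMem_empty g)⟩
  · obtain ⟨ι⟩ := hS
    obtain ⟨g₀, hg₀⟩ := h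
    classical
    set e : Γ → (Γ → Γ) := fun x => if h : ∃ s : S, ι s = x then (h.choose : Γ → Γ) else g₀
      with he
    obtain ⟨f, hf⟩ := sierpinski_aux_diag e
    refine ⟨f, fun g hg => ?_⟩
    have : e (ι ⟨g, hg⟩) = g := by
      rw [he]
      have hex : ∃ s : S, ι s = ι ⟨g, hg⟩ := ⟨⟨g, hg⟩, rfl⟩
      simp only [dif_pos hex]
      have := hex.choose_spec
      have h2 : hex.choose = ⟨g, hg⟩ := ι.injective this
      rw [h2]
    rw [← this]
    exact hf _

theorem sierpinski_almost_disjoint_moieties {Γ : Type u} [Infinite Γ] :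
    ∃ (I : Type u) (f : I → Set Γ),
      Cardinal.mk Γ < Cardinal.mk I ∧
      (∀ i, Cardinal.mk ↥(f i) = Cardinal.mk Γ ∧ Cardinal.mk ↥((f i)ᶜ) = Cardinal.mk Γ) ∧
      (∀ i j, i ≠ j → Cardinal.mk ↥(f i ∩ f j) < Cardinal.mk Γ) := by
  classical
  have hℵ : ℵ₀ ≤ #Γ := Cardinal.infinite_iff.mp ‹Infinite Γ›
  -- Zorn: a maximal pairwise almost disjoint family of functions Γ → Γ
  set P : Set (Set (Γ → Γ)) :=
    {S | S.Pairwise fun f g => #{ξ | f ξ = g ξ} < #Γ} with hP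
  obtain ⟨M, hM⟩ : ∃ M, Maximal (· ∈ P) M := by
    refine zorn_subset P (fun c hc hchain => ⟨⋃₀ c, ?_, fun s hs => Set.subset_sUnion_of_mem hs⟩)
    intro f hf g hg hfg
    obtain ⟨s, hs, hfs⟩ := hf
    obtain ⟨t, ht, hgt⟩ := hg
    rcases hchain.total hs ht with hst | hts
    · exact (hc ht) (hst hfs) hgt hfg
    · exact (hc hs) hfs (hts hgt) hfg
  -- M is large
  have hMbig : #Γ < #M := by
    by_contra hle
    push_neg at hle
    obtain ⟨f, hf⟩ := sierpinski_aux_extend M hle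
    have hfM : f ∉ M := by
      intro hmem
      have := hf f hmem
      simp only [Set.setOf_true] at this
      rw [Cardinal.mk_univ] at this
      exact lt_irrefl _ this
    have hins : insert f M ∈ P := by
      refine hM.1.insert (fun g hg _ => ⟨hf g hg, ?_⟩)
      have : {ξ | g ξ = f ξ} = {ξ | f ξ = g ξ} := by ext ξ; exact eq_comm
      rw [this]; exact hf g hg
    exact hfM (hM.2 hins (Set.subset_insert f M) (Set.mem_insert f M))
  -- bijection Γ × Γ ≃ Γ
  have hmkprod : #(Γ × Γ) = #Γ := by
    rw [Cardinal.mk_prod]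
    simp [Cardinal.mul_eq_self hℵ]
  obtain ⟨φ⟩ := Cardinal.eq.mp hmkprod
  have hφinj : Function.Injective φ := φ.injective
  -- the family: images of graphs
  refine ⟨↥M, fun g => φ '' {p : Γ × Γ | p.2 = (g : Γ → Γ) p.1}, hMbig, ?_, ?_⟩
  · intro i
    constructor
    · -- the graph has cardinality #Γ
      rw [Cardinal.mk_image_eq hφinj]
      have : Γ ≃ {p : Γ × Γ | p.2 = (i : Γ → Γ) p.1} :=
        { toFun := fun ξ => ⟨(ξ, (i : Γ → Γ) ξ), rfl⟩
          invFun := fun p => p.1.1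
          left_inv := fun ξ => rfl
          right_inv := fun p => by
            obtain ⟨⟨a, b⟩, hp⟩ := p
            simp only [Set.mem_setOf_eq] at hp
            simp [hp] }
      exact (Cardinal.mk_congr this).symm
    · -- complement
      rw [← Set.image_compl_eq φ.bijective, Cardinal.mk_image_eq hφinj]
      apply le_antisymm
      · exact (Cardinal.mk_set_le _).trans_eq hmkprod
      · -- inject Γ into the complement of the graph
        have hne : ∀ ξ : Γ, ∃ y : Γ, y ≠ (i : Γ → Γ) ξ := fun ξ => exists_ne _
        choose c hc using hne
        have hinj : Function.Injective
            (fun ξ => (⟨(ξ, c ξ), by simpa using hc ξ⟩ :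
              ↥({p : Γ × Γ | p.2 = (i : Γ → Γ) p.1}ᶜ))) := by
          intro a b hab
          have hab' : ((a, c a) : Γ × Γ) = (b, c b) := congrArg Subtype.val hab
          exact (Prod.ext_iff.mp hab').1
        exact Cardinal.mk_le_of_injective hinj
  · intro i j hij
    have hne : (i : Γ → Γ) ≠ (j : Γ → Γ) := fun h => hij (Subtype.coe_injective h)
    rw [← Set.image_inter hφinj, Cardinal.mk_image_eq hφinj]
    have hle : #({p : Γ × Γ | p.2 = (i : Γ → Γ) p.1} ∩ {p | p.2 = (j : Γ → Γ) p.1} : Set (Γ × Γ))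
        ≤ #{ξ | (i : Γ → Γ) ξ = (j : Γ → Γ) ξ} := by
      refine Cardinal.mk_le_of_injective (f := fun p => ⟨p.1.1, ?_⟩) ?_
      · obtain ⟨⟨a, b⟩, h1, h2⟩ := p
        simp only [Set.mem_setOf_eq] at h1 h2
        simp only [Set.mem_setOf_eq]
        rw [← h1, ← h2]
      · intro p q hpq
        have h1 : p.1.1 = q.1.1 := congrArg Subtype.val hpq
        have hp2 : p.1.2 = (i : Γ → Γ) p.1.1 := p.2.1
        have hq2 : q.1.2 = (i : Γ → Γ) q.1.1 := q.2.1
        apply Subtype.ext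
        apply Prod.ext h1
        rw [hp2, hq2, h1]
    exact lt_of_le_of_lt hle (hM.1 i.2 j.2 hne)
end

section
/- Let A = Aut(ℚ, ≤) and let a ∈ A be the translation x ↦ x + 1. For every f ∈ A there exist conjugates f₁ and f₂ of a in A (i.e. f₁ = g₁⁻¹ a g₁ and f₂ = g₂⁻¹ a g₂ for some g₁, g₂ ∈ A) such that f = f₁ f₂⁻¹. -/
private lemma orderIso_mul_apply (f g : ℚ ≃o ℚ) (x : ℚ) : (f * g) x = f (g x) := rfl

/-- Any order automorphism of `ℚ` that moves every point up by at least `1`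
is conjugate to the translation `x ↦ x + 1`. -/
private lemma conj_of_ge_add_one (φ : ℚ ≃o ℚ) (hφ : ∀ x, x + 1 ≤ φ x) :
    ∃ g : ℚ ≃o ℚ, φ = g⁻¹ * OrderIso.addRight (1 : ℚ) * g := by
  -- the orbit of 0
  set c : ℤ → ℚ := fun n => (φ ^ n) 0 with hc
  have hshift : ∀ (m k : ℤ) (x : ℚ), (φ ^ m) ((φ ^ k) x) = (φ ^ (m + k)) x := by
    intro m k x; rw [← orderIso_mul_apply, ← zpow_add]
  have hpow : ∀ (n : ℤ) (x : ℚ), (φ ^ (n + 1)) x = φ ((φ ^ n) x) := by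
    intro n x
    have := hshift 1 n x
    rw [zpow_one] at this
    rw [show n + 1 = 1 + n from add_comm n 1, ← this]
  have hinv : ∀ (n : ℤ) (x : ℚ), (φ ^ (-n)) ((φ ^ n) x) = x := by
    intro n x; rw [hshift, neg_add_cancel, zpow_zero]; rfl
  have hstep : ∀ n : ℤ, c n + 1 ≤ c (n + 1) := by
    intro n
    have : c (n + 1) = φ (c n) := hpow n 0
    rw [this]; exact hφ _
  have hcmono : StrictMono c := by
    apply strictMono_int_of_lt_succ
    intro n
    have := hstep n
    linarith
  have hc0 : c 0 = 0 := by simp [hc]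
  set b : ℚ := φ 0 with hbdef
  have hcb : c 1 = b := by simp [hc, hbdef]
  have hb1 : (1 : ℚ) ≤ b := by have := hφ 0; simpa using this
  have hb0 : (0 : ℚ) < b := lt_of_lt_of_le one_pos hb1
  -- growth of the orbit
  have hubN : ∀ k : ℕ, ((k : ℤ) : ℚ) ≤ c (k : ℤ) := by
    intro k
    induction k with
    | zero => simp [hc0]
    | succ k ih =>
        have h := hstep (k : ℤ)
        have e : (((k + 1 : ℕ)) : ℤ) = (k : ℤ) + 1 := by push_cast; ring
        rw [e]
        push_cast at ih ⊢
        linarith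
  have hub : ∀ n : ℤ, 0 ≤ n → (n : ℚ) ≤ c n := by
    intro n hn
    have := hubN n.toNat
    rwa [Int.toNat_of_nonneg hn] at this
  have hlbN : ∀ k : ℕ, c (-(k : ℤ)) ≤ ((-(k : ℤ) : ℤ) : ℚ) := by
    intro k
    induction k with
    | zero => simp [hc0]
    | succ k ih =>
        have h := hstep (-(k : ℤ) - 1)
        rw [sub_add_cancel] at h
        have e : (-(((k + 1 : ℕ)) : ℤ)) = -((k : ℤ)) - 1 := by push_cast; ring
        rw [e]
        push_cast at ih ⊢
        linarith
  have hlb : ∀ n : ℤ, n ≤ 0 → c n ≤ (n : ℚ) := by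
    intro n hn
    have := hlbN (-n).toNat
    rwa [Int.toNat_of_nonneg (by omega : (0:ℤ) ≤ -n), neg_neg] at this
  -- for every x there is a unique n with c n ≤ x < c (n+1)
  have hex : ∀ x : ℚ, ∃ n : ℤ, (c n ≤ x ∧ x < c (n + 1)) ∧
      ∀ m : ℤ, c m ≤ x ∧ x < c (m + 1) → m = n := by
    intro x
    have hne : ∃ n : ℤ, c n ≤ x := by
      refine ⟨min ⌊x⌋ 0, ?_⟩
      calc c (min ⌊x⌋ 0) ≤ (min ⌊x⌋ 0 : ℤ) := hlb _ (min_le_right _ _)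
        _ ≤ ((⌊x⌋ : ℤ) : ℚ) := by exact_mod_cast min_le_left _ _
        _ ≤ x := Int.floor_le x
    have hbdd : ∃ B : ℤ, ∀ n : ℤ, c n ≤ x → n ≤ B := by
      refine ⟨max ⌈x⌉ 0, ?_⟩
      intro n hn
      rcases le_or_gt 0 n with h | h
      · have h1 : (n : ℚ) ≤ x := le_trans (hub n h) hn
        have h2 : (n : ℚ) ≤ (⌈x⌉ : ℚ) := le_trans h1 (Int.le_ceil x)
        exact le_trans (by exact_mod_cast h2) (le_max_left _ _)
      · exact le_trans h.le (le_max_right _ _)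
    obtain ⟨n, hn1, hn2⟩ := Int.exists_greatest_of_bdd hbdd hne
    have hnx : x < c (n + 1) := by
      by_contra h
      push_neg at h
      have := hn2 (n + 1) h
      omega
    refine ⟨n, ⟨hn1, hnx⟩, ?_⟩
    intro m ⟨hm1, hm2⟩
    have h1 : m ≤ n := hn2 m hm1
    have h2 : n < m + 1 := by
      have : c n < c (m + 1) := lt_of_le_of_lt hn1 hm2
      exact hcmono.lt_iff_lt.mp this
    omega
  set N : ℚ → ℤ := fun x => (hex x).choose with hNdef
  have hN1 : ∀ x, c (N x) ≤ x := fun x => (hex x).choose_spec.1.1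
  have hN2 : ∀ x, x < c (N x + 1) := fun x => (hex x).choose_spec.1.2
  have hNchar : ∀ x n, c n ≤ x → x < c (n + 1) → N x = n := by
    intro x n h1 h2
    exact ((hex x).choose_spec.2 n ⟨h1, h2⟩).symm
  -- bounds on the "fractional part"
  have hfrac0 : ∀ x, 0 ≤ (φ ^ (-(N x))) x := by
    intro x
    have := (φ ^ (-(N x))).le_iff_le.mpr (hN1 x)
    rwa [show (φ ^ (-(N x))) (c (N x)) = 0 from hinv (N x) 0] at this
  have hfrac1 : ∀ x, (φ ^ (-(N x))) x < b := by
    intro x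
    have := (φ ^ (-(N x))).lt_iff_lt.mpr (hN2 x)
    have heq : (φ ^ (-(N x))) (c (N x + 1)) = b := by
      show (φ ^ (-(N x))) ((φ ^ (N x + 1)) 0) = b
      rw [hshift, show -(N x) + (N x + 1) = 1 by ring, zpow_one]
    rwa [heq] at this
  set g0 : ℚ → ℚ := fun x => (N x : ℚ) + (φ ^ (-(N x))) x / b with hg0def
  -- the conjugation relation
  have hNφ : ∀ x, N (φ x) = N x + 1 := by
    intro x
    apply hNchar
    · rw [show c (N x + 1) = φ (c (N x)) from hpow (N x) 0]
      exact φ.le_iff_le.mpr (hN1 x)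
    · rw [show c (N x + 1 + 1) = φ (c (N x + 1)) from hpow (N x + 1) 0]
      exact φ.lt_iff_lt.mpr (hN2 x)
  have hg0φ : ∀ x, g0 (φ x) = g0 x + 1 := by
    intro x
    have h1 : (φ ^ (-(N (φ x)))) (φ x) = (φ ^ (-(N x))) x := by
      rw [hNφ x]
      have := hshift (-(N x + 1)) 1 x
      rw [zpow_one] at this
      rw [this, show -(N x + 1) + 1 = -(N x) by ring]
    have h2 : g0 (φ x) = (N (φ x) : ℚ) + (φ ^ (-(N (φ x)))) (φ x) / b := rfl
    rw [h2, h1, hNφ x]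
    simp only [hg0def]
    push_cast
    ring
  -- strict monotonicity
  have hmono : StrictMono g0 := by
    intro x y hxy
    have hNle : N x ≤ N y := by
      have : c (N x) < c (N y + 1) := lt_of_le_of_lt (hN1 x) (lt_trans hxy (hN2 y))
      have := hcmono.lt_iff_lt.mp this
      omega
    rcases eq_or_lt_of_le hNle with heq | hlt
    · simp only [hg0def, ← heq]
      have : (φ ^ (-(N x))) x < (φ ^ (-(N x))) y := (φ ^ (-(N x))).lt_iff_lt.mpr hxy
      gcongr
    · have h1 : g0 x < (N x : ℚ) + 1 := by
        simp only [hg0def]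
        have : (φ ^ (-(N x))) x / b < 1 := (div_lt_one hb0).mpr (hfrac1 x)
        linarith
      have h2 : (N y : ℚ) ≤ g0 y := by
        simp only [hg0def]
        have : 0 ≤ (φ ^ (-(N y))) y / b := div_nonneg (hfrac0 y) hb0.le
        linarith
      have h3 : (N x : ℚ) + 1 ≤ (N y : ℚ) := by exact_mod_cast hlt
      linarith
  -- surjectivity
  have hsurj : Function.Surjective g0 := by
    intro q
    set n : ℤ := ⌊q⌋ with hn
    set r : ℚ := q - n with hr
    have hr0 : 0 ≤ r := by
      have := Int.floor_le q
      simp only [hr]; linarith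
    have hr1 : r < 1 := by
      have := Int.lt_floor_add_one q
      simp only [hr]; linarith
    refine ⟨(φ ^ n) (r * b), ?_⟩
    have hcx : c n ≤ (φ ^ n) (r * b) := by
      have : (0 : ℚ) ≤ r * b := mul_nonneg hr0 hb0.le
      exact (φ ^ n).le_iff_le.mpr this
    have hx1 : (φ ^ n) (r * b) < c (n + 1) := by
      have h1 : c (n + 1) = (φ ^ n) b := by
        show (φ ^ (n + 1)) 0 = (φ ^ n) b
        rw [← hcb, show c 1 = (φ ^ (1:ℤ)) 0 from rfl, hshift]
      rw [h1]
      apply (φ ^ n).lt_iff_lt.mpr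
      calc r * b < 1 * b := by exact mul_lt_mul_of_pos_right hr1 hb0
        _ = b := one_mul b
    have hNx : N ((φ ^ n) (r * b)) = n := hNchar _ n hcx hx1
    simp only [hg0def, hNx, hinv n (r * b)]
    rw [mul_div_cancel_right₀ r (ne_of_gt hb0)]
    simp only [hr]
    ring
  refine ⟨StrictMono.orderIsoOfSurjective g0 hmono hsurj, ?_⟩
  set g := StrictMono.orderIsoOfSurjective g0 hmono hsurj with hgdef
  have hkey : g * φ = OrderIso.addRight (1 : ℚ) * g := by
    ext x
    show g (φ x) = (OrderIso.addRight (1 : ℚ)) (g x)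
    have hgx : ∀ y, g y = g0 y := fun y => rfl
    rw [hgx, hgx, hg0φ x]
    simp
  rw [mul_assoc, ← hkey, inv_mul_cancel_left]

theorem orderAut_eq_mul_conjugates_of_translation (f : ℚ ≃o ℚ) :
    ∃ g₁ g₂ : ℚ ≃o ℚ,
      f = (g₁⁻¹ * OrderIso.addRight (1 : ℚ) * g₁) *
          (g₂⁻¹ * OrderIso.addRight (1 : ℚ) * g₂)⁻¹ := by
  -- the order automorphism x ↦ max x (f x)
  have hmmono : StrictMono (fun x => max x (f x)) := by
    intro x y h
    exact max_lt_max h (f.lt_iff_lt.mpr h)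
  have hmsurj : Function.Surjective (fun x => max x (f x)) := by
    intro y
    refine ⟨min y (f.symm y), ?_⟩
    rcases le_total (f.symm y) y with h | h
    · simp only [min_eq_right h]
      rw [f.apply_symm_apply]
      exact max_eq_right h
    · simp only [min_eq_left h]
      have hfy : f y ≤ y := by
        have := f.le_iff_le.mpr h
        rwa [f.apply_symm_apply] at this
      exact max_eq_left hfy
  set m : ℚ ≃o ℚ := StrictMono.orderIsoOfSurjective _ hmmono hmsurj with hmdef
  have hm : ∀ x, m x = max x (f x) := fun x => rfl
  set h₁ : ℚ ≃o ℚ := m * OrderIso.addRight (1 : ℚ) with hh₁def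
  have hh₁app : ∀ x, h₁ x = max (x + 1) (f (x + 1)) := by
    intro x
    show m ((OrderIso.addRight (1:ℚ)) x) = _
    simp [hm]
  have hh₁ : ∀ x, x + 1 ≤ h₁ x := by
    intro x; rw [hh₁app]; exact le_max_left _ _
  set h₂ : ℚ ≃o ℚ := f⁻¹ * h₁ with hh₂def
  have hh₂ : ∀ x, x + 1 ≤ h₂ x := by
    intro x
    show x + 1 ≤ f⁻¹ (h₁ x)
    have hfi : (f⁻¹ : ℚ ≃o ℚ) = f.symm := rfl
    rw [hfi]
    have h1 : f (x + 1) ≤ h₁ x := by rw [hh₁app]; exact le_max_right _ _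
    have := f.symm.le_iff_le.mpr h1
    rwa [f.symm_apply_apply] at this
  obtain ⟨g₁, hg₁⟩ := conj_of_ge_add_one h₁ hh₁
  obtain ⟨g₂, hg₂⟩ := conj_of_ge_add_one h₂ hh₂
  refine ⟨g₁, g₂, ?_⟩
  rw [← hg₁, ← hg₂, hh₂def]
  group
end
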